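/- arXiv:math/0701190 — 13 statements merged into one kernel-verified Lean document; each statement's English description precedes it below -/
import Mathlib

section
/- For each i with 1 ≤ i ≤ p, the binomial coefficient binom(p,i) satisfies binom(p,i) ≤ (∏_{1≤j<i} M_j/(M_i − M_j)) · (∏_{i<j≤p} M_j/(M_j − M_i)), the inequality being between rational numbers (all denominators M_i − M_j for j < i and M_j − M_i for j > i are positive). -/
private lemma ci_prod_lower_one (i : ℕ) :
    ∏ j ∈ Finset.Ico 1 i, ((j : ℚ) / ((i : ℚ) - j)) = 1 := by
  rcases Nat.eq_zero_or_pos i with h0 | hpos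
  · subst h0; simp
  have h1 : ∏ j ∈ Finset.Ico 1 i, ((i : ℚ) - j) = ∏ j ∈ Finset.Ico 1 i, (j : ℚ) := by
    have : ∏ j ∈ Finset.Ico 1 i, ((i : ℚ) - j)
        = ∏ j ∈ Finset.Ico 1 i, ((i - j : ℕ) : ℚ) := by
      refine Finset.prod_congr rfl ?_
      intro j hj
      obtain ⟨hj1, hji⟩ := Finset.mem_Ico.mp hj
      rw [Nat.cast_sub hji.le]
    rw [this]
    have := Finset.prod_Ico_reflect (fun j => (j : ℚ)) 1 (m := i) (n := i) (by omega)
    simpa using this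
  rw [Finset.prod_div_distrib, h1, div_self]
  refine Finset.prod_ne_zero_iff.mpr ?_
  intro j hj
  obtain ⟨hj1, _⟩ := Finset.mem_Ico.mp hj
  positivity

private lemma ci_prod_upper_choose (i : ℕ) : ∀ p : ℕ, i ≤ p →
    ∏ j ∈ Finset.Ioc i p, ((j : ℚ) / ((j : ℚ) - i)) = (p.choose i : ℚ) := by
  intro p
  induction p with
  | zero => intro h; interval_cases i <;> simp
  | succ n ih =>
    intro h
    rcases Nat.lt_or_ge n i with hni | hni
    · have : i = n + 1 := by omega
      subst this; simp
    · have hrec := ih hni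
      rw [Finset.prod_Ioc_succ_top hni, hrec]
      have hkey : (n.choose i : ℚ) * ((n : ℚ) + 1) =
          ((n + 1).choose i : ℚ) * ((n : ℚ) + 1 - i) := by
        have h2 := Nat.choose_mul_succ_eq n i
        have h3 : ((n.choose i * (n + 1) : ℕ) : ℚ)
            = (((n + 1).choose i * (n + 1 - i) : ℕ) : ℚ) := by exact_mod_cast congrArg (fun k : ℕ => (k : ℚ)) h2
        rw [Nat.cast_mul, Nat.cast_mul, Nat.cast_sub (by omega : i ≤ n + 1)] at h3
        push_cast at h3 ⊢
        linarith
      have hden : (0 : ℚ) < (n : ℚ) + 1 - i := by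
        have : (i : ℚ) < (n : ℚ) + 1 := by exact_mod_cast Nat.lt_succ_of_le hni
        linarith
      have : ((n : ℚ) + 1) / ((n : ℚ) + 1 - i) = ((n + 1 : ℕ) : ℚ) / (((n + 1 : ℕ) : ℚ) - i) := by
        push_cast; ring_nf
      rw [← this]
      field_simp
      linarith [hkey]

/-- Complete intersection upper bound: for a nonincreasing sequence of degrees
`d_1 ≥ … ≥ d_p ≥ 1` with maximal shifts `M_i = d_1 + … + d_i`, the `i`-th total
Betti number `binom(p,i)` is bounded above by
`(∏_{1≤j<i} M_j/(M_i − M_j)) · (∏_{i<j≤p} M_j/(M_j − M_i))` in `ℚ`. -/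
theorem ci_upper_bound (p : ℕ) (hp : 1 ≤ p) (d : ℕ → ℕ)
    (hd_pos : ∀ j, 1 ≤ j → j ≤ p → 1 ≤ d j)
    (hd_dec : ∀ j k, 1 ≤ j → j ≤ k → k ≤ p → d k ≤ d j)
    (M : ℕ → ℚ) (hM : ∀ i, M i = ∑ j ∈ Finset.Icc 1 i, (d j : ℚ))
    (i : ℕ) (hi1 : 1 ≤ i) (hip : i ≤ p) :
    (p.choose i : ℚ) ≤
      (∏ j ∈ Finset.Ico 1 i, M j / (M i - M j)) *
      (∏ j ∈ Finset.Ioc i p, M j / (M j - M i)) := by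
  -- difference of M's is a sum over an Ioc interval
  have hMeq : ∀ a b : ℕ, a ≤ b → M b - M a = ∑ j ∈ Finset.Ioc a b, (d j : ℚ) := by
    intro a b hab
    have hIcc : ∀ m : ℕ, Finset.Icc 1 m = Finset.Ioc 0 m := by
      intro m; rw [← Finset.Icc_add_one_left_eq_Ioc]; rfl
    have hsplit := Finset.prod_Ioc_consecutive (M := Multiplicative ℚ)
      (fun j => Multiplicative.ofAdd ((d j : ℚ))) (Nat.zero_le a) hab
    have hsum : (∑ j ∈ Finset.Ioc 0 a, (d j : ℚ)) + ∑ j ∈ Finset.Ioc a b, (d j : ℚ)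
        = ∑ j ∈ Finset.Ioc 0 b, (d j : ℚ) := Finset.sum_Ioc_consecutive _ (Nat.zero_le a) hab
    rw [hM, hM, hIcc, hIcc, ← hsum]; ring
  have hMpos : ∀ a b : ℕ, a < b → b ≤ p → 0 < M b - M a := by
    intro a b hab hbp
    rw [hMeq a b hab.le]
    refine Finset.sum_pos ?_ ⟨b, Finset.mem_Ioc.mpr ⟨hab, le_rfl⟩⟩
    intro j hj
    obtain ⟨hj1, hj2⟩ := Finset.mem_Ioc.mp hj
    have := hd_pos j (by omega) (le_trans hj2 hbp)
    exact_mod_cast Nat.lt_of_lt_of_le Nat.zero_lt_one this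
  have hM0 : M 0 = 0 := by rw [hM]; simp
  have hMapos : ∀ a : ℕ, 1 ≤ a → a ≤ p → 0 < M a := by
    intro a ha hap
    have := hMpos 0 a ha hap
    linarith [hM0]
  -- monotonicity of averages: a * M b ≤ b * M a for 1 ≤ a ≤ b ≤ p
  have havg : ∀ a b : ℕ, 1 ≤ a → a ≤ b → b ≤ p → (a : ℚ) * M b ≤ (b : ℚ) * M a := by
    intro a b ha hab hbp
    have hsplit : M b = M a + ∑ j ∈ Finset.Ioc a b, (d j : ℚ) := by
      have := hMeq a b hab; linarith
    have h1 : ∑ j ∈ Finset.Ioc a b, (d j : ℚ) ≤ ((b : ℚ) - a) * (d a : ℚ) := by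
      calc ∑ j ∈ Finset.Ioc a b, (d j : ℚ) ≤ ∑ _j ∈ Finset.Ioc a b, (d a : ℚ) := by
            refine Finset.sum_le_sum ?_
            intro j hj
            obtain ⟨hj1, hj2⟩ := Finset.mem_Ioc.mp hj
            exact_mod_cast hd_dec a j ha hj1.le (le_trans hj2 hbp)
        _ = ((b - a : ℕ) : ℚ) * (d a : ℚ) := by
            rw [Finset.sum_const, Nat.card_Ioc]; simp [nsmul_eq_mul]
        _ = ((b : ℚ) - a) * (d a : ℚ) := by rw [Nat.cast_sub hab]
    have h2 : (a : ℚ) * (d a : ℚ) ≤ M a := by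
      rw [hM]
      calc (a : ℚ) * (d a : ℚ) = ∑ _j ∈ Finset.Icc 1 a, (d a : ℚ) := by
            rw [Finset.sum_const, Nat.card_Icc]; simp [nsmul_eq_mul]
        _ ≤ ∑ j ∈ Finset.Icc 1 a, (d j : ℚ) := by
            refine Finset.sum_le_sum ?_
            intro j hj
            obtain ⟨hj1, hj2⟩ := Finset.mem_Icc.mp hj
            exact_mod_cast hd_dec j a hj1 hj2 (le_trans hab hbp)
    have hba : (0 : ℚ) ≤ (b : ℚ) - a := by
      have : (a : ℚ) ≤ b := by exact_mod_cast hab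
      linarith
    have ha0 : (0 : ℚ) ≤ (a : ℚ) := by positivity
    nlinarith [mul_le_mul_of_nonneg_left h1 ha0, mul_le_mul_of_nonneg_left h2 hba]
  -- factorwise bounds
  have hfac1 : ∀ j ∈ Finset.Ico 1 i, (j : ℚ) / ((i : ℚ) - j) ≤ M j / (M i - M j) := by
    intro j hj
    obtain ⟨hj1, hji⟩ := Finset.mem_Ico.mp hj
    have hd1 : (0 : ℚ) < (i : ℚ) - j := by
      have : (j : ℚ) < i := by exact_mod_cast hji
      linarith
    have hd2 : 0 < M i - M j := hMpos j i hji hip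
    rw [div_le_div_iff₀ hd1 hd2]
    have := havg j i hj1 hji.le hip
    nlinarith [this]
  have hfac2 : ∀ j ∈ Finset.Ioc i p, (j : ℚ) / ((j : ℚ) - i) ≤ M j / (M j - M i) := by
    intro j hj
    obtain ⟨hij, hjp⟩ := Finset.mem_Ioc.mp hj
    have hd1 : (0 : ℚ) < (j : ℚ) - i := by
      have : (i : ℚ) < j := by exact_mod_cast hij
      linarith
    have hd2 : 0 < M j - M i := hMpos i j hij hjp
    rw [div_le_div_iff₀ hd1 hd2]
    have := havg i j hi1 hij.le hjp
    nlinarith [this]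
  -- lower factors nonneg
  have hlo1 : ∀ j ∈ Finset.Ico 1 i, (0 : ℚ) ≤ (j : ℚ) / ((i : ℚ) - j) := by
    intro j hj
    obtain ⟨hj1, hji⟩ := Finset.mem_Ico.mp hj
    have : (j : ℚ) < i := by exact_mod_cast hji
    have hd1 : (0 : ℚ) < (i : ℚ) - j := by linarith
    positivity
  have hlo2 : ∀ j ∈ Finset.Ioc i p, (0 : ℚ) ≤ (j : ℚ) / ((j : ℚ) - i) := by
    intro j hj
    obtain ⟨hij, hjp⟩ := Finset.mem_Ioc.mp hj
    have : (i : ℚ) < j := by exact_mod_cast hij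
    have hd1 : (0 : ℚ) < (j : ℚ) - i := by linarith
    positivity
  have hP1 : (∏ j ∈ Finset.Ico 1 i, ((j : ℚ) / ((i : ℚ) - j)))
      ≤ ∏ j ∈ Finset.Ico 1 i, M j / (M i - M j) :=
    Finset.prod_le_prod hlo1 hfac1
  have hP2 : (∏ j ∈ Finset.Ioc i p, ((j : ℚ) / ((j : ℚ) - i)))
      ≤ ∏ j ∈ Finset.Ioc i p, M j / (M j - M i) :=
    Finset.prod_le_prod hlo2 hfac2
  have hub1 : (0 : ℚ) ≤ ∏ j ∈ Finset.Ico 1 i, M j / (M i - M j) := by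
    refine Finset.prod_nonneg ?_
    intro j hj
    obtain ⟨hj1, hji⟩ := Finset.mem_Ico.mp hj
    have hd2 : 0 < M i - M j := hMpos j i hji hip
    have hd3 : 0 < M j := hMapos j hj1 (le_trans hji.le hip)
    positivity
  have hlow2 : (0 : ℚ) ≤ ∏ j ∈ Finset.Ioc i p, ((j : ℚ) / ((j : ℚ) - i)) :=
    Finset.prod_nonneg hlo2
  calc (p.choose i : ℚ)
      = (∏ j ∈ Finset.Ico 1 i, ((j : ℚ) / ((i : ℚ) - j)))
        * ∏ j ∈ Finset.Ioc i p, ((j : ℚ) / ((j : ℚ) - i)) := by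
        rw [ci_prod_lower_one, ci_prod_upper_choose i p hip, one_mul]
    _ ≤ _ := mul_le_mul hP1 hP2 hlow2 hub1
end

section
/- The equality binom(p,i) = (∏_{1≤j<i} M_j/(M_i − M_j)) · (∏_{i<j≤p} M_j/(M_j − M_i)) holds in ℚ for every i with 1 ≤ i ≤ p if and only if d_1 = d_2 = ⋯ = d_p (i.e. the resolution is pure). -/
open Finset

private lemma aux_prod_Ioc_id (i : ℕ) {p : ℕ} (h : i ≤ p) :
    (∏ j ∈ Finset.Ioc i p, j) * i.factorial = p.factorial := by
  induction p, h using Nat.le_induction with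
  | base => simp
  | succ n hn ih =>
    rw [Finset.prod_Ioc_succ_top hn, mul_right_comm, ih, Nat.factorial_succ, mul_comm]

private lemma aux_prod_Ioc_sub (i : ℕ) {p : ℕ} (h : i ≤ p) :
    (∏ j ∈ Finset.Ioc i p, (j - i)) = (p - i).factorial := by
  induction p, h using Nat.le_induction with
  | base => simp
  | succ n hn ih =>
    rw [Finset.prod_Ioc_succ_top hn, ih, show n + 1 - i = (n - i) + 1 by omega,
      Nat.factorial_succ, mul_comm]

private lemma aux_prod_Ico_symm (i : ℕ) :
    (∏ j ∈ Finset.Ico 1 i, (i - j)) = ∏ j ∈ Finset.Ico 1 i, j := by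
  refine Finset.prod_nbij' (fun j => i - j) (fun j => i - j) ?_ ?_ ?_ ?_ ?_ <;>
      intro a ha <;> simp only [Finset.mem_Ico] at ha ⊢ <;> omega

private lemma aux_choose_prod (p i : ℕ) (h1 : 1 ≤ i) (h2 : i ≤ p) :
    (p.choose i : ℚ) =
      (∏ j ∈ Finset.Ico 1 i, (j : ℚ) / ((i : ℚ) - (j : ℚ))) *
      (∏ j ∈ Finset.Ioc i p, (j : ℚ) / ((j : ℚ) - (i : ℚ))) := by
  have e1 : ∀ j ∈ Finset.Ico 1 i, (j : ℚ) / ((i : ℚ) - (j : ℚ)) =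
      (j : ℚ) / ((i - j : ℕ) : ℚ) := by
    intro j hj
    rw [Finset.mem_Ico] at hj
    rw [Nat.cast_sub (le_of_lt hj.2)]
  have e2 : ∀ j ∈ Finset.Ioc i p, (j : ℚ) / ((j : ℚ) - (i : ℚ)) =
      (j : ℚ) / ((j - i : ℕ) : ℚ) := by
    intro j hj
    rw [Finset.mem_Ioc] at hj
    rw [Nat.cast_sub (le_of_lt hj.1)]
  rw [Finset.prod_congr rfl e1, Finset.prod_congr rfl e2,
    Finset.prod_div_distrib, Finset.prod_div_distrib,
    ← Nat.cast_prod, ← Nat.cast_prod, ← Nat.cast_prod, ← Nat.cast_prod,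
    aux_prod_Ico_symm, aux_prod_Ioc_sub i h2]
  have hne1 : (∏ j ∈ Finset.Ico 1 i, j) ≠ 0 := by
    apply Finset.prod_ne_zero_iff.2
    intro j hj; rw [Finset.mem_Ico] at hj; omega
  have hfac : ((p - i).factorial : ℚ) ≠ 0 := by
    exact_mod_cast Nat.factorial_ne_zero _
  rw [div_self (by exact_mod_cast hne1), one_mul]
  rw [eq_div_iff hfac]
  have key : p.choose i * (p - i).factorial = ∏ j ∈ Finset.Ioc i p, j := by
    apply Nat.eq_of_mul_eq_mul_right (Nat.factorial_pos i)
    rw [aux_prod_Ioc_id i h2, mul_right_comm]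
    exact Nat.choose_mul_factorial_mul_factorial h2
  exact_mod_cast key

/-- Complete intersection: equality `binom(p,i) = (∏_{1≤j<i} M_j/(M_i − M_j)) ·
(∏_{i<j≤p} M_j/(M_j − M_i))` holds in `ℚ` for all `1 ≤ i ≤ p` if and only if
`d_1 = … = d_p`, i.e. the resolution is pure. -/
theorem ci_upper_bound_equality_iff_pure (p : ℕ) (hp : 1 ≤ p) (d : ℕ → ℕ)
    (hd_pos : ∀ j, 1 ≤ j → j ≤ p → 1 ≤ d j)
    (hd_dec : ∀ j k, 1 ≤ j → j ≤ k → k ≤ p → d k ≤ d j)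
    (M : ℕ → ℚ) (hM : ∀ i, M i = ∑ j ∈ Finset.Icc 1 i, (d j : ℚ)) :
    (∀ i, 1 ≤ i → i ≤ p →
      (p.choose i : ℚ) =
        (∏ j ∈ Finset.Ico 1 i, M j / (M i - M j)) *
        (∏ j ∈ Finset.Ioc i p, M j / (M j - M i)))
    ↔ (∀ j k, 1 ≤ j → j ≤ p → 1 ≤ k → k ≤ p → d j = d k) := by
  set c : ℚ := (d 1 : ℚ) with hc_def
  have hc : 0 < c := by rw [hc_def]; exact_mod_cast hd_pos 1 le_rfl hp
  have hM1 : M 1 = c := by rw [hM]; simp [hc_def]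
  -- decomposition of M j
  have hsplit : ∀ j, 1 ≤ j → M j = c + ∑ k ∈ Finset.Icc 2 j, (d k : ℚ) := by
    intro j hj
    have : Finset.Icc 1 j = insert 1 (Finset.Icc 2 j) := by
      ext x; simp only [Finset.mem_Icc, Finset.mem_insert]; omega
    rw [hM, this, Finset.sum_insert (by simp)]
  constructor
  · intro h
    -- first show every d j (1 ≤ j ≤ p) equals d 1
    have key : ∀ j, 1 ≤ j → j ≤ p → d j = d 1 := by
      intro j0 hj0 hj0p
      by_contra hne
      have hlt0 : d j0 < d 1 := lt_of_le_of_ne (hd_dec 1 j0 le_rfl hj0 hj0p) hne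
      have hj02 : 2 ≤ j0 := by
        rcases Nat.lt_or_ge j0 2 with h' | h'
        · interval_cases j0 <;> omega
        · exact h'
      -- the hypothesis at i = 1
      have h1 := h 1 le_rfl hp
      simp only [Nat.choose_one_right, Finset.Ico_self, Finset.prod_empty, one_mul] at h1
      -- basic bounds on S j := M j - M 1
      have hSpos : ∀ j ∈ Finset.Ioc 1 p, 0 < M j - M 1 := by
        intro j hj
        rw [Finset.mem_Ioc] at hj
        rw [hsplit j (by omega), hM1, add_sub_cancel_left]
        apply Finset.sum_pos
        · intro k hk; rw [Finset.mem_Icc] at hk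
          exact_mod_cast hd_pos k (by omega) (by omega)
        · exact ⟨2, by rw [Finset.mem_Icc]; omega⟩
      have hSle : ∀ j ∈ Finset.Ioc 1 p, M j - M 1 ≤ ((j : ℚ) - 1) * c := by
        intro j hj
        rw [Finset.mem_Ioc] at hj
        rw [hsplit j (by omega), hM1, add_sub_cancel_left]
        calc ∑ k ∈ Finset.Icc 2 j, (d k : ℚ) ≤ ∑ k ∈ Finset.Icc 2 j, c := by
              apply Finset.sum_le_sum
              intro k hk; rw [Finset.mem_Icc] at hk
              rw [hc_def]
              exact_mod_cast hd_dec 1 k le_rfl (by omega) (by omega)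
          _ = ((j : ℚ) - 1) * c := by
              rw [Finset.sum_const, Nat.card_Icc, nsmul_eq_mul]
              congr 1
              have : j + 1 - 2 = j - 1 := by omega
              rw [this, Nat.cast_sub (by omega)]
              norm_num
      have hSlt : M j0 - M 1 < ((j0 : ℚ) - 1) * c := by
        rw [hsplit j0 (by omega), hM1, add_sub_cancel_left]
        calc ∑ k ∈ Finset.Icc 2 j0, (d k : ℚ)
            < ∑ k ∈ Finset.Icc 2 j0, c := by
              apply Finset.sum_lt_sum
              · intro k hk; rw [Finset.mem_Icc] at hk
                rw [hc_def]
                exact_mod_cast hd_dec 1 k le_rfl (by omega) (by omega)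
              · exact ⟨j0, by rw [Finset.mem_Icc]; omega, by rw [hc_def]; exact_mod_cast hlt0⟩
          _ = ((j0 : ℚ) - 1) * c := by
              rw [Finset.sum_const, Nat.card_Icc, nsmul_eq_mul]
              congr 1
              have : j0 + 1 - 2 = j0 - 1 := by omega
              rw [this, Nat.cast_sub (by omega)]
              norm_num
      -- comparison of factors
      have hfposden : ∀ j ∈ Finset.Ioc 1 p, (0 : ℚ) < (j : ℚ) - 1 := by
        intro j hj; rw [Finset.mem_Ioc] at hj
        have : (2 : ℚ) ≤ (j : ℚ) := by exact_mod_cast hj.1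
        linarith
      have hle : ∀ j ∈ Finset.Ioc 1 p,
          (j : ℚ) / ((j : ℚ) - 1) ≤ M j / (M j - M 1) := by
        intro j hj
        have hS := hSpos j hj
        have hS2 := hSle j hj
        have hMj : M j = (M j - M 1) + c := by rw [hM1, hsplit j ?_]; ring
                                               rw [Finset.mem_Ioc] at hj; omega
        rw [div_le_div_iff₀ (hfposden j hj) hS]
        nlinarith [hfposden j hj]
      have hltj0 : (j0 : ℚ) / ((j0 : ℚ) - 1) < M j0 / (M j0 - M 1) := by
        have hj0mem : j0 ∈ Finset.Ioc 1 p := by rw [Finset.mem_Ioc]; omega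
        have hS := hSpos j0 hj0mem
        have hMj : M j0 = (M j0 - M 1) + c := by rw [hM1, hsplit j0 (by omega)]; ring
        rw [div_lt_div_iff₀ (hfposden j0 hj0mem) hS]
        nlinarith [hfposden j0 hj0mem]
      have hprodlt : (∏ j ∈ Finset.Ioc 1 p, (j : ℚ) / ((j : ℚ) - 1)) <
          ∏ j ∈ Finset.Ioc 1 p, M j / (M j - M 1) := by
        apply Finset.prod_lt_prod
        · intro j hj
          apply div_pos _ (hfposden j hj)
          rw [Finset.mem_Ioc] at hj
          exact_mod_cast Nat.lt_of_lt_of_le Nat.zero_lt_one (by omega)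
        · exact hle
        · exact ⟨j0, by rw [Finset.mem_Ioc]; omega, hltj0⟩
      -- but the telescoping product equals p
      have htel : (∏ j ∈ Finset.Ioc 1 p, (j : ℚ) / ((j : ℚ) - 1)) = p := by
        have := aux_choose_prod p 1 le_rfl hp
        simp only [Nat.choose_one_right, Finset.Ico_self, Finset.prod_empty, one_mul,
          Nat.cast_one] at this
        exact this.symm
      rw [htel, ← h1] at hprodlt
      exact lt_irrefl _ hprodlt
    intro j k hj hjp hk hkp
    rw [key j hj hjp, key k hk hkp]
  · intro hconst i h1 h2
    have hMj : ∀ j, j ≤ p → 1 ≤ j → M j = (j : ℚ) * c := by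
      intro j hjp hj
      rw [hM]
      have : ∀ k ∈ Finset.Icc 1 j, (d k : ℚ) = c := by
        intro k hk; rw [Finset.mem_Icc] at hk
        rw [hc_def]
        exact_mod_cast congrArg Nat.cast (hconst k 1 hk.1 (le_trans hk.2 hjp) le_rfl hp)
      rw [Finset.sum_congr rfl this, Finset.sum_const, Nat.card_Icc, nsmul_eq_mul]
      congr 1
    rw [aux_choose_prod p i h1 h2]
    congr 1
    · apply Finset.prod_congr rfl
      intro j hj
      rw [Finset.mem_Ico] at hj
      rw [hMj j (by omega) hj.1, hMj i (by omega) h1,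
        show (i : ℚ) * c - (j : ℚ) * c = ((i : ℚ) - (j : ℚ)) * c by ring,
        mul_div_mul_right _ _ hc.ne']
    · apply Finset.prod_congr rfl
      intro j hj
      rw [Finset.mem_Ioc] at hj
      rw [hMj j hj.2 (by omega), hMj i (by omega) h1,
        show (j : ℚ) * c - (i : ℚ) * c = ((j : ℚ) - (i : ℚ)) * c by ring,
        mul_div_mul_right _ _ hc.ne']
end

section
/- For each i with 1 ≤ i ≤ p, the binomial coefficient binom(p,i) satisfies binom(p,i) ≥ (∏_{1≤j<i} m_j/(m_i − m_j)) · (∏_{i<j≤p} m_j/(m_j − m_i)), the inequality being between rational numbers (all denominators m_i − m_j for j < i and m_j − m_i for j > i are positive). -/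
/-- Complete intersection lower bound: with minimal shifts
`m_i = d_p + … + d_{p−i+1}`, the `i`-th total Betti number `binom(p,i)` is
bounded below by `(∏_{1≤j<i} m_j/(m_i − m_j)) · (∏_{i<j≤p} m_j/(m_j − m_i))`
in `ℚ`. -/
theorem ci_lower_bound (p : ℕ) (hp : 1 ≤ p) (d : ℕ → ℕ)
    (hd_pos : ∀ j, 1 ≤ j → j ≤ p → 1 ≤ d j)
    (hd_dec : ∀ j k, 1 ≤ j → j ≤ k → k ≤ p → d k ≤ d j)
    (m : ℕ → ℚ) (hm : ∀ i, m i = ∑ j ∈ Finset.Icc (p - i + 1) p, (d j : ℚ))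
    (i : ℕ) (hi1 : 1 ≤ i) (hip : i ≤ p) :
    (p.choose i : ℚ) ≥
      (∏ j ∈ Finset.Ico 1 i, m j / (m i - m j)) *
      (∏ j ∈ Finset.Ioc i p, m j / (m j - m i)) := by
  -- rewrite m via Ioc
  have hm' : ∀ j, m j = ∑ l ∈ Finset.Ioc (p - j) p, (d l : ℚ) := by
    intro j
    rw [hm, ← Finset.Icc_add_one_left_eq_Ioc]
  -- sums of d's over Ioc a b are at least b - a (when b ≤ p)
  have hsum_ge : ∀ a b : ℕ, a ≤ b → b ≤ p →
      ((b : ℚ) - a) ≤ ∑ l ∈ Finset.Ioc a b, (d l : ℚ) := by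
    intro a b hab hbp
    have h1 : ∀ l ∈ Finset.Ioc a b, (1 : ℚ) ≤ (d l : ℚ) := by
      intro l hl
      rw [Finset.mem_Ioc] at hl
      have h1l : 1 ≤ l := by omega
      exact_mod_cast hd_pos l h1l (le_trans hl.2 hbp)
    have := Finset.card_nsmul_le_sum (Finset.Ioc a b) (fun l => (d l : ℚ)) 1 h1
    rw [Nat.card_Ioc] at this
    simp only [nsmul_eq_mul, mul_one] at this
    calc ((b : ℚ) - a) = ((b - a : ℕ) : ℚ) := by
          rw [Nat.cast_sub hab]
      _ ≤ _ := this
  have hmpos : ∀ j, 1 ≤ j → j ≤ p → 0 < m j := by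
    intro j hj1 hjp
    rw [hm' j]
    have h := hsum_ge (p - j) p (Nat.sub_le p j) le_rfl
    have hc : ((p - j : ℕ) : ℚ) = (p : ℚ) - j := by rw [Nat.cast_sub hjp]
    rw [hc] at h
    have : (1 : ℚ) ≤ (j : ℚ) := by exact_mod_cast hj1
    linarith
  have hdiff : ∀ j k : ℕ, j ≤ k → k ≤ p →
      m k - m j = ∑ l ∈ Finset.Ioc (p - k) (p - j), (d l : ℚ) := by
    intro j k hjk hkp
    rw [hm', hm']
    have := Finset.sum_Ioc_consecutive (fun l => (d l : ℚ))
      (Nat.sub_le_sub_left hjk p) (Nat.sub_le p j)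
    linarith
  have hdiffpos : ∀ j k : ℕ, j < k → k ≤ p → 0 < m k - m j := by
    intro j k hjk hkp
    rw [hdiff j k hjk.le hkp]
    have h := hsum_ge (p - k) (p - j) (Nat.sub_le_sub_left hjk.le p)
      (Nat.sub_le p j)
    have hc1 : ((p - j : ℕ) : ℚ) = (p : ℚ) - j := by
      rw [Nat.cast_sub (le_trans hjk.le hkp)]
    have hc2 : ((p - k : ℕ) : ℚ) = (p : ℚ) - k := by rw [Nat.cast_sub hkp]
    rw [hc1, hc2] at h
    have : (j : ℚ) + 1 ≤ (k : ℚ) := by exact_mod_cast hjk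
    linarith
  -- average monotonicity: k * m j ≤ j * m k for 1 ≤ j ≤ k ≤ p
  have havg : ∀ j k : ℕ, 1 ≤ j → j ≤ k → k ≤ p →
      (k : ℚ) * m j ≤ (j : ℚ) * m k := by
    intro j k hj1 hjk hkp
    set D : ℚ := (d (p - j + 1) : ℚ) with hD
    have hjp : j ≤ p := le_trans hjk hkp
    have hDnn : 0 ≤ D := by positivity
    -- m j ≤ j * D
    have hub : m j ≤ (j : ℚ) * D := by
      rw [hm' j]
      have h1 : ∀ l ∈ Finset.Ioc (p - j) p, (d l : ℚ) ≤ D := by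
        intro l hl
        rw [Finset.mem_Ioc] at hl
        have : d l ≤ d (p - j + 1) := by
          apply hd_dec (p - j + 1) l (Nat.le_add_left 1 (p - j)) hl.1 hl.2
        rw [hD]
        exact_mod_cast this
      have := Finset.sum_le_card_nsmul (Finset.Ioc (p - j) p)
        (fun l => (d l : ℚ)) D h1
      rw [Nat.card_Ioc] at this
      simp only [nsmul_eq_mul] at this
      have hc : ((p - (p - j) : ℕ) : ℚ) = (j : ℚ) := by
        rw [Nat.sub_sub_self hjp]
      rw [hc] at this
      exact this
    -- m k - m j ≥ (k - j) * D
    have hlb : ((k : ℚ) - j) * D ≤ m k - m j := by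
      rw [hdiff j k hjk hkp]
      have h1 : ∀ l ∈ Finset.Ioc (p - k) (p - j), D ≤ (d l : ℚ) := by
        intro l hl
        rw [Finset.mem_Ioc] at hl
        have hl1 : 1 ≤ l := by omega
        have : d (p - j + 1) ≤ d l := by
          apply hd_dec l (p - j + 1) hl1 (by omega) (by omega)
        rw [hD]
        exact_mod_cast this
      have := Finset.card_nsmul_le_sum (Finset.Ioc (p - k) (p - j))
        (fun l => (d l : ℚ)) D h1
      rw [Nat.card_Ioc] at this
      simp only [nsmul_eq_mul] at this
      have hc : ((p - j - (p - k) : ℕ) : ℚ) = (k : ℚ) - j := by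
        have : p - j - (p - k) = k - j := by omega
        rw [this, Nat.cast_sub hjk]
      rw [hc] at this
      exact this
    have hjq : (0 : ℚ) ≤ (j : ℚ) := by positivity
    have hkj : (0 : ℚ) ≤ (k : ℚ) - j := by
      have : (j : ℚ) ≤ k := by exact_mod_cast hjk
      linarith
    nlinarith [mul_le_mul_of_nonneg_left hub hkj,
      mul_le_mul_of_nonneg_left hlb hjq]
  -- bound each factor
  have hb1 : ∀ j ∈ Finset.Ico 1 i, m j / (m i - m j) ≤ (j : ℚ) / ((i : ℚ) - j) := by
    intro j hj
    rw [Finset.mem_Ico] at hj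
    have hji : j < i := hj.2
    have hd1 : 0 < m i - m j := hdiffpos j i hji hip
    have hd2 : 0 < (i : ℚ) - j := by
      have : (j : ℚ) + 1 ≤ i := by exact_mod_cast hji
      linarith
    rw [div_le_div_iff₀ hd1 hd2]
    have := havg j i hj.1 hji.le hip
    nlinarith [hmpos j hj.1 (le_trans hji.le hip)]
  have hb2 : ∀ j ∈ Finset.Ioc i p, m j / (m j - m i) ≤ (j : ℚ) / ((j : ℚ) - i) := by
    intro j hj
    rw [Finset.mem_Ioc] at hj
    have hij : i < j := hj.1
    have hd1 : 0 < m j - m i := hdiffpos i j hij hj.2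
    have hd2 : 0 < (j : ℚ) - i := by
      have : (i : ℚ) + 1 ≤ j := by exact_mod_cast hij
      linarith
    rw [div_le_div_iff₀ hd1 hd2]
    have := havg i j hi1 hij.le hj.2
    nlinarith [hmpos i hi1 hip]
  have hnn1 : ∀ j ∈ Finset.Ico 1 i, 0 ≤ m j / (m i - m j) := by
    intro j hj
    rw [Finset.mem_Ico] at hj
    exact div_nonneg (hmpos j hj.1 (le_trans hj.2.le hip)).le
      (hdiffpos j i hj.2 hip).le
  have hnn2 : ∀ j ∈ Finset.Ioc i p, 0 ≤ m j / (m j - m i) := by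
    intro j hj
    rw [Finset.mem_Ioc] at hj
    exact div_nonneg (hmpos j (le_trans hi1 hj.1.le) hj.2).le
      (hdiffpos i j hj.1 hj.2).le
  have hP1 : (∏ j ∈ Finset.Ico 1 i, m j / (m i - m j)) ≤
      ∏ j ∈ Finset.Ico 1 i, (j : ℚ) / ((i : ℚ) - j) :=
    Finset.prod_le_prod hnn1 hb1
  have hP2 : (∏ j ∈ Finset.Ioc i p, m j / (m j - m i)) ≤
      ∏ j ∈ Finset.Ioc i p, (j : ℚ) / ((j : ℚ) - i) :=
    Finset.prod_le_prod hnn2 hb2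
  -- compute the model products
  have hfact : ∀ n : ℕ, (∏ l ∈ Finset.Ioc 0 n, (l : ℚ)) = (Nat.factorial n : ℚ) := by
    intro n
    have : (∏ l ∈ Finset.Ioc 0 n, l) = Nat.factorial n := by
      rw [← Finset.Icc_add_one_left_eq_Ioc, ← Finset.Ico_add_one_right_eq_Icc]
      exact Finset.prod_Ico_id_eq_factorial n
    rw [← this, Nat.cast_prod]
  have hQ1 : (∏ j ∈ Finset.Ico 1 i, (j : ℚ) / ((i : ℚ) - j)) = 1 := by
    rw [Finset.prod_div_distrib]
    have hden : (∏ j ∈ Finset.Ico 1 i, ((i : ℚ) - j)) =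
        ∏ j ∈ Finset.Ico 1 i, (j : ℚ) := by
      apply Finset.prod_nbij' (fun j => i - j) (fun j => i - j)
      · intro a ha; rw [Finset.mem_Ico] at ha ⊢; omega
      · intro a ha; rw [Finset.mem_Ico] at ha ⊢; omega
      · intro a ha; rw [Finset.mem_Ico] at ha; omega
      · intro a ha; rw [Finset.mem_Ico] at ha; omega
      · intro a ha
        rw [Finset.mem_Ico] at ha
        rw [Nat.cast_sub (le_of_lt ha.2)]
    rw [hden, div_self]
    apply ne_of_gt
    apply Finset.prod_pos
    intro j hj
    rw [Finset.mem_Ico] at hj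
    exact_mod_cast hj.1
  have hQ2 : (∏ j ∈ Finset.Ioc i p, (j : ℚ) / ((j : ℚ) - i)) = (p.choose i : ℚ) := by
    rw [Finset.prod_div_distrib]
    have hnum : (Nat.factorial i : ℚ) * (∏ j ∈ Finset.Ioc i p, (j : ℚ)) = (Nat.factorial p : ℚ) := by
      rw [← hfact i, ← hfact p]
      exact Finset.prod_Ioc_consecutive (fun l => (l : ℚ)) (Nat.zero_le i) hip
    have hden : (∏ j ∈ Finset.Ioc i p, ((j : ℚ) - i)) = (Nat.factorial (p - i) : ℚ) := by
      rw [← hfact (p - i)]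
      apply Finset.prod_nbij' (fun j => j - i) (fun k => k + i)
      · intro a ha; rw [Finset.mem_Ioc] at ha ⊢; omega
      · intro a ha; rw [Finset.mem_Ioc] at ha ⊢; omega
      · intro a ha; rw [Finset.mem_Ioc] at ha; omega
      · intro a ha; rw [Finset.mem_Ioc] at ha; omega
      · intro a ha
        rw [Finset.mem_Ioc] at ha
        rw [Nat.cast_sub (le_of_lt ha.1)]
    rw [hden, Nat.cast_choose ℚ hip]
    have h1 : (Nat.factorial i : ℚ) ≠ 0 := by positivity
    have h2 : (Nat.factorial (p - i) : ℚ) ≠ 0 := by positivity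
    field_simp
    linear_combination hnum
  calc (∏ j ∈ Finset.Ico 1 i, m j / (m i - m j)) *
      (∏ j ∈ Finset.Ioc i p, m j / (m j - m i))
      ≤ (∏ j ∈ Finset.Ico 1 i, (j : ℚ) / ((i : ℚ) - j)) *
        (∏ j ∈ Finset.Ioc i p, (j : ℚ) / ((j : ℚ) - i)) := by
        apply mul_le_mul hP1 hP2 (Finset.prod_nonneg hnn2)
        exact Finset.prod_nonneg fun j hj => div_nonneg (by positivity) (by
          rw [Finset.mem_Ico] at hj
          have : (j : ℚ) + 1 ≤ i := by exact_mod_cast hj.2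
          linarith)
    _ = (p.choose i : ℚ) := by rw [hQ1, hQ2, one_mul]
end

section
/- Define β'_i = β_i + β_{i−1} for 1 ≤ i ≤ p+1 (with β_{p+1} := 0, so β'_{p+1} = β_p), M'_i = max(M_i, M_{i−1} + d) for 1 ≤ i ≤ p (with M_0 := 0), and M'_{p+1} = M_p + d. Then for every i with 1 ≤ i ≤ p+1 one has (i−1)!·(p+1−i)!·β'_i ≤ ∏_{1≤j≤p+1, j≠i} M'_j. -/
lemma shift_chain (p : ℕ) (M : ℕ → ℕ)
    (hM_mono : ∀ j k, 1 ≤ j → j < k → k ≤ p → M j < M k)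
    (j k : ℕ) (hj : 1 ≤ j) (hjk : j ≤ k) (hkp : k ≤ p) :
    M j + (k - j) ≤ M k := by
  induction k, hjk using Nat.le_induction with
  | base => simp
  | succ k hk ih =>
    have h1 : M j + (k - j) ≤ M k := ih (by omega)
    have h2 : M k < M (k + 1) := hM_mono k (k + 1) (by omega) (by omega) hkp
    omega

/-- Adding a non-zero divisor of degree `d`: if the total Betti numbers `β_i` of
a Cohen–Macaulay quotient of projective dimension `p` with strictly increasing
positive maximal shifts `M_1 < … < M_p` satisfy
`(i−1)!·(p−i)!·β_i ≤ ∏_{1≤j≤p, j≠i} M_j`, then the numbers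
`β'_i = β_i + β_{i−1}` (with `β_0 = 1`, `β'_{p+1} = β_p`) and the shifts
`M'_i = max(M_i, M_{i−1} + d)` (with `M_0 = 0`, `M'_{p+1} = M_p + d`) satisfy
`(i−1)!·(p+1−i)!·β'_i ≤ ∏_{1≤j≤p+1, j≠i} M'_j` for all `1 ≤ i ≤ p+1`. -/
theorem nonzero_divisor_upper_bound (p d : ℕ) (hp : 1 ≤ p) (hd : 1 ≤ d)
    (M : ℕ → ℕ) (hM0 : M 0 = 0)
    (hM_pos : ∀ i, 1 ≤ i → i ≤ p → 1 ≤ M i)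
    (hM_mono : ∀ j k, 1 ≤ j → j < k → k ≤ p → M j < M k)
    (β : ℕ → ℕ) (hβ0 : β 0 = 1)
    (hbound : ∀ i, 1 ≤ i → i ≤ p →
      Nat.factorial (i - 1) * Nat.factorial (p - i) * β i ≤
        ∏ j ∈ (Finset.Icc 1 p).erase i, M j)
    (β' M' : ℕ → ℕ)
    (hβ' : ∀ i, 1 ≤ i → i ≤ p → β' i = β i + β (i - 1))
    (hβ'top : β' (p + 1) = β p)
    (hM' : ∀ i, 1 ≤ i → i ≤ p → M' i = max (M i) (M (i - 1) + d))
    (hM'top : M' (p + 1) = M p + d)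
    (i : ℕ) (hi1 : 1 ≤ i) (hip : i ≤ p + 1) :
    Nat.factorial (i - 1) * Nat.factorial (p + 1 - i) * β' i ≤
      ∏ j ∈ (Finset.Icc 1 (p + 1)).erase i, M' j := by
  have hMj : ∀ j, 1 ≤ j → j ≤ p → j ≤ M j := by
    intro j hj hjp
    have h1 := hM_pos 1 le_rfl hp
    have h2 := shift_chain p M hM_mono 1 j le_rfl hj hjp
    omega
  have hptw : ∀ j, 1 ≤ j → j ≤ p → M j ≤ M' j := by
    intro j hj hjp
    rw [hM' j hj hjp]; exact le_max_left _ _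
  have hprodle : ∀ s : Finset ℕ, s ⊆ Finset.Icc 1 p →
      ∏ j ∈ s, M j ≤ ∏ j ∈ s, M' j := by
    intro s hs
    refine Finset.prod_le_prod' ?_
    intro j hj
    have := Finset.mem_Icc.mp (hs hj)
    exact hptw j this.1 this.2
  rcases eq_or_lt_of_le hip with htop | hlt
  · -- i = p + 1
    subst htop
    have e1 : p + 1 - 1 = p := by omega
    have e2 : p + 1 - (p + 1) = 0 := by omega
    rw [e1, e2, hβ'top, Nat.factorial_zero]
    have hset : (Finset.Icc 1 (p + 1)).erase (p + 1) = Finset.Icc 1 p := by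
      ext j; simp only [Finset.mem_erase, Finset.mem_Icc]; omega
    rw [hset]
    have hmem : p ∈ Finset.Icc 1 p := Finset.mem_Icc.mpr ⟨hp, le_rfl⟩
    rw [← Finset.mul_prod_erase _ M' hmem]
    have hb := hbound p hp le_rfl
    rw [Nat.sub_self, Nat.factorial_zero] at hb
    have hMp : p ≤ M' p := le_trans (hMj p hp le_rfl) (hptw p hp le_rfl)
    calc Nat.factorial p * 1 * β p
        = p * (Nat.factorial (p - 1) * 1 * β p) := by
          rw [← Nat.mul_factorial_pred (by omega : p ≠ 0)]; ring
      _ ≤ M' p * ∏ j ∈ (Finset.Icc 1 p).erase p, M' j := by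
          refine Nat.mul_le_mul hMp (le_trans hb ?_)
          exact hprodle _ (Finset.erase_subset _ _)
  · -- i ≤ p
    have hip2 : i ≤ p := by omega
    have hsplit : ∏ j ∈ (Finset.Icc 1 (p + 1)).erase i, M' j
        = M' (p + 1) * ∏ j ∈ (Finset.Icc 1 p).erase i, M' j := by
      have hmem : p + 1 ∈ (Finset.Icc 1 (p + 1)).erase i := by
        simp only [Finset.mem_erase, Finset.mem_Icc]; omega
      have hset : ((Finset.Icc 1 (p + 1)).erase i).erase (p + 1)
          = (Finset.Icc 1 p).erase i := by
        ext j; simp only [Finset.mem_erase, Finset.mem_Icc]; omega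
      rw [← Finset.mul_prod_erase _ M' hmem, hset]
    rw [hsplit, hM'top, hβ' i hi1 hip2]
    rcases eq_or_lt_of_le hi1 with hone | hi2
    · -- i = 1
      subst hone
      have e1 : (1:ℕ) - 1 = 0 := rfl
      have e2 : p + 1 - 1 = p := by omega
      rw [e1, e2, hβ0, Nat.factorial_zero]
      have hfact : Nat.factorial p ≤ ∏ j ∈ (Finset.Icc 1 p).erase 1, M j := by
        have hmem1 : 1 ∈ Finset.Icc 1 p := Finset.mem_Icc.mpr ⟨le_rfl, hp⟩
        have h1 : ∏ j ∈ (Finset.Icc 1 p).erase 1, (j : ℕ) = Nat.factorial p := by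
          have h2 := Finset.mul_prod_erase (Finset.Icc 1 p) (fun j => j) hmem1
          simp only [one_mul] at h2
          rw [h2, ← Finset.Ico_add_one_right_eq_Icc]
          exact Finset.prod_Ico_id_eq_factorial p
        rw [← h1]
        refine Finset.prod_le_prod' ?_
        intro j hj
        have := Finset.mem_Icc.mp (Finset.mem_of_mem_erase hj)
        exact hMj j this.1 this.2
      have hb := hbound 1 le_rfl hp
      rw [e1, Nat.factorial_zero] at hb
      have hMpd : p + 1 ≤ M p + d := by
        have := hMj p hp le_rfl; omega
      calc 1 * Nat.factorial p * (β 1 + 1)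
          = p * (1 * Nat.factorial (p - 1) * β 1) + Nat.factorial p := by
            rw [show p * (1 * Nat.factorial (p - 1) * β 1)
              = (p * Nat.factorial (p - 1)) * β 1 by ring,
              Nat.mul_factorial_pred (by omega : p ≠ 0)]; ring
        _ ≤ p * (∏ j ∈ (Finset.Icc 1 p).erase 1, M j)
              + ∏ j ∈ (Finset.Icc 1 p).erase 1, M j :=
            Nat.add_le_add (Nat.mul_le_mul_left p hb) hfact
        _ = (p + 1) * ∏ j ∈ (Finset.Icc 1 p).erase 1, M j := by ring
        _ ≤ (M p + d) * ∏ j ∈ (Finset.Icc 1 p).erase 1, M' j :=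
            Nat.mul_le_mul hMpd (hprodle _ (Finset.erase_subset _ _))
    · -- 2 ≤ i ≤ p
      have hi2' : 2 ≤ i := hi2
      obtain ⟨k, hk⟩ : ∃ k, p = i + k := ⟨p - i, by omega⟩
      have hiA : i - 1 ∈ (Finset.Icc 1 p).erase i := by
        simp only [Finset.mem_erase, Finset.mem_Icc]; omega
      have hiB : i ∈ (Finset.Icc 1 p).erase (i - 1) := by
        simp only [Finset.mem_erase, Finset.mem_Icc]; omega
      set T := ((Finset.Icc 1 p).erase i).erase (i - 1) with hT
      have hTT : ((Finset.Icc 1 p).erase (i - 1)).erase i = T := by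
        rw [hT]; ext j
        simp only [Finset.mem_erase, Finset.mem_Icc]; tauto
      have hPM1 : ∏ j ∈ (Finset.Icc 1 p).erase i, M j = M (i - 1) * ∏ j ∈ T, M j :=
        (Finset.mul_prod_erase _ M hiA).symm
      have hPM2 : ∏ j ∈ (Finset.Icc 1 p).erase (i - 1), M j = M i * ∏ j ∈ T, M j := by
        rw [← Finset.mul_prod_erase _ M hiB, hTT]
      have hPM1' : ∏ j ∈ (Finset.Icc 1 p).erase i, M' j
          = M' (i - 1) * ∏ j ∈ T, M' j :=
        (Finset.mul_prod_erase _ M' hiA).symm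
      rw [hPM1']
      have hb1 := hbound i hi1 hip2
      rw [hPM1, show p - i = k by omega] at hb1
      have hb2 := hbound (i - 1) (by omega) (by omega)
      rw [hPM2, show i - 1 - 1 = i - 2 by omega, show p - (i - 1) = k + 1 by omega] at hb2
      have hQQ' : ∏ j ∈ T, M j ≤ ∏ j ∈ T, M' j := by
        refine hprodle _ ?_
        exact (Finset.erase_subset _ _).trans (Finset.erase_subset _ _)
      have ha' : M (i - 1) ≤ M' (i - 1) := hptw (i - 1) (by omega) (by omega)
      have hchain : M i + k ≤ M p := by
        have := shift_chain p M hM_mono i p hi1 hip2 le_rfl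
        omega
      have ha_lb : i - 1 ≤ M (i - 1) := hMj (i - 1) (by omega) (by omega)
      have lhs_eq : Nat.factorial (i - 1) * Nat.factorial (p + 1 - i) * (β i + β (i - 1))
          = (k + 1) * (Nat.factorial (i - 1) * Nat.factorial k * β i)
            + (i - 1) * (Nat.factorial (i - 2) * Nat.factorial (k + 1) * β (i - 1)) := by
        rw [show p + 1 - i = k + 1 by omega, show i - 1 = (i - 2) + 1 by omega,
          Nat.factorial_succ (i - 2), Nat.factorial_succ k]
        ring
      rw [lhs_eq]
      have scalar : (k + 1) * M (i - 1) + (i - 1) * M i ≤ (M p + d) * M (i - 1) := by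
        have h1 : (i - 1) * M i ≤ M (i - 1) * M i :=
          Nat.mul_le_mul_right _ ha_lb
        have h2 : M i + k + 1 ≤ M p + d := by omega
        calc (k + 1) * M (i - 1) + (i - 1) * M i
            ≤ (k + 1) * M (i - 1) + M (i - 1) * M i :=
              Nat.add_le_add_left h1 _
          _ = (M i + k + 1) * M (i - 1) := by ring
          _ ≤ (M p + d) * M (i - 1) := Nat.mul_le_mul_right _ h2
      calc (k + 1) * (Nat.factorial (i - 1) * Nat.factorial k * β i)
            + (i - 1) * (Nat.factorial (i - 2) * Nat.factorial (k + 1) * β (i - 1))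
          ≤ (k + 1) * (M (i - 1) * ∏ j ∈ T, M j)
            + (i - 1) * (M i * ∏ j ∈ T, M j) :=
            Nat.add_le_add (Nat.mul_le_mul_left _ hb1) (Nat.mul_le_mul_left _ hb2)
        _ = ((k + 1) * M (i - 1) + (i - 1) * M i) * ∏ j ∈ T, M j := by ring
        _ ≤ ((M p + d) * M (i - 1)) * ∏ j ∈ T, M j :=
            Nat.mul_le_mul_right _ scalar
        _ = (M p + d) * (M (i - 1) * ∏ j ∈ T, M j) := by ring
        _ ≤ (M p + d) * (M' (i - 1) * ∏ j ∈ T, M' j) :=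
            Nat.mul_le_mul_left _ (Nat.mul_le_mul ha' hQQ')
end

section
/- For each i with 1 ≤ i ≤ p one has in ℚ the upper bound β_i ≤ (∏_{1≤j<i} M_j/(m_i − M_j)) · (∏_{i<j≤p} M_j/(m_j − M_i)); note that all denominators are positive since strict quasi-purity forces m_i > M_j for every j < i. -/
open Finset Polynomial

/-- Strictly quasi-pure resolutions, upper bound: under the Peskine–Szpiro
equations and strict quasi-purity `m_i > M_{i−1}`, the `i`-th total Betti
number satisfies
`β_i ≤ (∏_{1≤j<i} M_j/(m_i − M_j)) · (∏_{i<j≤p} M_j/(m_j − M_i))` in `ℚ`. -/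
theorem strictly_quasi_pure_upper_bound (p : ℕ) (hp : 1 ≤ p)
    (B : ℕ → ℤ →₀ ℕ)
    (hsupp : ∀ i, 1 ≤ i → i ≤ p → (B i).support.Nonempty)
    (m M : ℕ → ℤ)
    (hm : ∀ i, 1 ≤ i → i ≤ p → IsLeast {j : ℤ | B i j ≠ 0} (m i))
    (hM : ∀ i, 1 ≤ i → i ≤ p → IsGreatest {j : ℤ | B i j ≠ 0} (M i))
    (hm1 : 1 ≤ m 1)
    (hPS0 : ∑ i ∈ Finset.Icc 1 p, (-1 : ℚ) ^ i *
      ((B i).sum fun _ v => (v : ℚ)) = -1)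
    (hPS : ∀ k, 1 ≤ k → k ≤ p - 1 →
      ∑ i ∈ Finset.Icc 1 p, (-1 : ℚ) ^ i *
        ((B i).sum fun j v => (j : ℚ) ^ k * (v : ℚ)) = 0)
    (hqp : ∀ i, 2 ≤ i → i ≤ p → M (i - 1) < m i)
    (i : ℕ) (hi1 : 1 ≤ i) (hip : i ≤ p) :
    ((B i).sum fun _ v => (v : ℚ)) ≤
      (∏ j ∈ Finset.Ico 1 i, (M j : ℚ) / ((m i : ℚ) - (M j : ℚ))) *
      (∏ j ∈ Finset.Ioc i p, (M j : ℚ) / ((m j : ℚ) - (M i : ℚ))) := by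
  -- basic facts
  have hmM : ∀ l, 1 ≤ l → l ≤ p → m l ≤ M l := fun l h1 h2 => (hM l h1 h2).2 (hm l h1 h2).1
  have hchain : ∀ j l, 1 ≤ l → l < j → j ≤ p → M l < m j := by
    intro j
    induction j with
    | zero => intro l _ h _; omega
    | succ n ih =>
      intro l hl hlj hjp
      by_cases hln : l = n
      · subst hln
        have := hqp (l + 1) (by omega) hjp
        simpa using this
      · have h1 : M l < m n := ih l hl (by omega) (by omega)
        have h2 : m n ≤ M n := hmM n (by omega) (by omega)
        have h3 : M n < m (n + 1) := by
          have := hqp (n + 1) (by omega) hjp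
          simpa using this
        omega
  have hbound : ∀ l, 1 ≤ l → l ≤ p → ∀ d : ℤ, B l d ≠ 0 → m l ≤ d ∧ d ≤ M l :=
    fun l h1 h2 d hd => ⟨(hm l h1 h2).2 hd, (hM l h1 h2).2 hd⟩
  have hmpos : ∀ l, 1 ≤ l → l ≤ p → 1 ≤ m l := by
    intro l h1 h2
    rcases eq_or_lt_of_le h1 with h | h
    · rw [← h]; exact hm1
    · have hc := hchain l 1 le_rfl h h2
      have hmm := hmM 1 le_rfl hp
      omega
  -- the auxiliary polynomial
  set Q : ℚ[X] := (∏ j ∈ Ico 1 i, (X - C (M j : ℚ))) * (∏ j ∈ Ioc i p, (X - C (m j : ℚ)))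
    with hQdef
  have hdeg : Q.natDegree < p := by
    have h1 : (∏ j ∈ Ico 1 i, (X - C (M j : ℚ))).natDegree ≤ i - 1 := by
      refine le_trans (Polynomial.natDegree_prod_le _ _) ?_
      have h : ∀ j ∈ Ico 1 i, (X - C (M j : ℚ)).natDegree = 1 := fun j _ => natDegree_X_sub_C _
      rw [Finset.sum_congr rfl h, Finset.sum_const, Nat.card_Ico, smul_eq_mul, mul_one]
    have h2 : (∏ j ∈ Ioc i p, (X - C (m j : ℚ))).natDegree ≤ p - i := by
      refine le_trans (Polynomial.natDegree_prod_le _ _) ?_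
      have h : ∀ j ∈ Ioc i p, (X - C (m j : ℚ)).natDegree = 1 := fun j _ => natDegree_X_sub_C _
      rw [Finset.sum_congr rfl h, Finset.sum_const, Nat.card_Ioc, smul_eq_mul, mul_one]
    have h3 := Polynomial.natDegree_mul_le (p := ∏ j ∈ Ico 1 i, (X - C (M j : ℚ)))
      (q := ∏ j ∈ Ioc i p, (X - C (m j : ℚ)))
    rw [hQdef]
    omega
  have hevalQ : ∀ x : ℚ, Q.eval x =
      (∏ j ∈ Ico 1 i, (x - (M j : ℚ))) * (∏ j ∈ Ioc i p, (x - (m j : ℚ))) := by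
    intro x
    rw [hQdef]
    simp [Polynomial.eval_prod]
  -- sign-flip helper
  have hflip : ∀ (s : Finset ℕ) (f : ℕ → ℚ),
      ∏ j ∈ s, f j = (-1 : ℚ) ^ s.card * ∏ j ∈ s, (- f j) := by
    intro s f
    have h : ∏ j ∈ s, (- f j) = (-1 : ℚ) ^ s.card * ∏ j ∈ s, f j := by
      calc ∏ j ∈ s, (- f j) = ∏ j ∈ s, ((-1 : ℚ) * f j) := by simp
        _ = (∏ _j ∈ s, (-1 : ℚ)) * ∏ j ∈ s, f j := Finset.prod_mul_distrib
        _ = (-1 : ℚ) ^ s.card * ∏ j ∈ s, f j := by rw [Finset.prod_const]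
    rw [h, ← mul_assoc, ← pow_add,
      show s.card + s.card = 2 * s.card from by ring, pow_mul]
    norm_num
  -- the alternating sum of Q-evaluations
  have hexp : ∀ l, (B l).sum (fun j v => Q.eval (j : ℚ) * v)
      = ∑ k ∈ range p, Q.coeff k * (B l).sum (fun j v => (j : ℚ) ^ k * v) := by
    intro l
    simp only [Finsupp.sum]
    have h : ∀ d ∈ (B l).support, Q.eval (d : ℚ) * ((B l d : ℕ) : ℚ)
        = ∑ k ∈ range p, Q.coeff k * ((d : ℚ) ^ k * ((B l d : ℕ) : ℚ)) := by
      intro d _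
      rw [Polynomial.eval_eq_sum_range' hdeg, Finset.sum_mul]
      simp [mul_assoc]
    rw [Finset.sum_congr rfl h, Finset.sum_comm]
    exact Finset.sum_congr rfl fun k _ => (Finset.mul_sum _ _ _).symm
  have hS : ∑ l ∈ Icc 1 p, (-1 : ℚ) ^ l * (B l).sum (fun j v => Q.eval (j : ℚ) * v)
      = - Q.coeff 0 := by
    have h1 : ∀ l ∈ Icc 1 p, (-1 : ℚ) ^ l * (B l).sum (fun j v => Q.eval (j : ℚ) * v)
        = ∑ k ∈ range p, Q.coeff k * ((-1 : ℚ) ^ l * (B l).sum (fun j v => (j : ℚ) ^ k * v)) := by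
      intro l _
      rw [hexp l, Finset.mul_sum]
      exact Finset.sum_congr rfl fun k _ => by ring
    rw [Finset.sum_congr rfl h1, Finset.sum_comm]
    have h2 : ∀ k ∈ range p,
        ∑ l ∈ Icc 1 p, Q.coeff k * ((-1 : ℚ) ^ l * (B l).sum (fun j v => (j : ℚ) ^ k * v))
        = if k = 0 then - Q.coeff 0 else 0 := by
      intro k hk
      rw [← Finset.mul_sum]
      rcases Nat.eq_zero_or_pos k with h | h
      · subst h
        simp only [pow_zero, one_mul]
        rw [hPS0]
        simp
      · rw [Finset.mem_range] at hk
        rw [hPS k h (by omega)]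
        simp [h.ne']
    rw [Finset.sum_congr rfl h2, Finset.sum_ite_eq' (range p) 0 (fun _ => - Q.coeff 0),
      if_pos (Finset.mem_range.mpr (by omega))]
  have hcoeff : (-1 : ℚ) ^ p * (- Q.coeff 0)
      = (∏ j ∈ Ico 1 i, (M j : ℚ)) * (∏ j ∈ Ioc i p, (m j : ℚ)) := by
    rw [Polynomial.coeff_zero_eq_eval_zero, hevalQ,
      hflip (Ico 1 i) (fun j => (0 : ℚ) - (M j : ℚ)),
      hflip (Ioc i p) (fun j => (0 : ℚ) - (m j : ℚ))]
    simp only [neg_sub, sub_zero, Nat.card_Ico, Nat.card_Ioc]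
    have hs : (-1 : ℚ) ^ p * (-1) * ((-1 : ℚ) ^ (i - 1) * (-1 : ℚ) ^ (p - i)) = 1 := by
      rw [show ((-1 : ℚ) ^ p * (-1) * ((-1 : ℚ) ^ (i - 1) * (-1 : ℚ) ^ (p - i)))
          = (-1 : ℚ) ^ (p + 1 + (i - 1) + (p - i)) from by
        rw [pow_add, pow_add, pow_add, pow_one]; ring]
      rw [show p + 1 + (i - 1) + (p - i) = 2 * p from by omega, pow_mul]
      norm_num
    linear_combination ((∏ j ∈ Ico 1 i, (M j : ℚ)) * (∏ j ∈ Ioc i p, (m j : ℚ))) * hs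
  -- key sign identities
  have hkey_i : ∀ d : ℚ,
      (-1 : ℚ) ^ (p + i) * Q.eval d
      = (∏ j ∈ Ico 1 i, (d - (M j : ℚ))) * (∏ j ∈ Ioc i p, ((m j : ℚ) - d)) := by
    intro d
    rw [hevalQ, hflip (Ioc i p) (fun j => d - (m j : ℚ))]
    simp only [neg_sub, Nat.card_Ioc]
    have hs : (-1 : ℚ) ^ (p + i) * (-1 : ℚ) ^ (p - i) = 1 := by
      rw [← pow_add, show p + i + (p - i) = 2 * p from by omega, pow_mul]; norm_num
    linear_combination ((∏ j ∈ Ico 1 i, (d - (M j : ℚ))) * (∏ j ∈ Ioc i p, ((m j : ℚ) - d))) * hs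
  have hkey_lt : ∀ l, 1 ≤ l → l < i → ∀ d : ℚ,
      (-1 : ℚ) ^ (p + l) * Q.eval d
      = (∏ j ∈ Ico 1 l, (d - (M j : ℚ))) * (∏ j ∈ Ico l i, ((M j : ℚ) - d))
        * (∏ j ∈ Ioc i p, ((m j : ℚ) - d)) := by
    intro l hl1 hli d
    rw [hevalQ, ← Finset.prod_Ico_consecutive (fun j => d - (M j : ℚ)) hl1 hli.le,
      hflip (Ico l i) (fun j => d - (M j : ℚ)), hflip (Ioc i p) (fun j => d - (m j : ℚ))]
    simp only [neg_sub, Nat.card_Ico, Nat.card_Ioc]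
    have hs : (-1 : ℚ) ^ (p + l) * ((-1 : ℚ) ^ (i - l) * (-1 : ℚ) ^ (p - i)) = 1 := by
      rw [← pow_add, ← pow_add, show p + l + (i - l + (p - i)) = 2 * p from by omega, pow_mul]
      norm_num
    linear_combination ((∏ j ∈ Ico 1 l, (d - (M j : ℚ))) * (∏ j ∈ Ico l i, ((M j : ℚ) - d))
      * (∏ j ∈ Ioc i p, ((m j : ℚ) - d))) * hs
  have hkey_gt : ∀ l, i < l → l ≤ p → ∀ d : ℚ,
      (-1 : ℚ) ^ (p + l) * Q.eval d
      = (∏ j ∈ Ico 1 i, (d - (M j : ℚ))) * (∏ j ∈ Ioc i l, (d - (m j : ℚ)))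
        * (∏ j ∈ Ioc l p, ((m j : ℚ) - d)) := by
    intro l hil hlp d
    rw [hevalQ, ← Finset.prod_Ioc_consecutive (fun j => d - (m j : ℚ)) hil.le hlp,
      hflip (Ioc l p) (fun j => d - (m j : ℚ))]
    simp only [neg_sub, Nat.card_Ioc]
    have hs : (-1 : ℚ) ^ (p + l) * (-1 : ℚ) ^ (p - l) = 1 := by
      rw [← pow_add, show p + l + (p - l) = 2 * p from by omega, pow_mul]; norm_num
    linear_combination ((∏ j ∈ Ico 1 i, (d - (M j : ℚ))) * (∏ j ∈ Ioc i l, (d - (m j : ℚ)))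
      * (∏ j ∈ Ioc l p, ((m j : ℚ) - d))) * hs
  -- nonnegativity of the off-i terms
  have hterm_nonneg : ∀ l ∈ (Icc 1 p).erase i,
      0 ≤ (-1 : ℚ) ^ (p + l) * (B l).sum (fun j v => Q.eval (j : ℚ) * v) := by
    intro l hl
    rw [Finset.mem_erase, Finset.mem_Icc] at hl
    obtain ⟨hne, hl1, hlp⟩ := hl
    rw [Finsupp.sum, Finset.mul_sum]
    apply Finset.sum_nonneg
    intro d hd
    rw [Finsupp.mem_support_iff] at hd
    obtain ⟨hdm, hdM⟩ := hbound l hl1 hlp d hd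
    have hform : (-1 : ℚ) ^ (p + l) * (Q.eval (d : ℚ) * ((B l d : ℕ) : ℚ))
        = ((-1 : ℚ) ^ (p + l) * Q.eval (d : ℚ)) * ((B l d : ℕ) : ℚ) := by ring
    rw [hform]
    refine mul_nonneg ?_ (by positivity)
    rcases lt_or_gt_of_ne hne with h | h
    · -- l < i
      rw [hkey_lt l hl1 h (d : ℚ)]
      refine mul_nonneg (mul_nonneg ?_ ?_) ?_ <;>
        refine Finset.prod_nonneg fun j hj => ?_
      · rw [Finset.mem_Ico] at hj
        have h1 : M j < m l := hchain l j hj.1 hj.2 hlp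
        have : (M j : ℚ) ≤ (d : ℚ) := by exact_mod_cast le_of_lt (lt_of_lt_of_le h1 hdm)
        linarith
      · rw [Finset.mem_Ico] at hj
        have h1 : d ≤ M j := by
          rcases eq_or_lt_of_le hj.1 with he | hlt
          · rw [← he]; exact hdM
          · have h2 : M l < m j := hchain j l hl1 hlt (by omega)
            have h3 : m j ≤ M j := hmM j (by omega) (by omega)
            omega
        have : (d : ℚ) ≤ (M j : ℚ) := by exact_mod_cast h1
        linarith
      · rw [Finset.mem_Ioc] at hj
        have h1 : M l < m j := hchain j l hl1 (by omega) hj.2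
        have : (d : ℚ) ≤ (m j : ℚ) := by exact_mod_cast le_of_lt (lt_of_le_of_lt hdM h1)
        linarith
    · -- i < l
      rw [hkey_gt l h hlp (d : ℚ)]
      refine mul_nonneg (mul_nonneg ?_ ?_) ?_ <;>
        refine Finset.prod_nonneg fun j hj => ?_
      · rw [Finset.mem_Ico] at hj
        have h1 : M j < m l := hchain l j hj.1 (by omega) hlp
        have : (M j : ℚ) ≤ (d : ℚ) := by exact_mod_cast le_of_lt (lt_of_lt_of_le h1 hdm)
        linarith
      · rw [Finset.mem_Ioc] at hj
        have h1 : m j ≤ d := by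
          rcases eq_or_lt_of_le hj.2 with he | hlt
          · rw [he]; exact hdm
          · have h2 : M j < m l := hchain l j (by omega) hlt hlp
            have h3 : m j ≤ M j := hmM j (by omega) (by omega)
            omega
        have : (m j : ℚ) ≤ (d : ℚ) := by exact_mod_cast h1
        linarith
      · rw [Finset.mem_Ioc] at hj
        have h1 : M l < m j := hchain j l hl1 hj.1 hj.2
        have : (d : ℚ) ≤ (m j : ℚ) := by exact_mod_cast le_of_lt (lt_of_le_of_lt hdM h1)
        linarith
  -- lower bound for the i-th term
  have hterm_i : (∏ j ∈ Ico 1 i, ((m i : ℚ) - (M j : ℚ)))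
        * (∏ j ∈ Ioc i p, ((m j : ℚ) - (M i : ℚ))) * ((B i).sum fun _ v => (v : ℚ))
      ≤ (-1 : ℚ) ^ (p + i) * (B i).sum (fun j v => Q.eval (j : ℚ) * v) := by
    rw [Finsupp.sum, Finsupp.sum, Finset.mul_sum, Finset.mul_sum]
    apply Finset.sum_le_sum
    intro d hd
    rw [Finsupp.mem_support_iff] at hd
    obtain ⟨hdm, hdM⟩ := hbound i hi1 hip d hd
    have hdmQ : (m i : ℚ) ≤ (d : ℚ) := by exact_mod_cast hdm
    have hdMQ : (d : ℚ) ≤ (M i : ℚ) := by exact_mod_cast hdM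
    have hform : (-1 : ℚ) ^ (p + i) * (Q.eval (d : ℚ) * ((B i d : ℕ) : ℚ))
        = ((-1 : ℚ) ^ (p + i) * Q.eval (d : ℚ)) * ((B i d : ℕ) : ℚ) := by ring
    rw [hform, hkey_i (d : ℚ)]
    apply mul_le_mul_of_nonneg_right _ (by positivity)
    have hA : ∏ j ∈ Ico 1 i, ((m i : ℚ) - (M j : ℚ)) ≤ ∏ j ∈ Ico 1 i, ((d : ℚ) - (M j : ℚ)) := by
      refine Finset.prod_le_prod (fun j hj => ?_) (fun j hj => by linarith)
      rw [Finset.mem_Ico] at hj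
      have h1 : M j < m i := hchain i j hj.1 hj.2 hip
      have : (M j : ℚ) < (m i : ℚ) := by exact_mod_cast h1
      linarith
    have hC : ∏ j ∈ Ioc i p, ((m j : ℚ) - (M i : ℚ)) ≤ ∏ j ∈ Ioc i p, ((m j : ℚ) - (d : ℚ)) := by
      refine Finset.prod_le_prod (fun j hj => ?_) (fun j hj => by linarith)
      rw [Finset.mem_Ioc] at hj
      have h1 : M i < m j := hchain j i hi1 hj.1 hj.2
      have : (M i : ℚ) < (m j : ℚ) := by exact_mod_cast h1
      linarith
    have hBnn : 0 ≤ ∏ j ∈ Ico 1 i, ((d : ℚ) - (M j : ℚ)) := by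
      refine Finset.prod_nonneg fun j hj => ?_
      rw [Finset.mem_Ico] at hj
      have h1 : M j < m i := hchain i j hj.1 hj.2 hip
      have : (M j : ℚ) < (m i : ℚ) := by exact_mod_cast h1
      linarith
    have hCnn : 0 ≤ ∏ j ∈ Ioc i p, ((m j : ℚ) - (M i : ℚ)) := by
      refine Finset.prod_nonneg fun j hj => ?_
      rw [Finset.mem_Ioc] at hj
      have h1 : M i < m j := hchain j i hi1 hj.1 hj.2
      have : (M i : ℚ) < (m j : ℚ) := by exact_mod_cast h1
      linarith
    exact mul_le_mul hA hC hCnn hBnn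
  -- assemble the main inequality
  have hsplit : (-1 : ℚ) ^ p * (- Q.coeff 0)
      = ∑ l ∈ Icc 1 p, (-1 : ℚ) ^ (p + l) * (B l).sum (fun j v => Q.eval (j : ℚ) * v) := by
    rw [← hS, Finset.mul_sum]
    exact Finset.sum_congr rfl fun l _ => by rw [pow_add]; ring
  have hmain : (∏ j ∈ Ico 1 i, ((m i : ℚ) - (M j : ℚ)))
        * (∏ j ∈ Ioc i p, ((m j : ℚ) - (M i : ℚ))) * ((B i).sum fun _ v => (v : ℚ))
      ≤ (∏ j ∈ Ico 1 i, (M j : ℚ)) * (∏ j ∈ Ioc i p, (m j : ℚ)) := by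
    rw [← hcoeff, hsplit,
      ← Finset.add_sum_erase _ _ (Finset.mem_Icc.mpr ⟨hi1, hip⟩)]
    have hrest := Finset.sum_nonneg hterm_nonneg
    linarith [hterm_i]
  -- positivity of the denominators
  have hD1 : 0 < ∏ j ∈ Ico 1 i, ((m i : ℚ) - (M j : ℚ)) := by
    refine Finset.prod_pos fun j hj => ?_
    rw [Finset.mem_Ico] at hj
    have h1 : M j < m i := hchain i j hj.1 hj.2 hip
    have : (M j : ℚ) < (m i : ℚ) := by exact_mod_cast h1
    linarith
  have hD2 : 0 < ∏ j ∈ Ioc i p, ((m j : ℚ) - (M i : ℚ)) := by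
    refine Finset.prod_pos fun j hj => ?_
    rw [Finset.mem_Ioc] at hj
    have h1 : M i < m j := hchain j i hi1 hj.1 hj.2
    have : (M i : ℚ) < (m j : ℚ) := by exact_mod_cast h1
    linarith
  -- final division and comparison
  have hstep : ((B i).sum fun _ v => (v : ℚ))
      ≤ ((∏ j ∈ Ico 1 i, (M j : ℚ)) * (∏ j ∈ Ioc i p, (m j : ℚ)))
        / ((∏ j ∈ Ico 1 i, ((m i : ℚ) - (M j : ℚ))) * (∏ j ∈ Ioc i p, ((m j : ℚ) - (M i : ℚ)))) := by
    rw [le_div_iff₀ (mul_pos hD1 hD2)]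
    nlinarith [hmain]
  refine le_trans hstep ?_
  rw [show ((∏ j ∈ Ico 1 i, (M j : ℚ)) * (∏ j ∈ Ioc i p, (m j : ℚ)))
        / ((∏ j ∈ Ico 1 i, ((m i : ℚ) - (M j : ℚ))) * (∏ j ∈ Ioc i p, ((m j : ℚ) - (M i : ℚ))))
      = ((∏ j ∈ Ico 1 i, (M j : ℚ)) / (∏ j ∈ Ico 1 i, ((m i : ℚ) - (M j : ℚ))))
        * ((∏ j ∈ Ioc i p, (m j : ℚ)) / (∏ j ∈ Ioc i p, ((m j : ℚ) - (M i : ℚ))))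
      from (div_mul_div_comm _ _ _ _).symm,
    ← Finset.prod_div_distrib, ← Finset.prod_div_distrib]
  refine mul_le_mul_of_nonneg_left ?_ ?_
  · refine Finset.prod_le_prod (fun j hj => ?_) (fun j hj => ?_)
    · rw [Finset.mem_Ioc] at hj
      have h1 : M i < m j := hchain j i hi1 hj.1 hj.2
      have h2 : 1 ≤ m j := hmpos j (by omega) hj.2
      have h1' : (M i : ℚ) < (m j : ℚ) := by exact_mod_cast h1
      have h2' : (0 : ℚ) ≤ (m j : ℚ) := by exact_mod_cast le_trans zero_le_one h2
      exact div_nonneg h2' (by linarith)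
    · rw [Finset.mem_Ioc] at hj
      have h1 : M i < m j := hchain j i hi1 hj.1 hj.2
      have h3 : m j ≤ M j := hmM j (by omega) hj.2
      have h1' : (M i : ℚ) < (m j : ℚ) := by exact_mod_cast h1
      have h3' : (m j : ℚ) ≤ (M j : ℚ) := by exact_mod_cast h3
      exact (div_le_div_iff_of_pos_right (by linarith)).mpr h3'
  · refine Finset.prod_nonneg fun j hj => ?_
    rw [Finset.mem_Ico] at hj
    have h1 : M j < m i := hchain i j hj.1 hj.2 hip
    have h2 : 1 ≤ m j := hmpos j hj.1 (by omega)
    have h3 : m j ≤ M j := hmM j hj.1 (by omega)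
    have h1' : (M j : ℚ) < (m i : ℚ) := by exact_mod_cast h1
    have h23 : (1 : ℚ) ≤ (M j : ℚ) := by exact_mod_cast le_trans h2 h3
    exact div_nonneg (by linarith) (by linarith)
end

section
/- For each i with 1 ≤ i ≤ p one has in ℚ the lower bound β_i ≥ (∏_{1≤j<i} m_j/(M_i − m_j)) · (∏_{i<j≤p} m_j/(M_j − m_i)). -/
open Finset Polynomial

private lemma prod_neg_eq (s : Finset ℕ) (g : ℕ → ℚ) :
    ∏ k ∈ s, (-(g k)) = (-1 : ℚ)^s.card * ∏ k ∈ s, g k := by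
  calc ∏ k ∈ s, (-(g k)) = ∏ k ∈ s, ((-1) * g k) := by simp
    _ = (∏ _k ∈ s, (-1 : ℚ)) * ∏ k ∈ s, g k := by rw [Finset.prod_mul_distrib]
    _ = (-1 : ℚ)^s.card * ∏ k ∈ s, g k := by rw [Finset.prod_const]

private lemma neg_pow_mul_nonneg {y x : ℚ} {e n : ℕ} (hen : (e + n) % 2 = 0)
    (h : y = (-1:ℚ)^n * x) (hx : 0 ≤ x) : 0 ≤ (-1:ℚ)^e * y := by
  rw [h, ← mul_assoc, ← pow_add]
  have h1 : (-1:ℚ)^(e+n) = 1 := by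
    have : e + n = 2 * ((e+n)/2) := by omega
    rw [this, pow_mul]; norm_num
  rw [h1, one_mul]; exact hx

private lemma ps_combine (p : ℕ) (B : ℕ → ℤ →₀ ℕ)
    (hPS0 : ∑ i ∈ Finset.Icc 1 p, (-1 : ℚ) ^ i * ((B i).sum fun _ v => (v : ℚ)) = -1)
    (hPS : ∀ k, 1 ≤ k → k ≤ p - 1 →
      ∑ i ∈ Finset.Icc 1 p, (-1 : ℚ) ^ i * ((B i).sum fun j v => (j : ℚ) ^ k * (v : ℚ)) = 0)
    (F : Polynomial ℚ) (hF : F.natDegree < p) :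
    ∑ l ∈ Finset.Icc 1 p, (-1:ℚ)^l * ((B l).sum fun j v => F.eval (j:ℚ) * v)
      = - F.eval 0 := by
  have h1 : ∀ l, ((B l).sum fun j v => F.eval (j:ℚ) * (v:ℚ))
      = ∑ k ∈ Finset.range p, F.coeff k * ((B l).sum fun j v => (j:ℚ)^k * (v:ℚ)) := by
    intro l
    rw [Finsupp.sum]
    simp_rw [Polynomial.eval_eq_sum_range' hF, Finset.sum_mul, Finsupp.sum, Finset.mul_sum]
    rw [Finset.sum_comm]
    apply Finset.sum_congr rfl; intro k _; apply Finset.sum_congr rfl; intro j _; ring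
  simp_rw [h1, Finset.mul_sum]
  rw [Finset.sum_comm]
  have h2 : ∀ k ∈ Finset.range p, k ≠ 0 →
      (∑ l ∈ Finset.Icc 1 p, (-1:ℚ)^l * (F.coeff k * ((B l).sum fun j v => (j:ℚ)^k * (v:ℚ)))) = 0 := by
    intro k hk hk0
    have : (∑ l ∈ Finset.Icc 1 p, (-1:ℚ)^l * (F.coeff k * ((B l).sum fun j v => (j:ℚ)^k * (v:ℚ))))
        = F.coeff k * ∑ l ∈ Finset.Icc 1 p, (-1:ℚ)^l * ((B l).sum fun j v => (j:ℚ)^k * (v:ℚ)) := by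
      rw [Finset.mul_sum]; apply Finset.sum_congr rfl; intros; ring
    rw [this, hPS k (by omega) (by simp at hk; omega), mul_zero]
  rw [Finset.sum_eq_single 0 h2 (by intro h; simp at h; omega)]
  have h3 : (∑ l ∈ Finset.Icc 1 p, (-1:ℚ)^l * (F.coeff 0 * ((B l).sum fun j v => (j:ℚ)^0 * (v:ℚ))))
      = F.coeff 0 * ∑ l ∈ Finset.Icc 1 p, (-1:ℚ)^l * ((B l).sum fun _ v => (v:ℚ)) := by
    rw [Finset.mul_sum]; apply Finset.sum_congr rfl; intro l _
    simp only [pow_zero, one_mul]; ring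
  rw [h3, hPS0, Polynomial.coeff_zero_eq_eval_zero]; ring

/-- Strictly quasi-pure resolutions, lower bound: under the Peskine–Szpiro
equations and strict quasi-purity `m_i > M_{i−1}`, the `i`-th total Betti
number satisfies
`β_i ≥ (∏_{1≤j<i} m_j/(M_i − m_j)) · (∏_{i<j≤p} m_j/(M_j − m_i))` in `ℚ`. -/
theorem strictly_quasi_pure_lower_bound (p : ℕ) (hp : 1 ≤ p)
    (B : ℕ → ℤ →₀ ℕ)
    (hsupp : ∀ i, 1 ≤ i → i ≤ p → (B i).support.Nonempty)
    (m M : ℕ → ℤ)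
    (hm : ∀ i, 1 ≤ i → i ≤ p → IsLeast {j : ℤ | B i j ≠ 0} (m i))
    (hM : ∀ i, 1 ≤ i → i ≤ p → IsGreatest {j : ℤ | B i j ≠ 0} (M i))
    (hm1 : 1 ≤ m 1)
    (hPS0 : ∑ i ∈ Finset.Icc 1 p, (-1 : ℚ) ^ i *
      ((B i).sum fun _ v => (v : ℚ)) = -1)
    (hPS : ∀ k, 1 ≤ k → k ≤ p - 1 →
      ∑ i ∈ Finset.Icc 1 p, (-1 : ℚ) ^ i *
        ((B i).sum fun j v => (j : ℚ) ^ k * (v : ℚ)) = 0)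
    (hqp : ∀ i, 2 ≤ i → i ≤ p → M (i - 1) < m i)
    (i : ℕ) (hi1 : 1 ≤ i) (hip : i ≤ p) :
    ((B i).sum fun _ v => (v : ℚ)) ≥
      (∏ j ∈ Finset.Ico 1 i, (m j : ℚ) / ((M i : ℚ) - (m j : ℚ))) *
      (∏ j ∈ Finset.Ioc i p, (m j : ℚ) / ((M j : ℚ) - (m i : ℚ))) := by
  classical
  -- basic order facts
  have hmem : ∀ l, 1 ≤ l → l ≤ p → ∀ j ∈ (B l).support, m l ≤ j ∧ j ≤ M l := by
    intro l h1 h2 j hj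
    have hj' : B l j ≠ 0 := Finsupp.mem_support_iff.mp hj
    exact ⟨(hm l h1 h2).2 hj', (hM l h1 h2).2 hj'⟩
  have hmM : ∀ k, 1 ≤ k → k ≤ p → m k ≤ M k := by
    intro k h1 h2
    obtain ⟨j, hj⟩ := hsupp k h1 h2
    obtain ⟨hl, hr⟩ := hmem k h1 h2 j hj
    omega
  have hchain : ∀ b, b ≤ p → ∀ a, 1 ≤ a → a < b → M a < m b := by
    intro b
    induction b with
    | zero => intro _ a _ h; omega
    | succ n ih =>
      intro hb a ha hab
      have hq := hqp (n+1) (by omega) hb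
      simp only [Nat.add_sub_cancel] at hq
      rcases Nat.lt_succ_iff_lt_or_eq.mp hab with h | h
      · have h1 : M a < m n := ih (by omega) a ha h
        have h2 : m n ≤ M n := hmM n (by omega) (by omega)
        omega
      · subst h; exact hq
  have hmpos : ∀ k, 1 ≤ k → k ≤ p → 1 ≤ m k := by
    intro k h1 h2
    rcases Nat.eq_or_lt_of_le h1 with h | h
    · rw [← h]; exact hm1
    · have hc := hchain k h2 1 le_rfl h
      have hm1M := hmM 1 le_rfl (by omega)
      omega
  have hml : ∀ a b, 1 ≤ a → a ≤ b → b ≤ p → m a ≤ m b := by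
    intro a b h1 h2 h3
    rcases Nat.eq_or_lt_of_le h2 with h | h
    · rw [h]
    · have := hchain b h3 a h1 h
      have := hmM a h1 (by omega)
      omega
  have hMM : ∀ a b, 1 ≤ a → a ≤ b → b ≤ p → M a ≤ M b := by
    intro a b h1 h2 h3
    rcases Nat.eq_or_lt_of_le h2 with h | h
    · rw [h]
    · have := hchain b h3 a h1 h
      have := hmM b (by omega) h3
      omega
  -- the polynomial
  set F : Polynomial ℚ := (∏ k ∈ Finset.Ico 1 i, (Polynomial.X - Polynomial.C ((m k : ℚ)))) *
      (∏ k ∈ Finset.Ioc i p, (Polynomial.C ((M k : ℚ)) - Polynomial.X)) with hFdef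
  have heval : ∀ x : ℚ, F.eval x = (∏ k ∈ Finset.Ico 1 i, (x - (m k:ℚ))) *
      (∏ k ∈ Finset.Ioc i p, ((M k:ℚ) - x)) := by
    intro x; simp [hFdef, Polynomial.eval_prod]
  have hdeg : F.natDegree < p := by
    have hA : (∏ k ∈ Finset.Ico 1 i, (Polynomial.X - Polynomial.C ((m k:ℚ)))).natDegree ≤ i - 1 := by
      refine le_trans (Polynomial.natDegree_prod_le _ _) ?_
      have : ∀ k ∈ Finset.Ico 1 i, (Polynomial.X - Polynomial.C ((m k:ℚ))).natDegree = 1 := by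
        intro k _; exact Polynomial.natDegree_X_sub_C _
      rw [Finset.sum_congr rfl this, Finset.sum_const, Nat.card_Ico, smul_eq_mul, mul_one]
    have hB : (∏ k ∈ Finset.Ioc i p, (Polynomial.C ((M k:ℚ)) - Polynomial.X)).natDegree ≤ p - i := by
      refine le_trans (Polynomial.natDegree_prod_le _ _) ?_
      have : ∀ k ∈ Finset.Ioc i p, (Polynomial.C ((M k:ℚ)) - Polynomial.X).natDegree = 1 := by
        intro k _
        rw [Polynomial.natDegree_sub]
        exact Polynomial.natDegree_X_sub_C _
      rw [Finset.sum_congr rfl this, Finset.sum_const, Nat.card_Ioc, smul_eq_mul, mul_one]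
    have := Polynomial.natDegree_mul_le (p := (∏ k ∈ Finset.Ico 1 i, (Polynomial.X - Polynomial.C ((m k:ℚ)))))
      (q := (∏ k ∈ Finset.Ioc i p, (Polynomial.C ((M k:ℚ)) - Polynomial.X)))
    rw [← hFdef] at this
    omega
  have hK := ps_combine p B hPS0 hPS F hdeg
  -- sign of the terms l ≠ i
  have hsign : ∀ l, 1 ≤ l → l ≤ p → l ≠ i →
      0 ≤ (-1:ℚ)^(l+i+1) * ((B l).sum fun j v => F.eval (j:ℚ) * (v:ℚ)) := by
    intro l h1 h2 hne
    rw [Finsupp.sum, Finset.mul_sum]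
    apply Finset.sum_nonneg
    intro j hj
    obtain ⟨hjm, hjM⟩ := hmem l h1 h2 j hj
    have key : 0 ≤ (-1:ℚ)^(l+i+1) * F.eval (j:ℚ) := by
      rcases lt_or_gt_of_ne hne with hlt | hgt
      · -- l < i
        have hsplit : (∏ k ∈ Finset.Ico 1 (l+1), ((j:ℚ) - (m k:ℚ))) *
            (∏ k ∈ Finset.Ico (l+1) i, ((j:ℚ) - (m k:ℚ)))
            = ∏ k ∈ Finset.Ico 1 i, ((j:ℚ) - (m k:ℚ)) :=
          Finset.prod_Ico_consecutive _ (by omega) (by omega)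
        have hQ : (∏ k ∈ Finset.Ico (l+1) i, ((j:ℚ) - (m k:ℚ)))
            = (-1:ℚ)^(i - (l+1)) * ∏ k ∈ Finset.Ico (l+1) i, ((m k:ℚ) - (j:ℚ)) := by
          rw [show i - (l+1) = (Finset.Ico (l+1) i).card from (Nat.card_Ico _ _).symm,
            ← prod_neg_eq]
          apply Finset.prod_congr rfl; intros; ring
        refine neg_pow_mul_nonneg (n := i - (l+1))
          (x := ((∏ k ∈ Finset.Ico 1 (l+1), ((j:ℚ) - (m k:ℚ))) *
            (∏ k ∈ Finset.Ico (l+1) i, ((m k:ℚ) - (j:ℚ)))) *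
            (∏ k ∈ Finset.Ioc i p, ((M k:ℚ) - (j:ℚ)))) (by omega)
          (by rw [heval, ← hsplit, hQ]; ring) ?_
        refine mul_nonneg (mul_nonneg ?_ ?_) ?_
        · apply Finset.prod_nonneg
          intro k hk
          simp only [Finset.mem_Ico] at hk
          have : m k ≤ m l := hml k l hk.1 (by omega) h2
          have : (m k : ℚ) ≤ (j:ℚ) := by exact_mod_cast le_trans this hjm
          linarith
        · apply Finset.prod_nonneg
          intro k hk
          simp only [Finset.mem_Ico] at hk
          have : M l < m k := hchain k (by omega) l h1 (by omega)
          have : (j:ℚ) ≤ (m k:ℚ) := by exact_mod_cast le_trans hjM this.le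
          linarith
        · apply Finset.prod_nonneg
          intro k hk
          simp only [Finset.mem_Ioc] at hk
          have : M l ≤ M k := hMM l k h1 (by omega) hk.2
          have : (j:ℚ) ≤ (M k:ℚ) := by exact_mod_cast le_trans hjM this
          linarith
      · -- l > i
        have hsplit : (∏ k ∈ Finset.Ioc i (l-1), ((M k:ℚ) - (j:ℚ))) *
            (∏ k ∈ Finset.Ioc (l-1) p, ((M k:ℚ) - (j:ℚ)))
            = ∏ k ∈ Finset.Ioc i p, ((M k:ℚ) - (j:ℚ)) :=
          Finset.prod_Ioc_consecutive _ (by omega) (by omega)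
        have hQ : (∏ k ∈ Finset.Ioc i (l-1), ((M k:ℚ) - (j:ℚ)))
            = (-1:ℚ)^(l - 1 - i) * ∏ k ∈ Finset.Ioc i (l-1), ((j:ℚ) - (M k:ℚ)) := by
          rw [show l - 1 - i = (Finset.Ioc i (l-1)).card from (Nat.card_Ioc _ _).symm,
            ← prod_neg_eq]
          apply Finset.prod_congr rfl; intros; ring
        refine neg_pow_mul_nonneg (n := l - 1 - i)
          (x := ((∏ k ∈ Finset.Ico 1 i, ((j:ℚ) - (m k:ℚ))) *
            (∏ k ∈ Finset.Ioc i (l-1), ((j:ℚ) - (M k:ℚ)))) *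
            (∏ k ∈ Finset.Ioc (l-1) p, ((M k:ℚ) - (j:ℚ)))) (by omega)
          (by rw [heval, ← hsplit, hQ]; ring) ?_
        refine mul_nonneg (mul_nonneg ?_ ?_) ?_
        · apply Finset.prod_nonneg
          intro k hk
          simp only [Finset.mem_Ico] at hk
          have : m k ≤ m l := hml k l (by omega) (by omega) h2
          have : (m k : ℚ) ≤ (j:ℚ) := by exact_mod_cast le_trans this hjm
          linarith
        · apply Finset.prod_nonneg
          intro k hk
          simp only [Finset.mem_Ioc] at hk
          have : M k < m l := hchain l h2 k (by omega) (by omega)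
          have : (M k:ℚ) ≤ (j:ℚ) := by exact_mod_cast le_trans this.le hjm
          linarith
        · apply Finset.prod_nonneg
          intro k hk
          simp only [Finset.mem_Ioc] at hk
          have : M l ≤ M k := hMM l k h1 (by omega) hk.2
          have : (j:ℚ) ≤ (M k:ℚ) := by exact_mod_cast le_trans hjM this
          linarith
    have hv : (0:ℚ) ≤ (B l j : ℚ) := Nat.cast_nonneg _
    calc (0:ℚ) ≤ ((-1:ℚ)^(l+i+1) * F.eval (j:ℚ)) * (B l j : ℚ) := mul_nonneg key hv
      _ = (-1:ℚ)^(l+i+1) * (F.eval (j:ℚ) * (B l j : ℚ)) := by ring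
  -- lower bound for T i
  have hF0 : F.eval 0 = (-1:ℚ)^(i-1) *
      ((∏ k ∈ Finset.Ico 1 i, (m k:ℚ)) * (∏ k ∈ Finset.Ioc i p, (M k:ℚ))) := by
    rw [heval]
    have h1 : (∏ k ∈ Finset.Ico 1 i, ((0:ℚ) - (m k:ℚ)))
        = (-1:ℚ)^(i-1) * ∏ k ∈ Finset.Ico 1 i, (m k:ℚ) := by
      rw [show i - 1 = (Finset.Ico 1 i).card from (Nat.card_Ico _ _).symm, ← prod_neg_eq]
      apply Finset.prod_congr rfl; intros; ring
    have h2 : (∏ k ∈ Finset.Ioc i p, ((M k:ℚ) - (0:ℚ))) = ∏ k ∈ Finset.Ioc i p, (M k:ℚ) := by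
      apply Finset.prod_congr rfl; intros; ring
    rw [h1, h2]; ring
  have hW2 : -((B i).sum fun j v => F.eval (j:ℚ) * (v:ℚ)) ≤
      ∑ l ∈ Finset.Icc 1 p, (-1:ℚ)^(l+i+1) * ((B l).sum fun j v => F.eval (j:ℚ) * (v:ℚ)) := by
    have hi_mem : i ∈ Finset.Icc 1 p := Finset.mem_Icc.mpr ⟨hi1, hip⟩
    rw [← Finset.add_sum_erase _ _ hi_mem]
    have hterm : (-1:ℚ)^(i+i+1) * ((B i).sum fun j v => F.eval (j:ℚ) * (v:ℚ))
        = -((B i).sum fun j v => F.eval (j:ℚ) * (v:ℚ)) := by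
      have : (-1:ℚ)^(i+i+1) = -1 := by
        rw [show i+i+1 = 2*i+1 by ring, pow_succ, pow_mul]; norm_num
      rw [this]; ring
    rw [hterm]
    have hrest : 0 ≤ ∑ l ∈ (Finset.Icc 1 p).erase i,
        (-1:ℚ)^(l+i+1) * ((B l).sum fun j v => F.eval (j:ℚ) * (v:ℚ)) := by
      apply Finset.sum_nonneg
      intro l hl
      rw [Finset.mem_erase, Finset.mem_Icc] at hl
      exact hsign l hl.2.1 hl.2.2 hl.1
    linarith
  have hW1 : ∑ l ∈ Finset.Icc 1 p, (-1:ℚ)^(l+i+1) * ((B l).sum fun j v => F.eval (j:ℚ) * (v:ℚ))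
      = (-1:ℚ)^(i+1) * (- F.eval 0) := by
    rw [← hK, Finset.mul_sum]
    apply Finset.sum_congr rfl; intro l _
    rw [show l+i+1 = l+(i+1) by ring, pow_add]; ring
  set P : ℚ := (∏ k ∈ Finset.Ico 1 i, (m k:ℚ)) * (∏ k ∈ Finset.Ioc i p, (M k:ℚ)) with hPdef
  have hTlow : P ≤ ((B i).sum fun j v => F.eval (j:ℚ) * (v:ℚ)) := by
    have hpow2 : (-1:ℚ)^(i+1) * (-1:ℚ)^(i-1) = 1 := by
      rw [← pow_add, show (i+1)+(i-1) = 2*i from by omega, pow_mul]; norm_num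
    have hcomp : (-1:ℚ)^(i+1) * (- F.eval 0) = -P := by
      rw [hF0]
      calc (-1:ℚ)^(i+1) * (-((-1:ℚ)^(i-1) * P)) = -(((-1:ℚ)^(i+1) * (-1:ℚ)^(i-1)) * P) := by ring
        _ = -P := by rw [hpow2, one_mul]
    rw [hW1, hcomp] at hW2
    linarith
  -- upper bound for T i
  set D : ℚ := (∏ k ∈ Finset.Ico 1 i, ((M i:ℚ) - (m k:ℚ))) *
      (∏ k ∈ Finset.Ioc i p, ((M k:ℚ) - (m i:ℚ))) with hDdef
  have hD1pos : ∀ k ∈ Finset.Ico 1 i, (0:ℚ) < (M i:ℚ) - (m k:ℚ) := by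
    intro k hk
    simp only [Finset.mem_Ico] at hk
    have h1 : M k < m i := hchain i hip k hk.1 hk.2
    have h2 : m k ≤ M k := hmM k hk.1 (by omega)
    have h3 : m i ≤ M i := hmM i hi1 hip
    have : (m k : ℚ) < (M i : ℚ) := by exact_mod_cast by omega
    linarith
  have hD2pos : ∀ k ∈ Finset.Ioc i p, (0:ℚ) < (M k:ℚ) - (m i:ℚ) := by
    intro k hk
    simp only [Finset.mem_Ioc] at hk
    have h1 : M i < m k := hchain k hk.2 i hi1 hk.1
    have h2 : m k ≤ M k := hmM k (by omega) hk.2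
    have h3 : m i ≤ M i := hmM i hi1 hip
    have : (m i : ℚ) < (M k : ℚ) := by exact_mod_cast by omega
    linarith
  have hDpos : 0 < D := by
    rw [hDdef]
    exact mul_pos (Finset.prod_pos hD1pos) (Finset.prod_pos hD2pos)
  have hTup : ((B i).sum fun j v => F.eval (j:ℚ) * (v:ℚ)) ≤
      D * ((B i).sum fun _ v => (v:ℚ)) := by
    rw [Finsupp.sum, Finsupp.sum, Finset.mul_sum]
    apply Finset.sum_le_sum
    intro j hj
    obtain ⟨hjm, hjM⟩ := hmem i hi1 hip j hj
    have hfD : F.eval (j:ℚ) ≤ D := by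
      rw [heval, hDdef]
      have hjmQ : (m i:ℚ) ≤ (j:ℚ) := by exact_mod_cast hjm
      have hjMQ : (j:ℚ) ≤ (M i:ℚ) := by exact_mod_cast hjM
      have hle1 : (∏ k ∈ Finset.Ico 1 i, ((j:ℚ) - (m k:ℚ)))
          ≤ ∏ k ∈ Finset.Ico 1 i, ((M i:ℚ) - (m k:ℚ)) := by
        apply Finset.prod_le_prod
        · intro k hk
          simp only [Finset.mem_Ico] at hk
          have h1 : m k ≤ m i := hml k i hk.1 (by omega) hip
          have : (m k:ℚ) ≤ (j:ℚ) := by exact_mod_cast le_trans h1 hjm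
          linarith
        · intro k hk; linarith
      have hle2 : (∏ k ∈ Finset.Ioc i p, ((M k:ℚ) - (j:ℚ)))
          ≤ ∏ k ∈ Finset.Ioc i p, ((M k:ℚ) - (m i:ℚ)) := by
        apply Finset.prod_le_prod
        · intro k hk
          simp only [Finset.mem_Ioc] at hk
          have h1 : M i ≤ M k := hMM i k hi1 hk.1.le hk.2
          have : (j:ℚ) ≤ (M k:ℚ) := by exact_mod_cast le_trans hjM h1
          linarith
        · intro k hk; linarith
      have hnn2 : 0 ≤ ∏ k ∈ Finset.Ioc i p, ((M k:ℚ) - (j:ℚ)) := by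
        apply Finset.prod_nonneg
        intro k hk
        simp only [Finset.mem_Ioc] at hk
        have h1 : M i ≤ M k := hMM i k hi1 hk.1.le hk.2
        have : (j:ℚ) ≤ (M k:ℚ) := by exact_mod_cast le_trans hjM h1
        linarith
      have hnn1 : 0 ≤ ∏ k ∈ Finset.Ico 1 i, ((M i:ℚ) - (m k:ℚ)) :=
        Finset.prod_nonneg (fun k hk => (hD1pos k hk).le)
      exact mul_le_mul hle1 hle2 hnn2 hnn1
    have hv : (0:ℚ) ≤ (B i j : ℚ) := Nat.cast_nonneg _
    calc F.eval (j:ℚ) * (B i j : ℚ) ≤ D * (B i j : ℚ) := by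
          exact mul_le_mul_of_nonneg_right hfD hv
      _ = D * (B i j : ℚ) := rfl
  -- put everything together
  rw [ge_iff_le]
  have htargetD : ((∏ j ∈ Finset.Ico 1 i, (m j : ℚ) / ((M i : ℚ) - (m j : ℚ))) *
      (∏ j ∈ Finset.Ioc i p, (m j : ℚ) / ((M j : ℚ) - (m i : ℚ)))) * D ≤ P := by
    rw [hDdef, hPdef]
    have e1 : (∏ j ∈ Finset.Ico 1 i, (m j : ℚ) / ((M i : ℚ) - (m j : ℚ))) *
        (∏ k ∈ Finset.Ico 1 i, ((M i:ℚ) - (m k:ℚ))) = ∏ k ∈ Finset.Ico 1 i, (m k:ℚ) := by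
      rw [← Finset.prod_mul_distrib]
      apply Finset.prod_congr rfl
      intro k hk
      exact div_mul_cancel₀ _ (ne_of_gt (hD1pos k hk))
    have e2 : (∏ j ∈ Finset.Ioc i p, (m j : ℚ) / ((M j : ℚ) - (m i : ℚ))) *
        (∏ k ∈ Finset.Ioc i p, ((M k:ℚ) - (m i:ℚ))) = ∏ k ∈ Finset.Ioc i p, (m k:ℚ) := by
      rw [← Finset.prod_mul_distrib]
      apply Finset.prod_congr rfl
      intro k hk
      exact div_mul_cancel₀ _ (ne_of_gt (hD2pos k hk))
    have e3 : (∏ k ∈ Finset.Ioc i p, (m k:ℚ)) ≤ ∏ k ∈ Finset.Ioc i p, (M k:ℚ) := by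
      apply Finset.prod_le_prod
      · intro k hk
        simp only [Finset.mem_Ioc] at hk
        have := hmpos k (by omega) hk.2
        have : (1:ℚ) ≤ (m k:ℚ) := by exact_mod_cast this
        linarith
      · intro k hk
        simp only [Finset.mem_Ioc] at hk
        have := hmM k (by omega) hk.2
        exact_mod_cast this
    have e4 : (0:ℚ) ≤ ∏ k ∈ Finset.Ico 1 i, (m k:ℚ) := by
      apply Finset.prod_nonneg
      intro k hk
      simp only [Finset.mem_Ico] at hk
      have := hmpos k hk.1 (by omega)
      have : (1:ℚ) ≤ (m k:ℚ) := by exact_mod_cast this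
      linarith
    calc ((∏ j ∈ Finset.Ico 1 i, (m j : ℚ) / ((M i : ℚ) - (m j : ℚ))) *
        (∏ j ∈ Finset.Ioc i p, (m j : ℚ) / ((M j : ℚ) - (m i : ℚ)))) *
        ((∏ k ∈ Finset.Ico 1 i, ((M i:ℚ) - (m k:ℚ))) * (∏ k ∈ Finset.Ioc i p, ((M k:ℚ) - (m i:ℚ))))
        = ((∏ j ∈ Finset.Ico 1 i, (m j : ℚ) / ((M i : ℚ) - (m j : ℚ))) *
            (∏ k ∈ Finset.Ico 1 i, ((M i:ℚ) - (m k:ℚ)))) *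
          ((∏ j ∈ Finset.Ioc i p, (m j : ℚ) / ((M j : ℚ) - (m i : ℚ))) *
            (∏ k ∈ Finset.Ioc i p, ((M k:ℚ) - (m i:ℚ)))) := by ring
      _ = (∏ k ∈ Finset.Ico 1 i, (m k:ℚ)) * (∏ k ∈ Finset.Ioc i p, (m k:ℚ)) := by rw [e1, e2]
      _ ≤ (∏ k ∈ Finset.Ico 1 i, (m k:ℚ)) * (∏ k ∈ Finset.Ioc i p, (M k:ℚ)) :=
          mul_le_mul_of_nonneg_left e3 e4
  have hfinal : ((∏ j ∈ Finset.Ico 1 i, (m j : ℚ) / ((M i : ℚ) - (m j : ℚ))) *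
      (∏ j ∈ Finset.Ioc i p, (m j : ℚ) / ((M j : ℚ) - (m i : ℚ)))) * D ≤
      ((B i).sum fun _ v => (v : ℚ)) * D := by
    calc _ ≤ P := htargetD
      _ ≤ ((B i).sum fun j v => F.eval (j:ℚ) * (v:ℚ)) := hTlow
      _ ≤ D * ((B i).sum fun _ v => (v:ℚ)) := hTup
      _ = ((B i).sum fun _ v => (v : ℚ)) * D := by ring
  exact le_of_mul_le_mul_right hfinal hDpos
end

section
/- The equality β_i = (∏_{1≤j<i} M_j/(m_i − M_j)) · (∏_{i<j≤p} M_j/(m_j − M_i)) holds in ℚ for every i with 1 ≤ i ≤ p if and only if m_i = M_i for every i (i.e. the resolution is pure). -/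
open Polynomial Finset

section helpers

lemma sqp_chain (p : ℕ) (m M : ℕ → ℤ) (hmM : ∀ i, 1 ≤ i → i ≤ p → m i ≤ M i)
    (hqp : ∀ i, 2 ≤ i → i ≤ p → M (i - 1) < m i) :
    ∀ a b, 1 ≤ a → a < b → b ≤ p → M a < m b := by
  intro a b ha hab hbp
  induction b with
  | zero => omega
  | succ n ih =>
    rcases eq_or_lt_of_le (Nat.lt_succ_iff.mp hab) with h | h
    · subst h
      have := hqp (a + 1) (by omega) hbp
      simpa using this
    · have h1 : M a < m n := ih h (by omega)
      have h2 : m n ≤ M n := hmM n (by omega) (by omega)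
      have h3 : M n < m (n + 1) := by simpa using hqp (n + 1) (by omega) hbp
      omega

noncomputable def sqpQ (m M : ℕ → ℤ) (p i : ℕ) : ℚ[X] :=
  (∏ j ∈ Ico 1 i, (X - C (M j : ℚ))) * (∏ j ∈ Ioc i p, (C (m j : ℚ) - X))

lemma sqpQ_eval (m M : ℕ → ℤ) (p i : ℕ) (x : ℚ) :
    (sqpQ m M p i).eval x = (∏ j ∈ Ico 1 i, (x - (M j : ℚ))) *
      (∏ j ∈ Ioc i p, ((m j : ℚ) - x)) := by
  simp [sqpQ, eval_prod]

lemma sqpQ_deg (m M : ℕ → ℤ) (p i : ℕ) (hi : 1 ≤ i) (hip : i ≤ p) :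
    (sqpQ m M p i).natDegree < p := by
  have h1 : ∀ a : ℚ, (X - C a).natDegree = 1 := fun a => natDegree_X_sub_C a
  have h2 : ∀ a : ℚ, (C a - X).natDegree = 1 := by
    intro a
    rw [show (C a - X : ℚ[X]) = -(X - C a) by ring, natDegree_neg, natDegree_X_sub_C]
  have hne1 : ∀ j ∈ Ico 1 i, (X - C (M j : ℚ)) ≠ 0 := fun j _ => X_sub_C_ne_zero _
  have hne2 : ∀ j ∈ Ioc i p, (C (m j : ℚ) - X) ≠ 0 := by
    intro j _
    rw [show (C (m j : ℚ) - X : ℚ[X]) = -(X - C (m j : ℚ)) by ring]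
    exact neg_ne_zero.mpr (X_sub_C_ne_zero _)
  rw [sqpQ, natDegree_mul (Finset.prod_ne_zero_iff.mpr hne1) (Finset.prod_ne_zero_iff.mpr hne2),
    natDegree_prod _ _ hne1, natDegree_prod _ _ hne2]
  simp only [h1, h2, Finset.sum_const, smul_eq_mul, mul_one]
  rw [Nat.card_Ico, Nat.card_Ioc]
  omega

lemma finsupp_sum_eq (f : ℤ →₀ ℕ) (g : ℤ → ℕ → ℚ) :
    f.sum g = ∑ j ∈ f.support, g j (f j) := rfl

lemma prod_neg_form (s : Finset ℕ) (f : ℕ → ℚ) :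
    ∏ j ∈ s, f j = (-1) ^ s.card * ∏ j ∈ s, (-(f j)) := by
  rw [← Finset.prod_const, ← Finset.prod_mul_distrib]
  simp

lemma sqp_sign (p : ℕ) (m M : ℕ → ℤ)
    (hmM : ∀ i, 1 ≤ i → i ≤ p → m i ≤ M i)
    (hchain : ∀ a b, 1 ≤ a → a < b → b ≤ p → M a < m b)
    (i i' : ℕ) (hi : 1 ≤ i) (hip : i ≤ p) (hi' : 1 ≤ i') (hi'p : i' ≤ p)
    (j : ℚ) (hjl : (m i' : ℚ) ≤ j) (hju : j ≤ (M i' : ℚ)) :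
    0 ≤ (-1:ℚ)^(i+i') * (sqpQ m M p i).eval j := by
  have hMM : ∀ a b, 1 ≤ a → a ≤ b → b ≤ p → (M a : ℚ) ≤ M b := by
    intro a b ha hab hbp
    rcases eq_or_lt_of_le hab with rfl | h
    · exact le_rfl
    · have h1 := hchain a b ha h hbp
      have h2 := hmM b (by omega) hbp
      exact_mod_cast le_of_lt (lt_of_lt_of_le h1 h2)
  have hmm : ∀ a b, 1 ≤ a → a ≤ b → b ≤ p → (m a : ℚ) ≤ m b := by
    intro a b ha hab hbp
    rcases eq_or_lt_of_le hab with rfl | h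
    · exact le_rfl
    · have h1 := hmM a ha (by omega)
      have h2 := hchain a b ha h hbp
      exact_mod_cast le_of_lt (lt_of_le_of_lt h1 h2)
  rw [sqpQ_eval]
  rcases lt_trichotomy i' i with hlt | rfl | hgt
  · -- i' < i
    rw [← Finset.prod_Ico_consecutive (fun l => (j - (M l : ℚ))) hi' (le_of_lt hlt)]
    rw [prod_neg_form (Ico i' i) (fun l => (j - (M l : ℚ)))]
    have hsgn : (-1:ℚ)^(i+i') * (-1)^((Ico i' i).card) = 1 := by
      rw [Nat.card_Ico, ← pow_add, show i+i'+(i-i') = 2*i by omega, pow_mul]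
      norm_num
    have hA : 0 ≤ ∏ l ∈ Ico 1 i', (j - (M l : ℚ)) := by
      apply Finset.prod_nonneg
      intro l hl
      simp only [Finset.mem_Ico] at hl
      have := hchain l i' hl.1 hl.2 hi'p
      have : (M l : ℚ) < m i' := by exact_mod_cast this
      linarith
    have hB : 0 ≤ ∏ l ∈ Ico i' i, (-(j - (M l : ℚ))) := by
      apply Finset.prod_nonneg
      intro l hl
      simp only [Finset.mem_Ico] at hl
      have := hMM i' l hi' hl.1 (by omega)
      linarith
    have hC : 0 ≤ ∏ l ∈ Ioc i p, ((m l : ℚ) - j) := by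
      apply Finset.prod_nonneg
      intro l hl
      simp only [Finset.mem_Ioc] at hl
      have := hchain i' l hi' (by omega) hl.2
      have : (M i' : ℚ) < m l := by exact_mod_cast this
      linarith
    calc (0:ℚ) ≤ (∏ l ∈ Ico 1 i', (j - (M l : ℚ))) * (∏ l ∈ Ico i' i, (-(j - (M l : ℚ)))) *
        (∏ l ∈ Ioc i p, ((m l : ℚ) - j)) := by positivity
      _ = (-1:ℚ)^(i+i') * ((∏ l ∈ Ico 1 i', (j - (M l : ℚ))) *
          ((-1:ℚ)^((Ico i' i).card) * ∏ l ∈ Ico i' i, (-(j - (M l : ℚ)))) *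
          (∏ l ∈ Ioc i p, ((m l : ℚ) - j))) := by
        rw [show ∀ a b c : ℚ, (-1:ℚ)^(i+i') * (a * ((-1:ℚ)^((Ico i' i).card) * b) * c) =
          ((-1:ℚ)^(i+i') * (-1:ℚ)^((Ico i' i).card)) * (a * b * c) from fun a b c => by ring,
          hsgn, one_mul]
  · -- i' = i
    have hsgn : (-1:ℚ)^(i'+i') = 1 := by
      rw [← two_mul, pow_mul]; norm_num
    rw [hsgn, one_mul]
    apply mul_nonneg
    · apply Finset.prod_nonneg
      intro l hl
      simp only [Finset.mem_Ico] at hl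
      have := hchain l i' hl.1 hl.2 hip
      have : (M l : ℚ) < m i' := by exact_mod_cast this
      linarith
    · apply Finset.prod_nonneg
      intro l hl
      simp only [Finset.mem_Ioc] at hl
      have := hchain i' l hi hl.1 hl.2
      have : (M i' : ℚ) < m l := by exact_mod_cast this
      linarith
  · -- i < i'
    rw [← Finset.prod_Ioc_consecutive (fun l => ((m l : ℚ) - j)) (le_of_lt hgt) hi'p]
    rw [prod_neg_form (Ioc i i') (fun l => ((m l : ℚ) - j))]
    have hsgn : (-1:ℚ)^(i+i') * (-1)^((Ioc i i').card) = 1 := by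
      rw [Nat.card_Ioc, ← pow_add, show i+i'+(i'-i) = 2*i' by omega, pow_mul]
      norm_num
    have hA : 0 ≤ ∏ l ∈ Ico 1 i, (j - (M l : ℚ)) := by
      apply Finset.prod_nonneg
      intro l hl
      simp only [Finset.mem_Ico] at hl
      have h1 := hchain l i' hl.1 (by omega) hi'p
      have : (M l : ℚ) < m i' := by exact_mod_cast h1
      linarith
    have hB : 0 ≤ ∏ l ∈ Ioc i i', (-((m l : ℚ) - j)) := by
      apply Finset.prod_nonneg
      intro l hl
      simp only [Finset.mem_Ioc] at hl
      have := hmm l i' (by omega) hl.2 hi'p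
      linarith
    have hC : 0 ≤ ∏ l ∈ Ioc i' p, ((m l : ℚ) - j) := by
      apply Finset.prod_nonneg
      intro l hl
      simp only [Finset.mem_Ioc] at hl
      have := hchain i' l hi' hl.1 hl.2
      have : (M i' : ℚ) < m l := by exact_mod_cast this
      linarith
    calc (0:ℚ) ≤ (∏ l ∈ Ico 1 i, (j - (M l : ℚ))) * ((∏ l ∈ Ioc i i', (-((m l : ℚ) - j))) *
        (∏ l ∈ Ioc i' p, ((m l : ℚ) - j))) := by positivity
      _ = (-1:ℚ)^(i+i') * ((∏ l ∈ Ico 1 i, (j - (M l : ℚ))) *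
          ((-1:ℚ)^((Ioc i i').card) * (∏ l ∈ Ioc i i', (-((m l : ℚ) - j))) *
          (∏ l ∈ Ioc i' p, ((m l : ℚ) - j)))) := by
        rw [show ∀ a b c : ℚ, (-1:ℚ)^(i+i') * (a * ((-1:ℚ)^((Ioc i i').card) * b * c)) =
          ((-1:ℚ)^(i+i') * (-1:ℚ)^((Ioc i i').card)) * (a * (b * c)) from fun a b c => by ring,
          hsgn, one_mul]

lemma key_functional' (p : ℕ) (hp : 1 ≤ p) (B : ℕ → ℤ →₀ ℕ)
    (hPS0 : ∑ i ∈ Finset.Icc 1 p, (-1 : ℚ) ^ i *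
      ((B i).sum fun _ v => (v : ℚ)) = -1)
    (hPS : ∀ k, 1 ≤ k → k ≤ p - 1 →
      ∑ i ∈ Finset.Icc 1 p, (-1 : ℚ) ^ i *
        ((B i).sum fun j v => (j : ℚ) ^ k * (v : ℚ)) = 0)
    (q : ℚ[X]) (hq : q.natDegree < p) :
    ∑ i ∈ Finset.Icc 1 p, (-1 : ℚ) ^ i *
      ((B i).sum fun j v => q.eval (j : ℚ) * (v : ℚ)) = - q.eval 0 := by
  have h1 : ∀ i, ((B i).sum fun j v => q.eval (j : ℚ) * (v : ℚ))
      = ∑ k ∈ range p, q.coeff k * ((B i).sum fun j v => (j : ℚ) ^ k * (v : ℚ)) := by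
    intro i
    rw [Finsupp.sum]
    simp_rw [eval_eq_sum_range' hq, Finset.sum_mul, Finsupp.sum, Finset.mul_sum]
    rw [Finset.sum_comm]
    simp_rw [mul_assoc]
  simp_rw [h1, Finset.mul_sum]
  rw [Finset.sum_comm]
  have h2 : ∀ k ∈ range p, (∑ i ∈ Finset.Icc 1 p, (-1:ℚ)^i *
      (q.coeff k * ((B i).sum fun j v => (j : ℚ) ^ k * (v : ℚ))))
      = q.coeff k * ∑ i ∈ Finset.Icc 1 p, (-1:ℚ)^i *
        ((B i).sum fun j v => (j : ℚ) ^ k * (v : ℚ)) := by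
    intro k _
    rw [Finset.mul_sum]; apply Finset.sum_congr rfl; intro i _; ring
  rw [Finset.sum_congr rfl h2]
  rw [Finset.sum_eq_single_of_mem 0 (by simpa using Nat.pos_of_ne_zero (by omega : p ≠ 0))]
  · simp only [pow_zero, one_mul]
    rw [hPS0, coeff_zero_eq_eval_zero]; ring
  · intro k hk hk0
    rw [hPS k (by omega) (by simp at hk; omega), mul_zero]

lemma sqp_identity (p : ℕ) (hp : 1 ≤ p) (B : ℕ → ℤ →₀ ℕ) (m M : ℕ → ℤ)
    (hPS0 : ∑ i ∈ Finset.Icc 1 p, (-1 : ℚ) ^ i *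
      ((B i).sum fun _ v => (v : ℚ)) = -1)
    (hPS : ∀ k, 1 ≤ k → k ≤ p - 1 →
      ∑ i ∈ Finset.Icc 1 p, (-1 : ℚ) ^ i *
        ((B i).sum fun j v => (j : ℚ) ^ k * (v : ℚ)) = 0)
    (i : ℕ) (hi : 1 ≤ i) (hip : i ≤ p) :
    ∑ i' ∈ Finset.Icc 1 p, (-1:ℚ)^(i+i') *
      ((B i').sum fun j v => (sqpQ m M p i).eval (j:ℚ) * (v:ℚ))
    = (∏ j ∈ Ico 1 i, (M j:ℚ)) * (∏ j ∈ Ioc i p, (m j:ℚ)) := by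
  have hk := key_functional' p hp B hPS0 hPS (sqpQ m M p i) (sqpQ_deg m M p i hi hip)
  have h0 : (sqpQ m M p i).eval 0 = (-1:ℚ)^(i-1) *
      ((∏ j ∈ Ico 1 i, (M j:ℚ)) * (∏ j ∈ Ioc i p, (m j:ℚ))) := by
    rw [sqpQ_eval, prod_neg_form (Ico 1 i) (fun l => (0:ℚ) - (M l:ℚ))]
    simp only [zero_sub, neg_neg, sub_zero, Nat.card_Ico]
    ring
  have hsum : ∑ i' ∈ Finset.Icc 1 p, (-1:ℚ)^(i+i') *
      ((B i').sum fun j v => (sqpQ m M p i).eval (j:ℚ) * (v:ℚ))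
      = (-1:ℚ)^i * ∑ i' ∈ Finset.Icc 1 p, (-1:ℚ)^i' *
        ((B i').sum fun j v => (sqpQ m M p i).eval (j:ℚ) * (v:ℚ)) := by
    rw [Finset.mul_sum]
    apply Finset.sum_congr rfl
    intro i' _
    rw [pow_add]; ring
  rw [hsum, hk, h0]
  obtain ⟨c, rfl⟩ : ∃ c, i = c + 1 := ⟨i - 1, by omega⟩
  simp only [Nat.add_sub_cancel]
  have hs : (-1:ℚ)^(c+1) * (-1:ℚ)^c = -1 := by
    rw [← pow_add, show c+1+c = 2*c+1 by omega]
    exact Odd.neg_one_pow ⟨c, by ring⟩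
  calc (-1:ℚ)^(c+1) * -((-1:ℚ)^c *
        ((∏ j ∈ Ico 1 (c+1), (M j:ℚ)) * (∏ j ∈ Ioc (c+1) p, (m j:ℚ))))
      = -(((-1:ℚ)^(c+1) * (-1:ℚ)^c) *
        ((∏ j ∈ Ico 1 (c+1), (M j:ℚ)) * (∏ j ∈ Ioc (c+1) p, (m j:ℚ)))) := by ring
    _ = _ := by rw [hs]; ring

end helpers

/-- Strictly quasi-pure resolutions: the upper bound
`β_i = (∏_{1≤j<i} M_j/(m_i − M_j)) · (∏_{i<j≤p} M_j/(m_j − M_i))` is an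
equality in `ℚ` for every `1 ≤ i ≤ p` if and only if `m_i = M_i` for every
`1 ≤ i ≤ p`, i.e. the resolution is pure. -/
theorem strictly_quasi_pure_upper_equality_iff_pure (p : ℕ) (hp : 1 ≤ p)
    (B : ℕ → ℤ →₀ ℕ)
    (hsupp : ∀ i, 1 ≤ i → i ≤ p → (B i).support.Nonempty)
    (m M : ℕ → ℤ)
    (hm : ∀ i, 1 ≤ i → i ≤ p → IsLeast {j : ℤ | B i j ≠ 0} (m i))
    (hM : ∀ i, 1 ≤ i → i ≤ p → IsGreatest {j : ℤ | B i j ≠ 0} (M i))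
    (hm1 : 1 ≤ m 1)
    (hPS0 : ∑ i ∈ Finset.Icc 1 p, (-1 : ℚ) ^ i *
      ((B i).sum fun _ v => (v : ℚ)) = -1)
    (hPS : ∀ k, 1 ≤ k → k ≤ p - 1 →
      ∑ i ∈ Finset.Icc 1 p, (-1 : ℚ) ^ i *
        ((B i).sum fun j v => (j : ℚ) ^ k * (v : ℚ)) = 0)
    (hqp : ∀ i, 2 ≤ i → i ≤ p → M (i - 1) < m i) :
    (∀ i, 1 ≤ i → i ≤ p →
      ((B i).sum fun _ v => (v : ℚ)) =
        (∏ j ∈ Finset.Ico 1 i, (M j : ℚ) / ((m i : ℚ) - (M j : ℚ))) *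
        (∏ j ∈ Finset.Ioc i p, (M j : ℚ) / ((m j : ℚ) - (M i : ℚ))))
    ↔ (∀ i, 1 ≤ i → i ≤ p → m i = M i) := by
  have hmM : ∀ i, 1 ≤ i → i ≤ p → m i ≤ M i := fun i h1 h2 => (hM i h1 h2).2 (hm i h1 h2).1
  have hchain := sqp_chain p m M hmM hqp
  have hmpos : ∀ i, 1 ≤ i → i ≤ p → 1 ≤ m i := by
    intro i h1 h2
    rcases Nat.eq_or_lt_of_le h1 with h | h
    · rw [← h]; exact hm1
    · have := hchain 1 i le_rfl h h2
      have := hmM 1 le_rfl (le_trans h1 h2)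
      omega
  have hsuppmem : ∀ i, 1 ≤ i → i ≤ p → ∀ j ∈ (B i).support, m i ≤ j ∧ j ≤ M i := by
    intro i h1 h2 j hj
    rw [Finsupp.mem_support_iff] at hj
    exact ⟨(hm i h1 h2).2 hj, (hM i h1 h2).2 hj⟩
  -- positivity of the denominators
  have hD1pos : ∀ i, 1 ≤ i → i ≤ p → 0 < ∏ j ∈ Ico 1 i, ((m i:ℚ) - (M j:ℚ)) := by
    intro i h1 h2
    apply Finset.prod_pos
    intro l hl
    simp only [Finset.mem_Ico] at hl
    have := hchain l i hl.1 hl.2 h2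
    have : (M l : ℚ) < m i := by exact_mod_cast this
    linarith
  have hD2pos : ∀ i, 1 ≤ i → i ≤ p → 0 < ∏ j ∈ Ioc i p, ((m j:ℚ) - (M i:ℚ)) := by
    intro i h1 h2
    apply Finset.prod_pos
    intro l hl
    simp only [Finset.mem_Ioc] at hl
    have := hchain i l h1 hl.1 hl.2
    have : (M i : ℚ) < m l := by exact_mod_cast this
    linarith
  have hPLpos : ∀ i, 0 < ∏ j ∈ Ico 1 i, ((M j:ℚ)) ∨ True := fun _ => Or.inr trivial
  constructor
  · -- forward direction
    intro heq
    -- main consequences of equality at index i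
    have main : ∀ i, 1 ≤ i → i ≤ p →
        (∀ l, i < l → l ≤ p → m l = M l) ∧
        ((B i).sum fun j v => (sqpQ m M p i).eval (j:ℚ) * (v:ℚ)) =
          ((∏ j ∈ Ico 1 i, ((m i:ℚ) - (M j:ℚ))) * (∏ j ∈ Ioc i p, ((m j:ℚ) - (M i:ℚ)))) *
          ((B i).sum fun _ v => (v : ℚ)) := by
      intro i hi hip
      have hD1 := hD1pos i hi hip
      have hD2 := hD2pos i hi hip
      have hPL : 0 < ∏ j ∈ Ico 1 i, (M j:ℚ) := by
        apply Finset.prod_pos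
        intro l hl
        simp only [Finset.mem_Ico] at hl
        have h1 := hmpos l hl.1 (by omega)
        have h2 := hmM l hl.1 (by omega)
        have : (1:ℚ) ≤ M l := by exact_mod_cast le_trans h1 h2
        linarith
      -- equality hypothesis rewritten
      have heqi : ((B i).sum fun _ v => (v : ℚ)) *
          ((∏ j ∈ Ico 1 i, ((m i:ℚ) - (M j:ℚ))) * (∏ j ∈ Ioc i p, ((m j:ℚ) - (M i:ℚ))))
          = (∏ j ∈ Ico 1 i, (M j:ℚ)) * (∏ j ∈ Ioc i p, (M j:ℚ)) := by
        have h := heq i hi hip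
        rw [Finset.prod_div_distrib, Finset.prod_div_distrib] at h
        rw [h]
        field_simp
      -- lower bound for eval on the support of B i
      have hlow : ∀ j ∈ (B i).support,
          (∏ l ∈ Ico 1 i, ((m i:ℚ) - (M l:ℚ))) * (∏ l ∈ Ioc i p, ((m l:ℚ) - (M i:ℚ)))
            ≤ (sqpQ m M p i).eval (j:ℚ) := by
        intro j hj
        obtain ⟨hjl, hju⟩ := hsuppmem i hi hip j hj
        have hjlq : (m i : ℚ) ≤ (j:ℚ) := by exact_mod_cast hjl
        have hjuq : (j : ℚ) ≤ (M i:ℚ) := by exact_mod_cast hju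
        rw [sqpQ_eval]
        apply mul_le_mul
        · apply Finset.prod_le_prod
          · intro l hl
            simp only [Finset.mem_Ico] at hl
            have := hchain l i hl.1 hl.2 hip
            have : (M l : ℚ) < m i := by exact_mod_cast this
            linarith
          · intro l hl
            linarith
        · apply Finset.prod_le_prod
          · intro l hl
            simp only [Finset.mem_Ioc] at hl
            have := hchain i l hi hl.1 hl.2
            have : (M i : ℚ) < m l := by exact_mod_cast this
            linarith
          · intro l hl
            linarith
        · exact le_of_lt hD2
        · apply Finset.prod_nonneg
          intro l hl
          simp only [Finset.mem_Ico] at hl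
          have := hchain l i hl.1 hl.2 hip
          have : (M l : ℚ) < m i := by exact_mod_cast this
          linarith
      -- lower bound for T_i
      have hTlow : ((∏ l ∈ Ico 1 i, ((m i:ℚ) - (M l:ℚ))) * (∏ l ∈ Ioc i p, ((m l:ℚ) - (M i:ℚ)))) *
          ((B i).sum fun _ v => (v : ℚ))
          ≤ ((B i).sum fun j v => (sqpQ m M p i).eval (j:ℚ) * (v:ℚ)) := by
        rw [finsupp_sum_eq, finsupp_sum_eq, Finset.mul_sum]
        apply Finset.sum_le_sum
        intro j hj
        have hv : (0:ℚ) ≤ (B i j : ℚ) := by positivity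
        exact mul_le_mul_of_nonneg_right (hlow j hj) hv
      -- T_i bounded by the full signed sum
      have hTle : ((B i).sum fun j v => (sqpQ m M p i).eval (j:ℚ) * (v:ℚ))
          ≤ ∑ i' ∈ Finset.Icc 1 p, (-1:ℚ)^(i+i') *
            ((B i').sum fun j v => (sqpQ m M p i).eval (j:ℚ) * (v:ℚ)) := by
        have hsgn : (-1:ℚ)^(i+i) = 1 := by rw [← two_mul, pow_mul]; norm_num
        have hterm : ∀ i' ∈ Finset.Icc 1 p, 0 ≤ (-1:ℚ)^(i+i') *
            ((B i').sum fun j v => (sqpQ m M p i).eval (j:ℚ) * (v:ℚ)) := by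
          intro i' hi'
          simp only [Finset.mem_Icc] at hi'
          rw [finsupp_sum_eq, Finset.mul_sum]
          apply Finset.sum_nonneg
          intro j hj
          obtain ⟨hjl, hju⟩ := hsuppmem i' hi'.1 hi'.2 j hj
          have hs := sqp_sign p m M hmM hchain i i' hi hip hi'.1 hi'.2 (j:ℚ)
            (by exact_mod_cast hjl) (by exact_mod_cast hju)
          have hv : (0:ℚ) ≤ (B i' j : ℚ) := by positivity
          calc (0:ℚ) ≤ ((-1:ℚ)^(i+i') * (sqpQ m M p i).eval (j:ℚ)) * (B i' j : ℚ) :=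
              mul_nonneg hs hv
            _ = (-1:ℚ)^(i+i') * ((sqpQ m M p i).eval (j:ℚ) * (B i' j : ℚ)) := by ring
        have h := Finset.single_le_sum hterm (Finset.mem_Icc.mpr ⟨hi, hip⟩)
        rw [hsgn, one_mul] at h
        exact h
      have hid := sqp_identity p hp B m M hPS0 hPS i hi hip
      have hPmPM : (∏ j ∈ Ioc i p, (m j:ℚ)) ≤ ∏ j ∈ Ioc i p, (M j:ℚ) := by
        apply Finset.prod_le_prod
        · intro l hl
          simp only [Finset.mem_Ioc] at hl
          have := hmpos l (by omega) hl.2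
          have : (1:ℚ) ≤ m l := by exact_mod_cast this
          linarith
        · intro l hl
          simp only [Finset.mem_Ioc] at hl
          exact_mod_cast hmM l (by omega) hl.2
      -- the chain of inequalities collapses
      have hchain1 : ((∏ l ∈ Ico 1 i, ((m i:ℚ) - (M l:ℚ))) * (∏ l ∈ Ioc i p, ((m l:ℚ) - (M i:ℚ)))) *
          ((B i).sum fun _ v => (v : ℚ))
          ≤ (∏ j ∈ Ico 1 i, (M j:ℚ)) * (∏ j ∈ Ioc i p, (m j:ℚ)) := by
        rw [← hid]
        exact le_trans hTlow hTle
      have hup : (∏ j ∈ Ico 1 i, (M j:ℚ)) * (∏ j ∈ Ioc i p, (m j:ℚ))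
          ≤ (∏ j ∈ Ico 1 i, (M j:ℚ)) * (∏ j ∈ Ioc i p, (M j:ℚ)) :=
        mul_le_mul_of_nonneg_left hPmPM (le_of_lt hPL)
      have hall : (∏ j ∈ Ico 1 i, (M j:ℚ)) * (∏ j ∈ Ioc i p, (m j:ℚ))
          = (∏ j ∈ Ico 1 i, (M j:ℚ)) * (∏ j ∈ Ioc i p, (M j:ℚ)) := by
        rw [mul_comm (((B i).sum fun _ v => (v : ℚ)))] at heqi
        linarith [hchain1, hup]
      have hPmeq : (∏ j ∈ Ioc i p, (m j:ℚ)) = ∏ j ∈ Ioc i p, (M j:ℚ) :=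
        mul_left_cancel₀ (ne_of_gt hPL) hall
      constructor
      · intro l hl1 hl2
        by_contra hne
        have hlt : (m l : ℚ) < M l := by
          have := hmM l (by omega) hl2
          have : m l < M l := lt_of_le_of_ne this hne
          exact_mod_cast this
        have : (∏ j ∈ Ioc i p, (m j:ℚ)) < ∏ j ∈ Ioc i p, (M j:ℚ) := by
          apply Finset.prod_lt_prod
          · intro l' hl'
            simp only [Finset.mem_Ioc] at hl'
            have := hmpos l' (by omega) hl'.2
            have : (1:ℚ) ≤ m l' := by exact_mod_cast this
            linarith
          · intro l' hl'
            simp only [Finset.mem_Ioc] at hl'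
            exact_mod_cast hmM l' (by omega) hl'.2
          · exact ⟨l, Finset.mem_Ioc.mpr ⟨hl1, hl2⟩, hlt⟩
        linarith [hPmeq]
      · -- T_i equality
        have h1 : ((B i).sum fun j v => (sqpQ m M p i).eval (j:ℚ) * (v:ℚ))
            ≤ ((∏ l ∈ Ico 1 i, ((m i:ℚ) - (M l:ℚ))) * (∏ l ∈ Ioc i p, ((m l:ℚ) - (M i:ℚ)))) *
              ((B i).sum fun _ v => (v : ℚ)) := by
          rw [mul_comm (((B i).sum fun _ v => (v : ℚ)))] at heqi
          calc ((B i).sum fun j v => (sqpQ m M p i).eval (j:ℚ) * (v:ℚ))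
              ≤ (∏ j ∈ Ico 1 i, (M j:ℚ)) * (∏ j ∈ Ioc i p, (m j:ℚ)) := by rw [← hid]; exact hTle
            _ = (∏ j ∈ Ico 1 i, (M j:ℚ)) * (∏ j ∈ Ioc i p, (M j:ℚ)) := hall
            _ = _ := heqi.symm
        exact le_antisymm h1 hTlow
    -- conclude purity
    intro i0 hi0 hi0p
    rcases Nat.lt_or_ge i0 2 with h2 | h2
    swap
    · exact (main (i0-1) (by omega) (by omega)).1 i0 (by omega) hi0p
    · have hi01 : i0 = 1 := by omega
      subst hi01
      rcases Nat.eq_or_lt_of_le hp with hp1 | hp2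
      · -- p = 1 : the total Betti number is 1, so the support is a singleton
        have h := heq 1 le_rfl (by omega)
        rw [← hp1] at h
        simp only [Finset.Ico_self, Finset.prod_empty, Finset.Ioc_self, mul_one] at h
        -- h : (B 1).sum (fun _ v => v) = 1
        by_contra hne
        have hmlt : m 1 < M 1 := lt_of_le_of_ne (hmM 1 le_rfl hp) hne
        have hm1mem : m 1 ∈ (B 1).support := Finsupp.mem_support_iff.mpr (hm 1 le_rfl hp).1
        have hM1mem : M 1 ∈ (B 1).support := Finsupp.mem_support_iff.mpr (hM 1 le_rfl hp).1
        have hge : (2:ℚ) ≤ (B 1).sum fun _ v => (v:ℚ) := by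
          rw [Finsupp.sum]
          have hsub : {m 1, M 1} ⊆ (B 1).support := by
            intro x hx
            simp only [Finset.mem_insert, Finset.mem_singleton] at hx
            rcases hx with rfl | rfl
            · exact hm1mem
            · exact hM1mem
          have hs1 : ∑ j ∈ ({m 1, M 1} : Finset ℤ), (B 1 j : ℚ) ≤
              ∑ j ∈ (B 1).support, (B 1 j : ℚ) := by
            apply Finset.sum_le_sum_of_subset_of_nonneg hsub
            intro j _ _
            positivity
          rw [Finset.sum_pair (by exact_mod_cast ne_of_lt hmlt)] at hs1
          have hv1 : (1:ℚ) ≤ (B 1 (m 1) : ℚ) := by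
            have := (hm 1 le_rfl hp).1
            exact_mod_cast Nat.one_le_iff_ne_zero.mpr this
          have hv2 : (1:ℚ) ≤ (B 1 (M 1) : ℚ) := by
            have := (hM 1 le_rfl hp).1
            exact_mod_cast Nat.one_le_iff_ne_zero.mpr this
          linarith
        rw [h] at hge
        norm_num at hge
      · -- p ≥ 2 : use the equality T_1 = D * β_1
        have hTeq := (main 1 le_rfl hp).2
        -- rewrite as a sum of nonneg terms being zero
        have hzero : ∑ j ∈ (B 1).support,
            (((sqpQ m M p 1).eval (j:ℚ) -
              ((∏ l ∈ Ico 1 1, ((m 1:ℚ) - (M l:ℚ))) * (∏ l ∈ Ioc 1 p, ((m l:ℚ) - (M 1:ℚ))))) *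
              (B 1 j : ℚ)) = 0 := by
          have := hTeq
          rw [finsupp_sum_eq, finsupp_sum_eq] at this
          rw [Finset.sum_congr rfl (fun j _ => by ring :
            ∀ j ∈ (B 1).support, ((sqpQ m M p 1).eval (j:ℚ) -
              ((∏ l ∈ Ico 1 1, ((m 1:ℚ) - (M l:ℚ))) * (∏ l ∈ Ioc 1 p, ((m l:ℚ) - (M 1:ℚ))))) *
              (B 1 j : ℚ) = (sqpQ m M p 1).eval (j:ℚ) * (B 1 j:ℚ) -
              ((∏ l ∈ Ico 1 1, ((m 1:ℚ) - (M l:ℚ))) * (∏ l ∈ Ioc 1 p, ((m l:ℚ) - (M 1:ℚ)))) *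
              (B 1 j : ℚ)), Finset.sum_sub_distrib, ← Finset.mul_sum]
          linarith [this]
        have hnonneg : ∀ j ∈ (B 1).support,
            0 ≤ ((sqpQ m M p 1).eval (j:ℚ) -
              ((∏ l ∈ Ico 1 1, ((m 1:ℚ) - (M l:ℚ))) * (∏ l ∈ Ioc 1 p, ((m l:ℚ) - (M 1:ℚ))))) *
              (B 1 j : ℚ) := by
          intro j hj
          apply mul_nonneg
          · -- eval j ≥ D, reuse hlow logic inline
            obtain ⟨hjl, hju⟩ := hsuppmem 1 le_rfl hp j hj
            have hjlq : (m 1 : ℚ) ≤ (j:ℚ) := by exact_mod_cast hjl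
            have hjuq : (j : ℚ) ≤ (M 1:ℚ) := by exact_mod_cast hju
            rw [sub_nonneg, sqpQ_eval]
            simp only [Finset.Ico_self, Finset.prod_empty, one_mul]
            apply Finset.prod_le_prod
            · intro l hl
              simp only [Finset.mem_Ioc] at hl
              have := hchain 1 l le_rfl hl.1 hl.2
              have : (M 1 : ℚ) < m l := by exact_mod_cast this
              linarith
            · intro l hl
              linarith
          · positivity
        have hall0 := (Finset.sum_eq_zero_iff_of_nonneg hnonneg).mp hzero
        have hm1mem : m 1 ∈ (B 1).support := Finsupp.mem_support_iff.mpr (hm 1 le_rfl hp).1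
        have h0 := hall0 (m 1) hm1mem
        have hv1 : (B 1 (m 1) : ℚ) ≠ 0 := by
          exact_mod_cast (hm 1 le_rfl hp).1
        have hev : (sqpQ m M p 1).eval ((m 1 : ℤ):ℚ) =
            (∏ l ∈ Ico 1 1, ((m 1:ℚ) - (M l:ℚ))) * (∏ l ∈ Ioc 1 p, ((m l:ℚ) - (M 1:ℚ))) := by
          rcases mul_eq_zero.mp h0 with h | h
          · linarith [sub_eq_zero.mp (by linarith [h] : (sqpQ m M p 1).eval ((m 1:ℤ):ℚ) -
              ((∏ l ∈ Ico 1 1, ((m 1:ℚ) - (M l:ℚ))) * (∏ l ∈ Ioc 1 p, ((m l:ℚ) - (M 1:ℚ)))) = 0)]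
          · exact absurd h hv1
        rw [sqpQ_eval] at hev
        simp only [Finset.Ico_self, Finset.prod_empty, one_mul] at hev
        -- hev : ∏ (m l - m 1) = ∏ (m l - M 1)
        by_contra hne
        have hlt : (m 1 : ℚ) < M 1 := by
          have := lt_of_le_of_ne (hmM 1 le_rfl hp) hne
          exact_mod_cast this
        have hstrict : (∏ l ∈ Ioc 1 p, ((m l:ℚ) - (M 1:ℚ))) <
            ∏ l ∈ Ioc 1 p, ((m l:ℚ) - ((m 1:ℤ):ℚ)) := by
          apply Finset.prod_lt_prod
          · intro l hl
            simp only [Finset.mem_Ioc] at hl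
            have := hchain 1 l le_rfl hl.1 hl.2
            have : (M 1 : ℚ) < m l := by exact_mod_cast this
            linarith
          · intro l hl
            linarith
          · exact ⟨2, Finset.mem_Ioc.mpr ⟨by omega, hp2⟩, by
              have := hchain 1 2 le_rfl (by omega) hp2
              have : (M 1 : ℚ) < m 2 := by exact_mod_cast this
              linarith⟩
        linarith [hev, hstrict]
  · -- reverse direction
    intro hpure i hi hip
    have hid := sqp_identity p hp B m M hPS0 hPS i hi hip
    have hsuppj : ∀ i', 1 ≤ i' → i' ≤ p → ∀ j ∈ (B i').support, j = m i' := by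
      intro i' h1 h2 j hj
      obtain ⟨hjl, hju⟩ := hsuppmem i' h1 h2 j hj
      have := hpure i' h1 h2
      omega
    have hTform : ∀ i', 1 ≤ i' → i' ≤ p →
        ((B i').sum fun j v => (sqpQ m M p i).eval (j:ℚ) * (v:ℚ))
        = (sqpQ m M p i).eval ((m i' : ℤ):ℚ) * ((B i').sum fun _ v => (v:ℚ)) := by
      intro i' h1 h2
      rw [finsupp_sum_eq, finsupp_sum_eq, Finset.mul_sum]
      apply Finset.sum_congr rfl
      intro j hj
      rw [hsuppj i' h1 h2 j hj]
    have hTzero : ∀ i' ∈ Finset.Icc 1 p, i' ≠ i →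
        (-1:ℚ)^(i+i') * ((B i').sum fun j v => (sqpQ m M p i).eval (j:ℚ) * (v:ℚ)) = 0 := by
      intro i' hi' hne
      simp only [Finset.mem_Icc] at hi'
      rw [hTform i' hi'.1 hi'.2]
      have hev : (sqpQ m M p i).eval ((m i' : ℤ):ℚ) = 0 := by
        rw [sqpQ_eval]
        rcases lt_or_gt_of_ne hne with hlt | hgt
        · apply mul_eq_zero_of_left
          apply Finset.prod_eq_zero (Finset.mem_Ico.mpr ⟨hi'.1, hlt⟩)
          rw [hpure i' hi'.1 hi'.2]
          ring
        · apply mul_eq_zero_of_right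
          apply Finset.prod_eq_zero (Finset.mem_Ioc.mpr ⟨hgt, hi'.2⟩)
          ring
      rw [hev, zero_mul, mul_zero]
    rw [Finset.sum_eq_single_of_mem i (Finset.mem_Icc.mpr ⟨hi, hip⟩) hTzero] at hid
    rw [hTform i hi hip] at hid
    have hsgn : (-1:ℚ)^(i+i) = 1 := by rw [← two_mul, pow_mul]; norm_num
    rw [hsgn, one_mul] at hid
    have hev : (sqpQ m M p i).eval ((m i : ℤ):ℚ)
        = (∏ l ∈ Ico 1 i, ((m i:ℚ) - (M l:ℚ))) * (∏ l ∈ Ioc i p, ((m l:ℚ) - (M i:ℚ))) := by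
      rw [sqpQ_eval]
      congr 1
      apply Finset.prod_congr rfl
      intro l _
      rw [hpure i hi hip]
    rw [hev] at hid
    have hPmeq : (∏ j ∈ Ioc i p, (m j:ℚ)) = ∏ j ∈ Ioc i p, (M j:ℚ) := by
      apply Finset.prod_congr rfl
      intro l hl
      simp only [Finset.mem_Ioc] at hl
      rw [hpure l (by omega) hl.2]
    rw [hPmeq] at hid
    rw [Finset.prod_div_distrib, Finset.prod_div_distrib]
    have hD1 := hD1pos i hi hip
    have hD2 := hD2pos i hi hip
    field_simp
    linarith [hid]
end

section
/- The equality β_i = (∏_{1≤j<i} m_j/(M_i − m_j)) · (∏_{i<j≤p} m_j/(M_j − m_i)) holds in ℚ for every i with 1 ≤ i ≤ p if and only if m_i = M_i for every i (i.e. the resolution is pure). -/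
theorem key_identity (p : ℕ) (hp : 1 ≤ p) (B : ℕ → ℤ →₀ ℕ)
    (hPS0 : ∑ i ∈ Finset.Icc 1 p, (-1 : ℚ) ^ i *
      ((B i).sum fun _ v => (v : ℚ)) = -1)
    (hPS : ∀ k, 1 ≤ k → k ≤ p - 1 →
      ∑ i ∈ Finset.Icc 1 p, (-1 : ℚ) ^ i *
        ((B i).sum fun j v => (j : ℚ) ^ k * (v : ℚ)) = 0)
    (Q : Polynomial ℚ) (hQ : Q.natDegree < p) :
    ∑ i ∈ Finset.Icc 1 p, (-1 : ℚ) ^ i *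
      ((B i).sum fun j v => (v : ℚ) * Q.eval (j : ℚ)) = -Q.coeff 0 := by
  have heval : ∀ x : ℚ, Q.eval x = ∑ k ∈ Finset.range p, Q.coeff k * x ^ k :=
    fun x => Polynomial.eval_eq_sum_range' hQ x
  have hswap : ∀ i, (-1 : ℚ) ^ i * ((B i).sum fun j v => (v : ℚ) * Q.eval (j : ℚ)) =
      ∑ k ∈ Finset.range p, Q.coeff k *
        ((-1 : ℚ) ^ i * ((B i).sum fun j v => (j : ℚ) ^ k * (v : ℚ))) := by
    intro i
    simp only [Finsupp.sum, Finset.mul_sum]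
    rw [Finset.sum_comm]
    refine Finset.sum_congr rfl fun j hj => ?_
    rw [heval, Finset.mul_sum, Finset.mul_sum]
    exact Finset.sum_congr rfl fun k _ => by ring
  rw [Finset.sum_congr rfl fun i _ => hswap i, Finset.sum_comm]
  rw [Finset.sum_congr rfl fun k _ => (Finset.mul_sum _ _ _).symm]
  rw [Finset.sum_eq_single_of_mem 0 (Finset.mem_range.mpr hp)]
  · simp only [pow_zero, one_mul]
    rw [hPS0]; ring
  · intro k hk hk0
    rw [hPS k (Nat.one_le_iff_ne_zero.mpr hk0)
      (by have := Finset.mem_range.mp hk; omega : k ≤ p - 1), mul_zero]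

theorem key_prod (p : ℕ) (hp : 1 ≤ p) (B : ℕ → ℤ →₀ ℕ)
    (hPS0 : ∑ i ∈ Finset.Icc 1 p, (-1 : ℚ) ^ i *
      ((B i).sum fun _ v => (v : ℚ)) = -1)
    (hPS : ∀ k, 1 ≤ k → k ≤ p - 1 →
      ∑ i ∈ Finset.Icc 1 p, (-1 : ℚ) ^ i *
        ((B i).sum fun j v => (j : ℚ) ^ k * (v : ℚ)) = 0)
    (s : Finset ℕ) (hs : s.card < p) (c : ℕ → ℚ) :
    ∑ i ∈ Finset.Icc 1 p, (-1 : ℚ) ^ i *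
      ((B i).sum fun j v => (v : ℚ) * ∏ l ∈ s, ((j : ℚ) - c l)) =
      -∏ l ∈ s, (0 - c l) := by
  have hdeg : (∏ l ∈ s, (Polynomial.X - Polynomial.C (c l))).natDegree = s.card := by
    rw [Polynomial.natDegree_prod_of_monic _ _
      (fun l _ => Polynomial.monic_X_sub_C (c l))]
    simp [Polynomial.natDegree_X_sub_C]
  have heval : ∀ x : ℚ, (∏ l ∈ s, (Polynomial.X - Polynomial.C (c l))).eval x
      = ∏ l ∈ s, (x - c l) := by
    intro x; rw [Polynomial.eval_prod]; simp
  have := key_identity p hp B hPS0 hPS (∏ l ∈ s, (Polynomial.X - Polynomial.C (c l)))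
    (by rw [hdeg]; exact hs)
  rw [Polynomial.coeff_zero_eq_eval_zero, heval 0] at this
  simpa only [heval] using this



/-- Strictly quasi-pure resolutions: the lower bound
`β_i = (∏_{1≤j<i} m_j/(M_i − m_j)) · (∏_{i<j≤p} m_j/(M_j − m_i))` is an
equality in `ℚ` for every `1 ≤ i ≤ p` if and only if `m_i = M_i` for every
`1 ≤ i ≤ p`, i.e. the resolution is pure. -/
theorem strictly_quasi_pure_lower_equality_iff_pure (p : ℕ) (hp : 1 ≤ p)
    (B : ℕ → ℤ →₀ ℕ)
    (hsupp : ∀ i, 1 ≤ i → i ≤ p → (B i).support.Nonempty)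
    (m M : ℕ → ℤ)
    (hm : ∀ i, 1 ≤ i → i ≤ p → IsLeast {j : ℤ | B i j ≠ 0} (m i))
    (hM : ∀ i, 1 ≤ i → i ≤ p → IsGreatest {j : ℤ | B i j ≠ 0} (M i))
    (hm1 : 1 ≤ m 1)
    (hPS0 : ∑ i ∈ Finset.Icc 1 p, (-1 : ℚ) ^ i *
      ((B i).sum fun _ v => (v : ℚ)) = -1)
    (hPS : ∀ k, 1 ≤ k → k ≤ p - 1 →
      ∑ i ∈ Finset.Icc 1 p, (-1 : ℚ) ^ i *
        ((B i).sum fun j v => (j : ℚ) ^ k * (v : ℚ)) = 0)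
    (hqp : ∀ i, 2 ≤ i → i ≤ p → M (i - 1) < m i) :
    (∀ i, 1 ≤ i → i ≤ p →
      ((B i).sum fun _ v => (v : ℚ)) =
        (∏ j ∈ Finset.Ico 1 i, (m j : ℚ) / ((M i : ℚ) - (m j : ℚ))) *
        (∏ j ∈ Finset.Ioc i p, (m j : ℚ) / ((M j : ℚ) - (m i : ℚ))))
    ↔ (∀ i, 1 ≤ i → i ≤ p → m i = M i) := by
  -- structural facts
  have hlb : ∀ i, 1 ≤ i → i ≤ p → ∀ j ∈ (B i).support, m i ≤ j :=
    fun i h1 h2 j hj => (hm i h1 h2).2 (Finsupp.mem_support_iff.mp hj)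
  have hub : ∀ i, 1 ≤ i → i ≤ p → ∀ j ∈ (B i).support, j ≤ M i :=
    fun i h1 h2 j hj => (hM i h1 h2).2 (Finsupp.mem_support_iff.mp hj)
  have hmemm : ∀ i, 1 ≤ i → i ≤ p → m i ∈ (B i).support :=
    fun i h1 h2 => Finsupp.mem_support_iff.mpr (hm i h1 h2).1
  have hmemM : ∀ i, 1 ≤ i → i ≤ p → M i ∈ (B i).support :=
    fun i h1 h2 => Finsupp.mem_support_iff.mpr (hM i h1 h2).1
  have hmM : ∀ i, 1 ≤ i → i ≤ p → m i ≤ M i :=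
    fun i h1 h2 => (hM i h1 h2).2 (hm i h1 h2).1
  have hMm : ∀ b, b ≤ p → ∀ a, 1 ≤ a → a < b → M a < m b := by
    intro b
    induction b with
    | zero => intro _ a _ h; omega
    | succ n ih =>
      intro hbp a ha hab
      have hq : M n < m (n + 1) := by
        have := hqp (n + 1) (by omega) hbp
        simpa using this
      rcases eq_or_lt_of_le (Nat.lt_succ_iff.mp hab) with h | h
      · subst h; exact hq
      · exact lt_of_le_of_lt (le_trans (le_of_lt (ih (by omega) a ha h))
          (hmM n (by omega) (by omega))) hq
  have hmlt : ∀ a b, 1 ≤ a → a < b → b ≤ p → m a < m b :=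
    fun a b ha hab hbp => lt_of_le_of_lt (hmM a ha (by omega)) (hMm b hbp a ha hab)
  have hm_pos : ∀ i, 1 ≤ i → i ≤ p → 1 ≤ m i := by
    intro i h1 h2
    rcases eq_or_lt_of_le h1 with h | h
    · subst h; exact hm1
    · exact le_trans hm1 (le_of_lt (hmlt 1 i le_rfl h h2))
  constructor
  · intro heq
    rcases eq_or_lt_of_le hp with hp1 | hp2
    · -- case p = 1
      intro i hi1 hip
      have hi : i = 1 := by omega
      subst hi
      have hone := heq 1 le_rfl (by omega)
      rw [show Finset.Ico 1 1 = (∅ : Finset ℕ) from Finset.Ico_self 1] at hone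
      rw [show Finset.Ioc 1 p = (∅ : Finset ℕ) from by rw [← hp1]; exact Finset.Ioc_self 1] at hone
      simp only [Finset.prod_empty, one_mul] at hone
      by_contra hne
      have hlt : m 1 < M 1 := lt_of_le_of_ne (hmM 1 le_rfl (by omega)) hne
      have hsub : ({m 1, M 1} : Finset ℤ) ⊆ (B 1).support := by
        intro x hx
        simp only [Finset.mem_insert, Finset.mem_singleton] at hx
        rcases hx with rfl | rfl
        · exact hmemm 1 le_rfl (by omega)
        · exact hmemM 1 le_rfl (by omega)
      have hsum : ∑ j ∈ ({m 1, M 1} : Finset ℤ), ((B 1) j : ℚ) ≤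
          ∑ j ∈ (B 1).support, ((B 1) j : ℚ) :=
        Finset.sum_le_sum_of_subset_of_nonneg hsub (fun _ _ _ => by positivity)
      rw [Finset.sum_pair (ne_of_lt hlt)] at hsum
      have h1 : (1 : ℚ) ≤ ((B 1) (m 1) : ℚ) := by
        have := (hm 1 le_rfl (by omega)).1
        exact_mod_cast Nat.one_le_iff_ne_zero.mpr this
      have h2 : (1 : ℚ) ≤ ((B 1) (M 1) : ℚ) := by
        have := (hM 1 le_rfl (by omega)).1
        exact_mod_cast Nat.one_le_iff_ne_zero.mpr this
      rw [Finsupp.sum] at hone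
      linarith
    · -- case 2 ≤ p
      obtain ⟨q, rfl⟩ : ∃ q, p = q + 1 := ⟨p - 1, by omega⟩
      have hq1 : 1 ≤ q := by omega
      have hkey : ∑ i ∈ Finset.Icc 1 (q+1), (-1:ℚ)^i *
          ((B i).sum fun j v => (v:ℚ) * ∏ l ∈ Finset.Ico 1 (q+1), ((j:ℚ) - (m l:ℚ)))
          = -∏ l ∈ Finset.Ico 1 (q+1), ((0:ℚ) - (m l:ℚ)) := by
        simpa using key_prod (q+1) (by omega) B hPS0 hPS (Finset.Ico 1 (q+1))
          (by rw [Nat.card_Ico]; omega) (fun l => (m l : ℚ))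
      set F : ℤ → ℚ := fun j => ∏ l ∈ Finset.Ico 1 (q+1), ((j:ℚ) - (m l:ℚ)) with hF
      set T : ℕ → ℚ := fun i => (B i).sum fun j v => (v:ℚ) * F j with hTdef
      set P : ℚ := ∏ l ∈ Finset.Ico 1 (q+1), (m l : ℚ) with hPdef
      have hnegprod : ∀ (t : Finset ℕ) (g : ℕ → ℚ),
          ∏ l ∈ t, -g l = (-1 : ℚ) ^ t.card * ∏ l ∈ t, g l := by
        intro t g
        rw [← Finset.prod_const, ← Finset.prod_mul_distrib]
        simp
      have hrhs : (∏ l ∈ Finset.Ico 1 (q+1), ((0:ℚ) - (m l:ℚ))) = (-1:ℚ)^q * P := by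
        calc ∏ l ∈ Finset.Ico 1 (q+1), ((0:ℚ) - (m l:ℚ))
            = ∏ l ∈ Finset.Ico 1 (q+1), -((m l : ℚ)) :=
              Finset.prod_congr rfl fun l _ => by ring
          _ = (-1:ℚ)^(Finset.Ico 1 (q+1)).card * P := hnegprod _ _
          _ = (-1:ℚ)^q * P := by rw [Nat.card_Ico]; norm_num
      rw [hrhs] at hkey
      have hId2 : ∑ i ∈ Finset.Icc 1 (q+1), (-1:ℚ)^(q+1+i) * T i = P := by
        have hodd : (-1:ℚ)^(q+1) * (-1:ℚ)^q = -1 := by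
          rw [← pow_add]
          exact Odd.neg_one_pow ⟨q, by ring⟩
        calc ∑ i ∈ Finset.Icc 1 (q+1), (-1:ℚ)^(q+1+i) * T i
            = (-1:ℚ)^(q+1) * ∑ i ∈ Finset.Icc 1 (q+1), (-1:ℚ)^i * T i := by
              rw [Finset.mul_sum]
              exact Finset.sum_congr rfl fun i _ => by rw [pow_add]; ring
          _ = (-1:ℚ)^(q+1) * (-((-1:ℚ)^q * P)) := by rw [hkey]
          _ = P := by rw [mul_neg, ← mul_assoc, hodd]; ring
      rw [Finset.sum_Icc_succ_top (by omega : 1 ≤ q + 1)] at hId2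
      have heven : (-1:ℚ)^(q+1+(q+1)) = 1 := Even.neg_one_pow ⟨q+1, by ring⟩
      rw [heven, one_mul] at hId2
      -- each earlier term is nonpositive
      have hterm : ∀ i, 1 ≤ i → i ≤ q → ∀ j ∈ (B i).support,
          (-1:ℚ)^(q+1+i) * (((B i) j : ℚ) * F j) ≤ 0 := by
        intro i hi1 hiq j hj
        have hU : Finset.Ico 1 (q+1) = Finset.Icc 1 i ∪ Finset.Icc (i+1) q := by
          ext l
          simp only [Finset.mem_Ico, Finset.mem_union, Finset.mem_Icc]
          omega
        have hD : Disjoint (Finset.Icc 1 i) (Finset.Icc (i+1) q) := by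
          rw [Finset.disjoint_left]
          intro a ha hb
          rw [Finset.mem_Icc] at ha hb
          omega
        have hjub : j ≤ M i := hub i hi1 (by omega) j hj
        have hjlb : m i ≤ j := hlb i hi1 (by omega) j hj
        have hA : (0:ℚ) ≤ ∏ l ∈ Finset.Icc 1 i, ((j:ℚ) - (m l:ℚ)) := by
          refine Finset.prod_nonneg fun l hl => ?_
          rw [Finset.mem_Icc] at hl
          have : m l ≤ j := by
            rcases eq_or_lt_of_le hl.2 with h | h
            · subst h; exact hjlb
            · exact le_trans (le_of_lt (hmlt l i hl.1 h (by omega))) hjlb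
          have : (m l : ℚ) ≤ (j : ℚ) := by exact_mod_cast this
          linarith
        have hBq : (0:ℚ) ≤ ∏ l ∈ Finset.Icc (i+1) q, ((m l:ℚ) - (j:ℚ)) := by
          refine Finset.prod_nonneg fun l hl => ?_
          rw [Finset.mem_Icc] at hl
          have : j < m l := lt_of_le_of_lt hjub (hMm l (by omega) i hi1 (by omega))
          have : (j : ℚ) < (m l : ℚ) := by exact_mod_cast this
          linarith
        have hFj : F j = (∏ l ∈ Finset.Icc 1 i, ((j:ℚ) - (m l:ℚ))) *
            ((-1:ℚ)^(q-i) * ∏ l ∈ Finset.Icc (i+1) q, ((m l:ℚ) - (j:ℚ))) := by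
          rw [hF]
          show ∏ l ∈ Finset.Ico 1 (q+1), ((j:ℚ) - (m l:ℚ)) = _
          rw [hU, Finset.prod_union hD]
          congr 1
          calc ∏ l ∈ Finset.Icc (i+1) q, ((j:ℚ) - (m l:ℚ))
              = ∏ l ∈ Finset.Icc (i+1) q, -(((m l:ℚ)) - (j:ℚ)) :=
                Finset.prod_congr rfl fun l _ => by ring
            _ = (-1:ℚ)^(Finset.Icc (i+1) q).card *
                ∏ l ∈ Finset.Icc (i+1) q, ((m l:ℚ) - (j:ℚ)) := hnegprod _ _
            _ = _ := by rw [Nat.card_Icc]; congr 2; omega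
        have hsignfact : (-1:ℚ)^(q+1+i) * (-1:ℚ)^(q-i) = -1 := by
          rw [← pow_add, show q+1+i+(q-i) = 2*q+1 by omega]
          exact Odd.neg_one_pow ⟨q, rfl⟩
        calc (-1:ℚ)^(q+1+i) * (((B i) j : ℚ) * F j)
            = ((-1:ℚ)^(q+1+i) * (-1:ℚ)^(q-i)) * (((B i) j : ℚ) *
              ((∏ l ∈ Finset.Icc 1 i, ((j:ℚ) - (m l:ℚ))) *
               ∏ l ∈ Finset.Icc (i+1) q, ((m l:ℚ) - (j:ℚ)))) := by rw [hFj]; ring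
          _ = -(((B i) j : ℚ) * ((∏ l ∈ Finset.Icc 1 i, ((j:ℚ) - (m l:ℚ))) *
               ∏ l ∈ Finset.Icc (i+1) q, ((m l:ℚ) - (j:ℚ)))) := by rw [hsignfact]; ring
          _ ≤ 0 := by
              have hv : (0:ℚ) ≤ ((B i) j : ℚ) := by positivity
              nlinarith [mul_nonneg hA hBq, mul_nonneg hv (mul_nonneg hA hBq)]
      have hTi_nonpos : ∀ i ∈ Finset.Icc 1 q, (-1:ℚ)^(q+1+i) * T i ≤ 0 := by
        intro i hi
        rw [Finset.mem_Icc] at hi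
        rw [hTdef]
        show (-1:ℚ)^(q+1+i) * ((B i).sum fun j v => (v:ℚ) * F j) ≤ 0
        rw [Finsupp.sum, Finset.mul_sum]
        exact Finset.sum_nonpos fun j hj => hterm i hi.1 hi.2 j hj
      have hS_nonpos : ∑ i ∈ Finset.Icc 1 q, (-1:ℚ)^(q+1+i) * T i ≤ 0 :=
        Finset.sum_nonpos hTi_nonpos
      -- upper bound for top term
      set β : ℚ := (B (q+1)).sum fun _ v => (v:ℚ) with hβdef
      set C : ℚ := ∏ l ∈ Finset.Ico 1 (q+1), ((M (q+1) : ℚ) - (m l:ℚ)) with hCdef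
      have hfac : ∀ l ∈ Finset.Ico 1 (q+1), ∀ j ∈ (B (q+1)).support,
          (0:ℚ) < (j:ℚ) - (m l:ℚ) ∧ (j:ℚ) - (m l:ℚ) ≤ (M (q+1):ℚ) - (m l:ℚ) := by
        intro l hl j hj
        rw [Finset.mem_Ico] at hl
        have h1 : m l < m (q+1) := hmlt l (q+1) hl.1 (by omega) le_rfl
        have h2 : m (q+1) ≤ j := hlb (q+1) (by omega) le_rfl j hj
        have h3 : j ≤ M (q+1) := hub (q+1) (by omega) le_rfl j hj
        constructor
        · have : m l < j := by omega
          have : (m l : ℚ) < (j : ℚ) := by exact_mod_cast this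
          linarith
        · have : (j : ℚ) ≤ (M (q+1) : ℚ) := by exact_mod_cast h3
          linarith
      have hFle : ∀ j ∈ (B (q+1)).support, F j ≤ C := by
        intro j hj
        rw [hF, hCdef]
        exact Finset.prod_le_prod (fun l hl => le_of_lt (hfac l hl j hj).1)
          (fun l hl => (hfac l hl j hj).2)
      have hT_le : T (q+1) ≤ C * β := by
        rw [hTdef, hβdef]
        show ((B (q+1)).sum fun j v => (v:ℚ) * F j) ≤ C * ((B (q+1)).sum fun _ v => (v:ℚ))
        rw [Finsupp.sum, Finsupp.sum, Finset.mul_sum]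
        exact Finset.sum_le_sum fun j hj => by
          have := hFle j hj
          have hv : (0:ℚ) ≤ ((B (q+1)) j : ℚ) := by positivity
          nlinarith
      have hCpos : 0 < C := by
        rw [hCdef]
        refine Finset.prod_pos fun l hl => ?_
        have := hfac l hl (m (q+1)) (hmemm (q+1) (by omega) le_rfl)
        linarith [this.1, this.2]
      have hβC : C * β = P := by
        have hb := heq (q+1) (by omega) le_rfl
        rw [Finset.Ioc_self, Finset.prod_empty, mul_one] at hb
        rw [hβdef, hb, hCdef, hPdef, ← Finset.prod_mul_distrib]
        refine Finset.prod_congr rfl fun l hl => ?_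
        have := (hfac l hl (m (q+1)) (hmemm (q+1) (by omega) le_rfl)).1
        have hne : (M (q+1):ℚ) - (m l:ℚ) ≠ 0 := by
          have h1 : m l < m (q+1) := by
            rw [Finset.mem_Ico] at hl
            exact hmlt l (q+1) hl.1 (by omega) le_rfl
          have h2 : m (q+1) ≤ M (q+1) := hmM (q+1) (by omega) le_rfl
          have : (m l:ℚ) < (M (q+1):ℚ) := by exact_mod_cast lt_of_lt_of_le h1 h2
          linarith
        field_simp
      have hT_eq : T (q+1) = P := le_antisymm (by linarith [hT_le, hβC]) (by linarith [hId2, hS_nonpos])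
      have hS_zero : ∑ i ∈ Finset.Icc 1 q, (-1:ℚ)^(q+1+i) * T i = 0 := by linarith
      -- conclusion
      intro i hi1 hip
      rcases eq_or_lt_of_le hip with hitop | hilt
      · -- i = q+1 : use equality T (q+1) = C * β
        subst hitop
        by_contra hne
        have hlt : m (q+1) < M (q+1) := lt_of_le_of_ne (hmM (q+1) (by omega) le_rfl) hne
        have hzero2 : ∑ j ∈ (B (q+1)).support, ((B (q+1)) j : ℚ) * (C - F j) = 0 := by
          have e : ∑ j ∈ (B (q+1)).support, ((B (q+1)) j : ℚ) * (C - F j)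
              = C * β - T (q+1) := by
            rw [hβdef, hTdef]
            show _ = C * ((B (q+1)).sum fun _ v => (v:ℚ)) - ((B (q+1)).sum fun j v => (v:ℚ) * F j)
            rw [Finsupp.sum, Finsupp.sum, Finset.mul_sum, ← Finset.sum_sub_distrib]
            exact Finset.sum_congr rfl fun j hj => by ring
          rw [e, hβC, hT_eq]; ring
        have hallz := (Finset.sum_eq_zero_iff_of_nonneg (fun j hj => by
          have hv : (0:ℚ) ≤ ((B (q+1)) j : ℚ) := by positivity
          have := hFle j hj
          nlinarith)).mp hzero2
        have hmm := hallz (m (q+1)) (hmemm (q+1) (by omega) le_rfl)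
        have hvne : ((B (q+1)) (m (q+1)) : ℚ) ≠ 0 := by
          exact_mod_cast (hm (q+1) (by omega) le_rfl).1
        have hCF : F (m (q+1)) = C := by
          rcases mul_eq_zero.mp hmm with h | h
          · exact absurd h hvne
          · linarith
        have hstrict : F (m (q+1)) < C := by
          rw [hF, hCdef]
          refine Finset.prod_lt_prod (fun l hl =>
              (hfac l hl (m (q+1)) (hmemm (q+1) (by omega) le_rfl)).1)
            (fun l hl => (hfac l hl (m (q+1)) (hmemm (q+1) (by omega) le_rfl)).2)
            ⟨1, Finset.mem_Ico.mpr ⟨le_rfl, by omega⟩, ?_⟩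
          have : (m (q+1) : ℚ) < (M (q+1) : ℚ) := by exact_mod_cast hlt
          linarith
        rw [hCF] at hstrict
        exact lt_irrefl C hstrict
      · -- i ≤ q : use vanishing of the i-th term
        have hiq : i ≤ q := by omega
        have hTi0 : T i = 0 := by
          have := (Finset.sum_eq_zero_iff_of_nonpos hTi_nonpos).mp hS_zero i
            (Finset.mem_Icc.mpr ⟨hi1, hiq⟩)
          rcases mul_eq_zero.mp this with h | h
          · exact absurd h (by positivity)
          · exact h
        have hsum0 : ∑ j ∈ (B i).support, (-1:ℚ)^(q+1+i) * (((B i) j : ℚ) * F j) = 0 := by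
          rw [← Finset.mul_sum]
          have : ((B i).sum fun j v => (v:ℚ) * F j) = 0 := hTi0
          rw [Finsupp.sum] at this
          rw [this, mul_zero]
        have hallz := (Finset.sum_eq_zero_iff_of_nonpos (fun j hj =>
          hterm i hi1 hiq j hj)).mp hsum0
        have hMi := hallz (M i) (hmemM i hi1 (by omega))
        have hvne : ((B i) (M i) : ℚ) ≠ 0 := by
          exact_mod_cast (hM i hi1 (by omega)).1
        have hFMi : F (M i) = 0 := by
          rcases mul_eq_zero.mp hMi with h | h
          · exact absurd h (by positivity)
          · rcases mul_eq_zero.mp h with h' | h'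
            · exact absurd h' hvne
            · exact h'
        rw [hF] at hFMi
        obtain ⟨l, hl, hl0⟩ := Finset.prod_eq_zero_iff.mp hFMi
        rw [Finset.mem_Ico] at hl
        have hMl : M i = m l := by
          have : (M i : ℚ) = (m l : ℚ) := by linarith [sub_eq_zero.mp hl0]
          exact_mod_cast this
        rcases lt_trichotomy l i with h | h | h
        · exfalso
          have h1 : m l < m i := hmlt l i hl.1 h (by omega)
          have h2 : m i ≤ M i := hmM i hi1 (by omega)
          omega
        · subst h
          have h2 : m l ≤ M l := hmM l hi1 (by omega)
          omega
        · exfalso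
          have h1 : M i < m l := hMm l (by omega) i hi1 h
          omega
  · -- pure implies equality
    intro hpure i0 hi01 hi0p
    set s : Finset ℕ := Finset.Icc 1 p \ {i0} with hs_def
    have hi0mem : i0 ∈ Finset.Icc 1 p := Finset.mem_Icc.mpr ⟨hi01, hi0p⟩
    have hscard : s.card < p := by
      rw [hs_def, Finset.card_sdiff_of_subset (Finset.singleton_subset_iff.mpr hi0mem)]
      simp [Nat.card_Icc]; omega
    have hkey := key_prod p hp B hPS0 hPS s hscard (fun l => (m l : ℚ))
    -- supports are singletons
    have hsing : ∀ i, 1 ≤ i → i ≤ p → ∀ j ∈ (B i).support, j = m i := by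
      intro i h1 h2 j hj
      have := hlb i h1 h2 j hj
      have h4 := hub i h1 h2 j hj
      have := hpure i h1 h2
      omega
    -- all terms except i0 vanish
    have hzero : ∀ i ∈ Finset.Icc 1 p, i ≠ i0 →
        (-1 : ℚ) ^ i * ((B i).sum fun j v => (v : ℚ) * ∏ l ∈ s, ((j : ℚ) - (m l : ℚ))) = 0 := by
      intro i hi hne
      rw [Finset.mem_Icc] at hi
      have : ((B i).sum fun j v => (v : ℚ) * ∏ l ∈ s, ((j : ℚ) - (m l : ℚ))) = 0 := by
        rw [Finsupp.sum]
        refine Finset.sum_eq_zero fun j hj => ?_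
        rw [hsing i hi.1 hi.2 j hj]
        rw [Finset.prod_eq_zero (show i ∈ s by
          rw [hs_def]; simp [Finset.mem_Icc, hi.1, hi.2, hne]) (by ring)]
        ring
      rw [this, mul_zero]
    rw [Finset.sum_eq_single_of_mem i0 hi0mem (fun i hi hne => hzero i hi hne)] at hkey
    -- compute the i0 term
    have hβ : ((B i0).sum fun j v => (v : ℚ) * ∏ l ∈ s, ((j : ℚ) - (m l : ℚ)))
        = (∏ l ∈ s, ((m i0 : ℚ) - (m l : ℚ))) * ((B i0).sum fun _ v => (v : ℚ)) := by
      rw [Finsupp.sum, Finsupp.sum, Finset.mul_sum]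
      refine Finset.sum_congr rfl fun j hj => ?_
      rw [hsing i0 hi01 hi0p j hj]; ring
    rw [hβ] at hkey
    -- split s into Ico and Ioc
    have hsplit : s = Finset.Ico 1 i0 ∪ Finset.Ioc i0 p := by
      rw [hs_def]; ext l
      simp only [Finset.mem_sdiff, Finset.mem_Icc, Finset.mem_singleton,
        Finset.mem_union, Finset.mem_Ico, Finset.mem_Ioc]
      omega
    have hdisj : Disjoint (Finset.Ico 1 i0) (Finset.Ioc i0 p) := by
      rw [Finset.disjoint_left]
      intro a ha hb
      rw [Finset.mem_Ico] at ha; rw [Finset.mem_Ioc] at hb; omega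
    have hprod : ∀ g : ℕ → ℚ, ∏ l ∈ s, g l =
        (∏ l ∈ Finset.Ico 1 i0, g l) * ∏ l ∈ Finset.Ioc i0 p, g l := by
      intro g; rw [hsplit, Finset.prod_union hdisj]
    set β := ((B i0).sum fun _ v => (v : ℚ)) with hβdef
    set A1 := ∏ l ∈ Finset.Ico 1 i0, ((m i0 : ℚ) - (m l : ℚ)) with hA1
    set A2 := ∏ l ∈ Finset.Ioc i0 p, ((m l : ℚ) - (m i0 : ℚ)) with hA2
    set P1 := ∏ l ∈ Finset.Ico 1 i0, (m l : ℚ) with hP1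
    set P2 := ∏ l ∈ Finset.Ioc i0 p, (m l : ℚ) with hP2
    have hnegprod : ∀ (t : Finset ℕ) (g : ℕ → ℚ),
        ∏ l ∈ t, -g l = (-1 : ℚ) ^ t.card * ∏ l ∈ t, g l := by
      intro t g
      rw [← Finset.prod_const, ← Finset.prod_mul_distrib]
      simp
    have e1 : (∏ l ∈ Finset.Ioc i0 p, ((m i0 : ℚ) - (m l : ℚ)))
        = (-1 : ℚ) ^ (p - i0) * A2 := by
      calc ∏ l ∈ Finset.Ioc i0 p, ((m i0 : ℚ) - (m l : ℚ))
          = ∏ l ∈ Finset.Ioc i0 p, -(((m l : ℚ)) - (m i0 : ℚ)) :=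
            Finset.prod_congr rfl fun l _ => by ring
        _ = (-1 : ℚ) ^ (Finset.Ioc i0 p).card * A2 := hnegprod _ _
        _ = (-1 : ℚ) ^ (p - i0) * A2 := by rw [Nat.card_Ioc]
    have e2 : (∏ l ∈ Finset.Ico 1 i0, ((0 : ℚ) - (m l : ℚ)))
        = (-1 : ℚ) ^ (i0 - 1) * P1 := by
      calc ∏ l ∈ Finset.Ico 1 i0, ((0 : ℚ) - (m l : ℚ))
          = ∏ l ∈ Finset.Ico 1 i0, -((m l : ℚ)) :=
            Finset.prod_congr rfl fun l _ => by ring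
        _ = (-1 : ℚ) ^ (Finset.Ico 1 i0).card * P1 := hnegprod _ _
        _ = (-1 : ℚ) ^ (i0 - 1) * P1 := by rw [Nat.card_Ico]
    have e3 : (∏ l ∈ Finset.Ioc i0 p, ((0 : ℚ) - (m l : ℚ)))
        = (-1 : ℚ) ^ (p - i0) * P2 := by
      calc ∏ l ∈ Finset.Ioc i0 p, ((0 : ℚ) - (m l : ℚ))
          = ∏ l ∈ Finset.Ioc i0 p, -((m l : ℚ)) :=
            Finset.prod_congr rfl fun l _ => by ring
        _ = (-1 : ℚ) ^ (Finset.Ioc i0 p).card * P2 := hnegprod _ _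
        _ = (-1 : ℚ) ^ (p - i0) * P2 := by rw [Nat.card_Ioc]
    rw [hprod, hprod, e1, e2, e3] at hkey
    -- positivity of denominators
    have hA1pos : 0 < A1 := by
      rw [hA1]
      refine Finset.prod_pos fun l hl => ?_
      rw [Finset.mem_Ico] at hl
      have : m l < m i0 := hmlt l i0 hl.1 hl.2 hi0p
      have : (m l : ℚ) < (m i0 : ℚ) := by exact_mod_cast this
      linarith
    have hA2pos : 0 < A2 := by
      rw [hA2]
      refine Finset.prod_pos fun l hl => ?_
      rw [Finset.mem_Ioc] at hl
      have : m i0 < m l := hmlt i0 l hi01 hl.1 hl.2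
      have : (m i0 : ℚ) < (m l : ℚ) := by exact_mod_cast this
      linarith
    -- sign bookkeeping
    have hu : (-1 : ℚ) ^ i0 = -(-1 : ℚ) ^ (i0 - 1) := by
      conv_lhs => rw [show i0 = (i0 - 1) + 1 by omega]
      rw [pow_succ]; ring
    rw [hu] at hkey
    set u := (-1 : ℚ) ^ (i0 - 1) with hudef
    set w := (-1 : ℚ) ^ (p - i0) with hwdef
    have hune : u ≠ 0 := by rw [hudef]; positivity
    have hwne : w ≠ 0 := by rw [hwdef]; positivity
    have hmain : β * (A1 * A2) = P1 * P2 := by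
      have h3 : u * (w * (β * (A1 * A2))) = u * (w * (P1 * P2)) := by
        linear_combination -hkey
      exact mul_left_cancel₀ hwne (mul_left_cancel₀ hune h3)
    have hMi0 : (M i0 : ℚ) = (m i0 : ℚ) := by
      rw [hpure i0 hi01 hi0p]
    rw [hMi0]
    have hIocEq : ∏ l ∈ Finset.Ioc i0 p, (m l : ℚ) / ((M l : ℚ) - (m i0 : ℚ))
        = ∏ l ∈ Finset.Ioc i0 p, (m l : ℚ) / ((m l : ℚ) - (m i0 : ℚ)) := by
      refine Finset.prod_congr rfl fun l hl => ?_
      rw [Finset.mem_Ioc] at hl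
      rw [hpure l (by omega) hl.2]
    rw [hIocEq, Finset.prod_div_distrib, Finset.prod_div_distrib]
    rw [← hP1, ← hP2, ← hA1, ← hA2]
    have hA1ne : A1 ≠ 0 := ne_of_gt hA1pos
    have hA2ne : A2 ≠ 0 := ne_of_gt hA2pos
    field_simp
    linear_combination hmain
end

section
/- For each i with 1 ≤ i ≤ p one has β_i(D) ≤ (1/((i−1)!·(p−i)!)) · ∏_{1≤j≤p, j≠i} M_j(D) as real numbers. -/
lemma diagram_gap (d : ℕ → ℕ) (p : ℕ)
    (h : ∀ j k, 1 ≤ j → j < k → k ≤ p → d j < d k) :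
    ∀ j k, 1 ≤ j → j ≤ k → k ≤ p → d j + (k - j) ≤ d k := by
  intro j k hj hjk hkp
  induction k, hjk using Nat.le_induction with
  | base => simp
  | succ k hk ih =>
    have h1 := ih (by omega)
    have h2 : d k < d (k + 1) := h k (k + 1) (by omega) (by omega) hkp
    omega

lemma prod_Ico_sub_eq_factorial (i : ℕ) (hi : 1 ≤ i) :
    ∏ k ∈ Finset.Ico 1 i, (i - k) = Nat.factorial (i - 1) := by
  rw [← Finset.prod_Ico_id_eq_factorial (i - 1)]
  have hii : i - 1 + 1 = i := by omega
  rw [hii]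
  apply Finset.prod_nbij' (fun k => i - k) (fun j => i - j)
  · intro k hk; simp only [Finset.mem_Ico] at hk ⊢; omega
  · intro j hj; simp only [Finset.mem_Ico] at hj ⊢; omega
  · intro k hk; simp only [Finset.mem_Ico] at hk; omega
  · intro j hj; simp only [Finset.mem_Ico] at hj; omega
  · intro k _; rfl

lemma prod_Ioc_sub_eq_factorial (i p : ℕ) (hip : i ≤ p) :
    ∏ k ∈ Finset.Ioc i p, (k - i) = Nat.factorial (p - i) := by
  rw [← Finset.prod_Ico_id_eq_factorial (p - i)]
  apply Finset.prod_nbij' (fun k => k - i) (fun j => j + i)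
  · intro k hk; simp only [Finset.mem_Ioc] at hk; simp only [Finset.mem_Ico]; omega
  · intro j hj; simp only [Finset.mem_Ico] at hj; simp only [Finset.mem_Ioc]; omega
  · intro k hk; simp only [Finset.mem_Ioc] at hk; omega
  · intro j hj; simp only [Finset.mem_Ico] at hj; omega
  · intro k _; rfl

/-- Convex combinations of pure diagrams, upper bound: if
`D = Σ_{d∈Λ} λ_d π(d)` is a convex combination of pure diagrams
`π(d)_i = (∏_{1≤k<i} d_k/(d_i − d_k)) · (∏_{i<k≤p} d_k/(d_k − d_i))` with
strictly increasing positive sequences `d` between `d̲` and `d̄`, then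
`β_i(D) ≤ (1/((i−1)!·(p−i)!)) · ∏_{1≤j≤p, j≠i} M_j(D)`. -/
theorem diagram_upper_bound (p : ℕ) (hp : 1 ≤ p)
    (dl du : ℕ → ℕ)
    (hdl_pos : ∀ k, 1 ≤ k → k ≤ p → 1 ≤ dl k)
    (hdl_mono : ∀ j k, 1 ≤ j → j < k → k ≤ p → dl j < dl k)
    (hdu_mono : ∀ j k, 1 ≤ j → j < k → k ≤ p → du j < du k)
    (hdldu : ∀ k, 1 ≤ k → k ≤ p → dl k ≤ du k)
    (Λ : Finset (ℕ → ℕ))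
    (hΛ : ∀ d ∈ Λ, (∀ j k, 1 ≤ j → j < k → k ≤ p → d j < d k) ∧
      (∀ k, 1 ≤ k → k ≤ p → dl k ≤ d k ∧ d k ≤ du k))
    (lam : (ℕ → ℕ) → ℝ)
    (hlam_nonneg : ∀ d ∈ Λ, 0 ≤ lam d)
    (hlam_sum : ∑ d ∈ Λ, lam d = 1)
    (M : ℕ → ℕ)
    (hM : ∀ i, 1 ≤ i → i ≤ p →
      IsGreatest {x : ℕ | ∃ d ∈ Λ, lam d ≠ 0 ∧ d i = x} (M i))
    (i : ℕ) (hi1 : 1 ≤ i) (hip : i ≤ p) :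
    (∑ d ∈ Λ, lam d *
        ((∏ k ∈ Finset.Ico 1 i, (d k : ℝ) / ((d i : ℝ) - (d k : ℝ))) *
         (∏ k ∈ Finset.Ioc i p, (d k : ℝ) / ((d k : ℝ) - (d i : ℝ)))))
    ≤ (1 / ((Nat.factorial (i - 1) : ℝ) * (Nat.factorial (p - i) : ℝ))) *
        ∏ j ∈ (Finset.Icc 1 p).erase i, (M j : ℝ) := by
  set C : ℝ := (1 / ((Nat.factorial (i - 1) : ℝ) * (Nat.factorial (p - i) : ℝ))) *
        ∏ j ∈ (Finset.Icc 1 p).erase i, (M j : ℝ) with hC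
  -- the set splits
  have hsplit : (Finset.Icc 1 p).erase i = Finset.Ico 1 i ∪ Finset.Ioc i p := by
    ext k
    simp only [Finset.mem_erase, Finset.mem_Icc, Finset.mem_union, Finset.mem_Ico,
      Finset.mem_Ioc]
    omega
  have hdisj : Disjoint (Finset.Ico 1 i) (Finset.Ioc i p) := by
    rw [Finset.disjoint_left]
    intro k hk hk'
    simp only [Finset.mem_Ico] at hk
    simp only [Finset.mem_Ioc] at hk'
    omega
  -- the key: C equals the product of the bounding terms
  have hCeq : C = (∏ k ∈ Finset.Ico 1 i, (M k : ℝ) / ((i : ℝ) - (k : ℝ))) *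
      (∏ k ∈ Finset.Ioc i p, (M k : ℝ) / ((k : ℝ) - (i : ℝ))) := by
    have e1 : ∀ k ∈ Finset.Ico 1 i, (M k : ℝ) / ((i : ℝ) - (k : ℝ))
        = (M k : ℝ) / ((i - k : ℕ) : ℝ) := by
      intro k hk
      simp only [Finset.mem_Ico] at hk
      rw [Nat.cast_sub hk.2.le]
    have e2 : ∀ k ∈ Finset.Ioc i p, (M k : ℝ) / ((k : ℝ) - (i : ℝ))
        = (M k : ℝ) / ((k - i : ℕ) : ℝ) := by
      intro k hk
      simp only [Finset.mem_Ioc] at hk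
      rw [Nat.cast_sub hk.1.le]
    have g1 : ∏ k ∈ Finset.Ico 1 i, ((i - k : ℕ) : ℝ)
        = (Nat.factorial (i - 1) : ℝ) := by
      rw [← Nat.cast_prod, prod_Ico_sub_eq_factorial i hi1]
    have g2 : ∏ k ∈ Finset.Ioc i p, ((k - i : ℕ) : ℝ)
        = (Nat.factorial (p - i) : ℝ) := by
      rw [← Nat.cast_prod, prod_Ioc_sub_eq_factorial i p hip]
    rw [Finset.prod_congr rfl e1, Finset.prod_congr rfl e2,
      Finset.prod_div_distrib, Finset.prod_div_distrib, g1, g2,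
      hC, hsplit, Finset.prod_union hdisj]
    have f1 : (0 : ℝ) < (Nat.factorial (i - 1) : ℝ) := by
      exact_mod_cast Nat.factorial_pos _
    have f2 : (0 : ℝ) < (Nat.factorial (p - i) : ℝ) := by
      exact_mod_cast Nat.factorial_pos _
    field_simp
  have hCnonneg : 0 ≤ C := by
    rw [hC]
    positivity
  -- pointwise bound
  have key : ∀ d ∈ Λ, lam d ≠ 0 →
      (∏ k ∈ Finset.Ico 1 i, (d k : ℝ) / ((d i : ℝ) - (d k : ℝ))) *
      (∏ k ∈ Finset.Ioc i p, (d k : ℝ) / ((d k : ℝ) - (d i : ℝ))) ≤ C := by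
    intro d hd hlne
    obtain ⟨hmono, hbd⟩ := hΛ d hd
    have hgap := diagram_gap d p hmono
    have hdM : ∀ k, 1 ≤ k → k ≤ p → d k ≤ M k := by
      intro k h1 h2
      exact (hM k h1 h2).2 ⟨d, hd, hlne, rfl⟩
    have b1 : (∏ k ∈ Finset.Ico 1 i, (d k : ℝ) / ((d i : ℝ) - (d k : ℝ)))
        ≤ ∏ k ∈ Finset.Ico 1 i, (M k : ℝ) / ((i : ℝ) - (k : ℝ)) := by
      apply Finset.prod_le_prod
      · intro k hk
        simp only [Finset.mem_Ico] at hk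
        have hlt : d k < d i := hmono k i hk.1 hk.2 hip
        have : (0 : ℝ) < (d i : ℝ) - (d k : ℝ) := by
          have := (Nat.cast_lt (α := ℝ)).2 hlt; linarith
        positivity
      · intro k hk
        simp only [Finset.mem_Ico] at hk
        have hg : d k + (i - k) ≤ d i := hgap k i hk.1 hk.2.le hip
        have hg' : (d k : ℝ) + ((i : ℝ) - (k : ℝ)) ≤ (d i : ℝ) := by
          have := (Nat.cast_le (α := ℝ)).2 hg
          rw [Nat.cast_add, Nat.cast_sub hk.2.le] at this
          linarith
        have hpos : (0 : ℝ) < (i : ℝ) - (k : ℝ) := by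
          have := (Nat.cast_lt (α := ℝ)).2 hk.2; linarith
        exact div_le_div₀ (Nat.cast_nonneg _)
          ((Nat.cast_le (α := ℝ)).2 (hdM k hk.1 (by omega))) hpos (by linarith)
    have b2 : (∏ k ∈ Finset.Ioc i p, (d k : ℝ) / ((d k : ℝ) - (d i : ℝ)))
        ≤ ∏ k ∈ Finset.Ioc i p, (M k : ℝ) / ((k : ℝ) - (i : ℝ)) := by
      apply Finset.prod_le_prod
      · intro k hk
        simp only [Finset.mem_Ioc] at hk
        have hlt : d i < d k := hmono i k hi1 hk.1 hk.2
        have : (0 : ℝ) < (d k : ℝ) - (d i : ℝ) := by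
          have := (Nat.cast_lt (α := ℝ)).2 hlt; linarith
        positivity
      · intro k hk
        simp only [Finset.mem_Ioc] at hk
        have hg : d i + (k - i) ≤ d k := hgap i k hi1 hk.1.le hk.2
        have hg' : (d i : ℝ) + ((k : ℝ) - (i : ℝ)) ≤ (d k : ℝ) := by
          have := (Nat.cast_le (α := ℝ)).2 hg
          rw [Nat.cast_add, Nat.cast_sub hk.1.le] at this
          linarith
        have hpos : (0 : ℝ) < (k : ℝ) - (i : ℝ) := by
          have := (Nat.cast_lt (α := ℝ)).2 hk.1; linarith
        exact div_le_div₀ (Nat.cast_nonneg _)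
          ((Nat.cast_le (α := ℝ)).2 (hdM k (by omega) hk.2)) hpos (by linarith)
    rw [hCeq]
    apply mul_le_mul b1 b2
    · apply Finset.prod_nonneg
      intro k hk
      simp only [Finset.mem_Ioc] at hk
      have hlt : d i < d k := hmono i k hi1 hk.1 hk.2
      have : (0 : ℝ) < (d k : ℝ) - (d i : ℝ) := by
        have := (Nat.cast_lt (α := ℝ)).2 hlt; linarith
      positivity
    · apply Finset.prod_nonneg
      intro k hk
      simp only [Finset.mem_Ico] at hk
      have hpos : (0 : ℝ) < (i : ℝ) - (k : ℝ) := by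
        have := (Nat.cast_lt (α := ℝ)).2 hk.2; linarith
      positivity
  calc (∑ d ∈ Λ, lam d *
        ((∏ k ∈ Finset.Ico 1 i, (d k : ℝ) / ((d i : ℝ) - (d k : ℝ))) *
         (∏ k ∈ Finset.Ioc i p, (d k : ℝ) / ((d k : ℝ) - (d i : ℝ)))))
      ≤ ∑ d ∈ Λ, lam d * C := by
        apply Finset.sum_le_sum
        intro d hd
        by_cases h0 : lam d = 0
        · simp [h0]
        · exact mul_le_mul_of_nonneg_left (key d hd h0) (hlam_nonneg d hd)
    _ = C := by rw [← Finset.sum_mul, hlam_sum, one_mul]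
end

section
/- For each i with 1 ≤ i ≤ p one has β_i(D) ≥ (∏_{1≤j<i} m_j(D)/(M_i(D) − m_j(D))) · (∏_{i<j≤p} m_j(D)/(M_j(D) − m_i(D))) as real numbers; note all denominators are positive since M_i(D) ≥ m_i(D) and m_1(D) < m_2(D) < ⋯ < m_p(D). -/
/-- Convex combinations of pure diagrams, lower bound:
`β_i(D) ≥ (∏_{1≤j<i} m_j(D)/(M_i(D) − m_j(D))) ·
          (∏_{i<j≤p} m_j(D)/(M_j(D) − m_i(D)))`. -/
theorem diagram_lower_bound (p : ℕ) (hp : 1 ≤ p)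
    (dl du : ℕ → ℕ)
    (hdl_pos : ∀ k, 1 ≤ k → k ≤ p → 1 ≤ dl k)
    (hdl_mono : ∀ j k, 1 ≤ j → j < k → k ≤ p → dl j < dl k)
    (hdu_mono : ∀ j k, 1 ≤ j → j < k → k ≤ p → du j < du k)
    (hdldu : ∀ k, 1 ≤ k → k ≤ p → dl k ≤ du k)
    (Λ : Finset (ℕ → ℕ))
    (hΛ : ∀ d ∈ Λ, (∀ j k, 1 ≤ j → j < k → k ≤ p → d j < d k) ∧
      (∀ k, 1 ≤ k → k ≤ p → dl k ≤ d k ∧ d k ≤ du k))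
    (lam : (ℕ → ℕ) → ℝ)
    (hlam_nonneg : ∀ d ∈ Λ, 0 ≤ lam d)
    (hlam_sum : ∑ d ∈ Λ, lam d = 1)
    (m M : ℕ → ℕ)
    (hm : ∀ i, 1 ≤ i → i ≤ p →
      IsLeast {x : ℕ | ∃ d ∈ Λ, lam d ≠ 0 ∧ d i = x} (m i))
    (hM : ∀ i, 1 ≤ i → i ≤ p →
      IsGreatest {x : ℕ | ∃ d ∈ Λ, lam d ≠ 0 ∧ d i = x} (M i))
    (i : ℕ) (hi1 : 1 ≤ i) (hip : i ≤ p) :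
    (∑ d ∈ Λ, lam d *
        ((∏ k ∈ Finset.Ico 1 i, (d k : ℝ) / ((d i : ℝ) - (d k : ℝ))) *
         (∏ k ∈ Finset.Ioc i p, (d k : ℝ) / ((d k : ℝ) - (d i : ℝ)))))
    ≥ (∏ j ∈ Finset.Ico 1 i, (m j : ℝ) / ((M i : ℝ) - (m j : ℝ))) *
      (∏ j ∈ Finset.Ioc i p, (m j : ℝ) / ((M j : ℝ) - (m i : ℝ))) := by
  -- a witness in the support
  obtain ⟨d₀, hd₀Λ, hd₀lam, hd₀i⟩ := (hm i hi1 hip).1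
  -- helper facts
  have hmem : ∀ d ∈ Λ, lam d ≠ 0 → ∀ j, 1 ≤ j → j ≤ p → m j ≤ d j ∧ d j ≤ M j := by
    intro d hd hlam j hj1 hjp
    exact ⟨(hm j hj1 hjp).2 ⟨d, hd, hlam, rfl⟩, (hM j hj1 hjp).2 ⟨d, hd, hlam, rfl⟩⟩
  have hd₀mono := (hΛ d₀ hd₀Λ).1
  -- m j < M i for 1 ≤ j < i
  have hlt1 : ∀ j, 1 ≤ j → j < i → m j < M i := by
    intro j hj1 hji
    have h1 : m j ≤ d₀ j := (hmem d₀ hd₀Λ hd₀lam j hj1 (le_trans (le_of_lt hji) hip)).1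
    have h2 : d₀ j < d₀ i := hd₀mono j i hj1 hji hip
    have h3 : d₀ i ≤ M i := (hmem d₀ hd₀Λ hd₀lam i hi1 hip).2
    omega
  -- m i < M j for i < j ≤ p
  have hlt2 : ∀ j, i < j → j ≤ p → m i < M j := by
    intro j hij hjp
    have h1 : m i ≤ d₀ i := (hmem d₀ hd₀Λ hd₀lam i hi1 hip).1
    have h2 : d₀ i < d₀ j := hd₀mono i j hi1 hij hjp
    have h3 : d₀ j ≤ M j := (hmem d₀ hd₀Λ hd₀lam j (le_trans hi1 (le_of_lt hij)) hjp).2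
    omega
  set B := (∏ j ∈ Finset.Ico 1 i, (m j : ℝ) / ((M i : ℝ) - (m j : ℝ))) *
      (∏ j ∈ Finset.Ioc i p, (m j : ℝ) / ((M j : ℝ) - (m i : ℝ))) with hB
  have hB1nonneg : 0 ≤ ∏ j ∈ Finset.Ico 1 i, (m j : ℝ) / ((M i : ℝ) - (m j : ℝ)) := by
    apply Finset.prod_nonneg
    intro j hj
    rw [Finset.mem_Ico] at hj
    have := hlt1 j hj.1 hj.2
    have h1 : (0:ℝ) ≤ (m j : ℝ) := Nat.cast_nonneg _
    have h2 : (0:ℝ) ≤ (M i : ℝ) - (m j : ℝ) := by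
      have : (m j : ℝ) < (M i : ℝ) := by exact_mod_cast this
      linarith
    exact div_nonneg h1 h2
  have hB2nonneg : 0 ≤ ∏ j ∈ Finset.Ioc i p, (m j : ℝ) / ((M j : ℝ) - (m i : ℝ)) := by
    apply Finset.prod_nonneg
    intro j hj
    rw [Finset.mem_Ioc] at hj
    have := hlt2 j hj.1 hj.2
    have h1 : (0:ℝ) ≤ (m j : ℝ) := Nat.cast_nonneg _
    have h2 : (0:ℝ) ≤ (M j : ℝ) - (m i : ℝ) := by
      have : (m i : ℝ) < (M j : ℝ) := by exact_mod_cast this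
      linarith
    exact div_nonneg h1 h2
  have hB0 : 0 ≤ B := mul_nonneg hB1nonneg hB2nonneg
  -- termwise bound for each d in the support
  have hBle : ∀ d ∈ Λ, lam d ≠ 0 →
      B ≤ (∏ k ∈ Finset.Ico 1 i, (d k : ℝ) / ((d i : ℝ) - (d k : ℝ))) *
          (∏ k ∈ Finset.Ioc i p, (d k : ℝ) / ((d k : ℝ) - (d i : ℝ))) := by
    intro d hd hlam
    have hdm := (hΛ d hd).1
    have hP1 : ∏ j ∈ Finset.Ico 1 i, (m j : ℝ) / ((M i : ℝ) - (m j : ℝ)) ≤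
        ∏ k ∈ Finset.Ico 1 i, (d k : ℝ) / ((d i : ℝ) - (d k : ℝ)) := by
      apply Finset.prod_le_prod
      · intro j hj
        rw [Finset.mem_Ico] at hj
        have := hlt1 j hj.1 hj.2
        have h2 : (m j : ℝ) < (M i : ℝ) := by exact_mod_cast this
        exact div_nonneg (Nat.cast_nonneg _) (by linarith)
      · intro j hj
        rw [Finset.mem_Ico] at hj
        have hjp : j ≤ p := le_trans (le_of_lt hj.2) hip
        have h1 : m j ≤ d j := (hmem d hd hlam j hj.1 hjp).1
        have h2 : d i ≤ M i := (hmem d hd hlam i hi1 hip).2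
        have h3 : d j < d i := hdm j i hj.1 hj.2 hip
        have h1' : (m j : ℝ) ≤ (d j : ℝ) := by exact_mod_cast h1
        have h2' : (d i : ℝ) ≤ (M i : ℝ) := by exact_mod_cast h2
        have h3' : (d j : ℝ) < (d i : ℝ) := by exact_mod_cast h3
        apply div_le_div₀ (Nat.cast_nonneg _) h1' (by linarith)
        linarith
    have hP2 : ∏ j ∈ Finset.Ioc i p, (m j : ℝ) / ((M j : ℝ) - (m i : ℝ)) ≤
        ∏ k ∈ Finset.Ioc i p, (d k : ℝ) / ((d k : ℝ) - (d i : ℝ)) := by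
      apply Finset.prod_le_prod
      · intro j hj
        rw [Finset.mem_Ioc] at hj
        have := hlt2 j hj.1 hj.2
        have h2 : (m i : ℝ) < (M j : ℝ) := by exact_mod_cast this
        exact div_nonneg (Nat.cast_nonneg _) (by linarith)
      · intro j hj
        rw [Finset.mem_Ioc] at hj
        have hj1 : 1 ≤ j := le_trans hi1 (le_of_lt hj.1)
        have h1 : m j ≤ d j := (hmem d hd hlam j hj1 hj.2).1
        have h2 : d j ≤ M j := (hmem d hd hlam j hj1 hj.2).2
        have h3 : m i ≤ d i := (hmem d hd hlam i hi1 hip).1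
        have h4 : d i < d j := hdm i j hi1 hj.1 hj.2
        have h1' : (m j : ℝ) ≤ (d j : ℝ) := by exact_mod_cast h1
        have h2' : (d j : ℝ) ≤ (M j : ℝ) := by exact_mod_cast h2
        have h3' : (m i : ℝ) ≤ (d i : ℝ) := by exact_mod_cast h3
        have h4' : (d i : ℝ) < (d j : ℝ) := by exact_mod_cast h4
        have hmi0 : (0:ℝ) ≤ (m i : ℝ) := Nat.cast_nonneg _
        have hmj0 : (0:ℝ) ≤ (m j : ℝ) := Nat.cast_nonneg _
        rw [div_le_div_iff₀ (by linarith) (by linarith)]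
        nlinarith [mul_nonneg hmi0 (sub_nonneg.2 h2'), mul_nonneg hmj0 (sub_nonneg.2 h3'),
          mul_nonneg (sub_nonneg.2 h2') (sub_nonneg.2 h1')]
    have hP1d : 0 ≤ ∏ k ∈ Finset.Ico 1 i, (d k : ℝ) / ((d i : ℝ) - (d k : ℝ)) :=
      le_trans hB1nonneg hP1
    exact mul_le_mul hP1 hP2 hB2nonneg hP1d
  calc B = ∑ d ∈ Λ, lam d * B := by
          rw [← Finset.sum_mul, hlam_sum, one_mul]
    _ ≤ ∑ d ∈ Λ, lam d *
        ((∏ k ∈ Finset.Ico 1 i, (d k : ℝ) / ((d i : ℝ) - (d k : ℝ))) *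
         (∏ k ∈ Finset.Ioc i p, (d k : ℝ) / ((d k : ℝ) - (d i : ℝ)))) := by
        apply Finset.sum_le_sum
        intro d hd
        rcases eq_or_ne (lam d) 0 with h | h
        · simp [h]
        · exact mul_le_mul_of_nonneg_left (hBle d hd h) (hlam_nonneg d hd)
end

section
/- For all integers n, M, i with M ≥ 1 and 1 ≤ i ≤ n one has the binomial identity Σ_{j=i}^{n} binom(j−1, i−1)·binom(j+M−2, M−1) = binom(i+M−2, i−1)·binom(n+M−1, n−i). -/
lemma key_step (a b n : ℕ) (h : a ≤ n) :
    n.choose a * (n + b).choose b = (a + b).choose a * (n + b).choose (n - a) := by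
  have h1 : (n + b).choose n * n.choose a = (n + b).choose a * (n + b - a).choose (n - a) :=
    Nat.choose_mul h
  have h2 : (n + b).choose (a + b) * (a + b).choose a
      = (n + b).choose a * (n + b - a).choose (a + b - a) :=
    Nat.choose_mul (Nat.le_add_right a b)
  have e1 : (n + b).choose n = (n + b).choose b := Nat.choose_symm_add
  have e2 : (n + b).choose (a + b) = (n + b).choose (n - a) :=
    Nat.choose_symm_of_eq_add (by omega)
  have e3 : (n + b - a).choose (n - a) = (n + b - a).choose (a + b - a) :=
    Nat.choose_symm_of_eq_add (by omega)
  calc n.choose a * (n + b).choose b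
      = (n + b).choose a * (n + b - a).choose (n - a) := by rw [← e1, ← h1]; ring
    _ = (n + b).choose a * (n + b - a).choose (a + b - a) := by rw [e3]
    _ = (a + b).choose a * (n + b).choose (n - a) := by rw [← e2, ← h2]; ring

lemma binom_aux (a b n : ℕ) (h : a + 1 ≤ n) :
    ∑ j ∈ Finset.Icc (a + 1) n, (j - 1).choose a * (j + b - 1).choose b
      = (a + b).choose a * (n + b).choose (n - (a + 1)) := by
  induction n, h using Nat.le_induction with
  | base =>
      rw [Finset.Icc_self, Finset.sum_singleton,
        show a + 1 - 1 = a by omega, show a + 1 + b - 1 = a + b by omega,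
        show a + 1 - (a + 1) = 0 by omega, Nat.choose_self, Nat.choose_zero_right,
        Nat.one_mul, Nat.mul_one, Nat.choose_symm_add]
  | succ n hn ih =>
      rw [Finset.sum_Icc_succ_top (by omega), ih]
      have hterm : (n + 1 - 1).choose a * (n + 1 + b - 1).choose b
          = n.choose a * (n + b).choose b := by
        congr 1 <;> congr 1 <;> omega
      rw [hterm, key_step a b n (by omega)]
      have hp : (n + 1 + b).choose (n + 1 - (a + 1))
          = (n + b).choose (n - (a + 1)) + (n + b).choose (n - a) := by
        have : n + 1 + b = (n + b) + 1 := by omega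
        rw [this, show n + 1 - (a + 1) = (n - (a+1)) + 1 by omega,
          Nat.choose_succ_succ', show n - (a + 1) + 1 = n - a by omega]
      rw [hp, Nat.mul_add]

/-- Binomial identity: for `M ≥ 1` and `1 ≤ i ≤ n`,
`Σ_{j=i}^{n} binom(j−1, i−1)·binom(j+M−2, M−1)
  = binom(i+M−2, i−1)·binom(n+M−1, n−i)`. -/
theorem binomial_identity (n M i : ℕ) (hM : 1 ≤ M) (hi1 : 1 ≤ i) (hin : i ≤ n) :
    ∑ j ∈ Finset.Icc i n, (j - 1).choose (i - 1) * (j + M - 2).choose (M - 1)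
      = (i + M - 2).choose (i - 1) * (n + M - 1).choose (n - i) := by
  obtain ⟨a, rfl⟩ : ∃ a, i = a + 1 := ⟨i - 1, by omega⟩
  obtain ⟨b, rfl⟩ : ∃ b, M = b + 1 := ⟨M - 1, by omega⟩
  have := binom_aux a b n hin
  rw [show a + 1 - 1 = a by omega, show a + 1 + (b + 1) - 2 = a + b by omega,
    show n + (b + 1) - 1 = n + b by omega, show b + 1 - 1 = b by omega]
  rw [← this]
  apply Finset.sum_congr rfl
  intro j hj
  simp only [Finset.mem_Icc] at hj
  rw [show j + (b + 1) - 2 = j + b - 1 by omega]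
end

section
/- Let g : ℕ → ℕ satisfy g(j) ≤ binom(j+M−2, M−1) for all j with i ≤ j ≤ n. Then Σ_{j=i}^{n} binom(j−1, i−1)·g(j) ≤ binom(i+M−2, i−1)·binom(n+M−1, n−i). -/
lemma ek_step (a m k : ℕ) :
    (a + k + 1).choose a * (a + m + k + 1).choose m
      = (a + m).choose a * (a + m + k + 1).choose (k + 1) := by
  set N := a + m + k + 1 with hN
  have h1 : N.choose (a + m) * (a + m).choose m = N.choose m * (N - m).choose a := by
    have := Nat.choose_mul (n := N) (k := a + m) (s := m) (by omega)
    simpa [Nat.add_sub_cancel] using this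
  have h2 : N - m = a + k + 1 := by omega
  have h3 : N.choose (a + m) = N.choose (k + 1) := by
    rw [← Nat.choose_symm (by omega : a + m ≤ N)]
    congr 1
    omega
  have h4 : (a + m).choose a = (a + m).choose m := by
    rw [← Nat.choose_symm (by omega : a ≤ a + m)]
    congr 1
    omega
  rw [h2] at h1
  rw [h4, ← h3]
  rw [Nat.mul_comm (N.choose (a+m))] at h1
  rw [Nat.mul_comm, ← h1, Nat.mul_comm]

lemma ek_identity (a m : ℕ) : ∀ k : ℕ,
    ∑ t ∈ Finset.range (k + 1), (a + t).choose a * (a + m + t).choose m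
      = (a + m).choose a * (a + m + k + 1).choose k := by
  intro k
  induction k with
  | zero =>
      simp
      rw [← Nat.choose_symm (by omega : a ≤ a + m)]
      congr 1
      omega
  | succ k ih =>
      rw [Finset.sum_range_succ, ih]
      have pascal : (a + m + (k + 1) + 1).choose (k + 1)
          = (a + m + k + 1).choose k + (a + m + k + 1).choose (k + 1) := by
        have : a + m + (k + 1) + 1 = (a + m + k + 1) + 1 := by omega
        rw [this, Nat.choose_succ_succ]
      rw [pascal, Nat.mul_add]
      congr 1
      have : a + m + (k + 1) = a + m + k + 1 := by omega
      rw [this, ← ek_step]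
      ring_nf

/-- Eliahou–Kervaire type bound: if `g(j) ≤ binom(j+M−2, M−1)` for all
`i ≤ j ≤ n`, then
`Σ_{j=i}^{n} binom(j−1, i−1)·g(j) ≤ binom(i+M−2, i−1)·binom(n+M−1, n−i)`. -/
theorem eliahou_kervaire_sum_bound (n M i : ℕ) (hn : 1 ≤ n) (hM : 1 ≤ M)
    (hi1 : 1 ≤ i) (hin : i ≤ n) (g : ℕ → ℕ)
    (hg : ∀ j, i ≤ j → j ≤ n → g j ≤ (j + M - 2).choose (M - 1)) :
    ∑ j ∈ Finset.Icc i n, (j - 1).choose (i - 1) * g j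
      ≤ (i + M - 2).choose (i - 1) * (n + M - 1).choose (n - i) := by
  obtain ⟨a, rfl⟩ : ∃ a, i = a + 1 := ⟨i - 1, by omega⟩
  obtain ⟨m, rfl⟩ : ∃ m, M = m + 1 := ⟨M - 1, by omega⟩
  obtain ⟨k, rfl⟩ : ∃ k, n = a + 1 + k := ⟨n - (a + 1), by omega⟩
  calc ∑ j ∈ Finset.Icc (a + 1) (a + 1 + k), (j - 1).choose (a + 1 - 1) * g j
      ≤ ∑ j ∈ Finset.Icc (a + 1) (a + 1 + k),
          (j - 1).choose a * (j + m - 1).choose m := by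
        apply Finset.sum_le_sum
        intro j hj
        simp only [Finset.mem_Icc] at hj
        have h1 : a + 1 - 1 = a := by omega
        have h2 : j + (m + 1) - 2 = j + m - 1 := by omega
        have h3 : m + 1 - 1 = m := by omega
        rw [h1]
        have := hg j hj.1 hj.2
        rw [h2, h3] at this
        exact Nat.mul_le_mul_left _ this
    _ = ∑ t ∈ Finset.range (k + 1), (a + t).choose a * (a + m + t).choose m := by
        rw [show Finset.Icc (a + 1) (a + 1 + k) = Finset.Ico (a + 1) (a + 1 + k + 1) by
          rw [Finset.Ico_add_one_right_eq_Icc], Finset.sum_Ico_eq_sum_range]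
        apply Finset.sum_congr (by congr 1; omega)
        intro t ht
        congr 2 <;> omega
    _ = (a + m).choose a * (a + m + k + 1).choose k := ek_identity a m k
    _ = (a + 1 + (m + 1) - 2).choose (a + 1 - 1)
          * (a + 1 + k + (m + 1) - 1).choose (a + 1 + k - (a + 1)) := by
        congr 2 <;> omega
end

section
/- Suppose rational numbers b_1, …, b_p satisfy Σ_{i=1}^{p} (−1)^i b_i = −1 and Σ_{i=1}^{p} (−1)^i d_i^k b_i = 0 for each k = 1, …, p−1. Then for every i with 1 ≤ i ≤ p one has b_i = (∏_{1≤j<i} d_j/(d_i − d_j)) · (∏_{i<j≤p} d_j/(d_j − d_i)). (This is the Herzog–Kühl formula for the total Betti numbers of a Cohen–Macaulay module with pure resolution of type (d_1,…,d_p).) -/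
open Finset Polynomial

/-- Herzog–Kühl formula: if rational numbers `b_1, …, b_p` satisfy
`Σ_{i=1}^{p} (−1)^i b_i = −1` and `Σ_{i=1}^{p} (−1)^i d_i^k b_i = 0` for
`k = 1, …, p−1`, where `d_1 < … < d_p` are strictly increasing positive
integers, then `b_i = (∏_{1≤j<i} d_j/(d_i − d_j)) · (∏_{i<j≤p} d_j/(d_j − d_i))`
for every `1 ≤ i ≤ p`. -/
theorem herzog_kuhl_formula (p : ℕ) (hp : 1 ≤ p) (d : ℕ → ℕ)
    (hd_pos : ∀ j, 1 ≤ j → j ≤ p → 1 ≤ d j)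
    (hd_mono : ∀ j k, 1 ≤ j → j < k → k ≤ p → d j < d k)
    (b : ℕ → ℚ)
    (hb0 : ∑ i ∈ Finset.Icc 1 p, (-1 : ℚ) ^ i * b i = -1)
    (hbk : ∀ k, 1 ≤ k → k ≤ p - 1 →
      ∑ i ∈ Finset.Icc 1 p, (-1 : ℚ) ^ i * (d i : ℚ) ^ k * b i = 0)
    (i : ℕ) (hi1 : 1 ≤ i) (hip : i ≤ p) :
    b i = (∏ j ∈ Finset.Ico 1 i, (d j : ℚ) / ((d i : ℚ) - (d j : ℚ))) *
          (∏ j ∈ Finset.Ioc i p, (d j : ℚ) / ((d j : ℚ) - (d i : ℚ))) := by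
  have hinj : Set.InjOn (fun j => (d j : ℚ)) (Finset.Icc 1 p) := by
    intro a ha c hc hac
    simp only [Finset.coe_Icc, Set.mem_Icc] at ha hc
    simp only [Nat.cast_inj] at hac
    by_contra hne
    rcases lt_or_gt_of_ne hne with h | h
    · exact absurd hac (hd_mono a c ha.1 h hc.2).ne
    · exact absurd hac.symm (hd_mono c a hc.1 h ha.2).ne
  have hmem : i ∈ Finset.Icc 1 p := Finset.mem_Icc.mpr ⟨hi1, hip⟩
  set L := Lagrange.basis (Finset.Icc 1 p) (fun j => (d j : ℚ)) i with hLdef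
  have hdeg : L.natDegree < p := by
    rw [hLdef, Lagrange.natDegree_basis hinj hmem, Nat.card_Icc]
    omega
  -- key: the alternating sum against L equals -L.eval 0
  have hsum : ∑ j ∈ Finset.Icc 1 p, (-1 : ℚ) ^ j * L.eval ((d j : ℚ)) * b j = - L.eval 0 := by
    have heval : ∀ x : ℚ, L.eval x = ∑ k ∈ Finset.range p, L.coeff k * x ^ k := fun x =>
      Polynomial.eval_eq_sum_range' hdeg x
    calc ∑ j ∈ Finset.Icc 1 p, (-1 : ℚ) ^ j * L.eval ((d j : ℚ)) * b j
        = ∑ j ∈ Finset.Icc 1 p, ∑ k ∈ Finset.range p,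
            L.coeff k * ((-1 : ℚ) ^ j * (d j : ℚ) ^ k * b j) := by
          refine Finset.sum_congr rfl fun j _ => ?_
          rw [heval, Finset.mul_sum, Finset.sum_mul]
          exact Finset.sum_congr rfl fun k _ => by ring
      _ = ∑ k ∈ Finset.range p, L.coeff k *
            (∑ j ∈ Finset.Icc 1 p, (-1 : ℚ) ^ j * (d j : ℚ) ^ k * b j) := by
          rw [Finset.sum_comm]
          exact Finset.sum_congr rfl fun k _ => by rw [Finset.mul_sum]
      _ = - L.coeff 0 := by
          rw [Finset.sum_eq_single 0]
          · simp only [pow_zero, mul_one]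
            rw [hb0]; ring
          · intro k hk hk0
            rw [hbk k (Nat.one_le_iff_ne_zero.mpr hk0) (by
              have := Finset.mem_range.mp hk; omega), mul_zero]
          · intro h; exact absurd (Finset.mem_range.mpr (by omega)) h
      _ = - L.eval 0 := by rw [← Polynomial.coeff_zero_eq_eval_zero]
  -- only the i-th term survives on the left
  have hsum2 : ∑ j ∈ Finset.Icc 1 p, (-1 : ℚ) ^ j * L.eval ((d j : ℚ)) * b j
      = (-1 : ℚ) ^ i * b i := by
    rw [Finset.sum_eq_single i]
    · simp [hLdef, Lagrange.eval_basis_self hinj hmem]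
    · intro j hj hji
      simp only [hLdef, mul_eq_zero]
      exact Or.inl (Or.inr (Lagrange.eval_basis_of_ne (v := fun j => (d j : ℚ)) (Ne.symm hji) hj))
    · intro h; exact absurd hmem h
  have hkey : (-1 : ℚ) ^ i * b i = - L.eval 0 := hsum2 ▸ hsum
  -- compute L.eval 0
  have herase : (Finset.Icc 1 p).erase i = Finset.Ico 1 i ∪ Finset.Ioc i p := by
    ext j
    simp only [Finset.mem_erase, Finset.mem_Icc, Finset.mem_union, Finset.mem_Ico,
      Finset.mem_Ioc]
    omega
  have hdisj : Disjoint (Finset.Ico 1 i) (Finset.Ioc i p) := by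
    rw [Finset.disjoint_left]
    intro j hj hj'
    simp only [Finset.mem_Ico] at hj
    simp only [Finset.mem_Ioc] at hj'
    omega
  have heval0 : L.eval 0 = (-1 : ℚ) ^ (i - 1) *
      ((∏ j ∈ Finset.Ico 1 i, (d j : ℚ) / ((d i : ℚ) - (d j : ℚ))) *
       (∏ j ∈ Finset.Ioc i p, (d j : ℚ) / ((d j : ℚ) - (d i : ℚ)))) := by
    rw [hLdef, Lagrange.basis, Polynomial.eval_prod, herase,
      Finset.prod_union hdisj]
    have h1 : ∀ j ∈ Finset.Ico 1 i,
        Polynomial.eval 0 (Lagrange.basisDivisor ((d i : ℚ)) ((d j : ℚ)))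
          = (-1) * ((d j : ℚ) / ((d i : ℚ) - (d j : ℚ))) := by
      intro j _
      rw [Lagrange.basisDivisor]
      simp [div_eq_mul_inv]
      ring
    have h2 : ∀ j ∈ Finset.Ioc i p,
        Polynomial.eval 0 (Lagrange.basisDivisor ((d i : ℚ)) ((d j : ℚ)))
          = (d j : ℚ) / ((d j : ℚ) - (d i : ℚ)) := by
      intro j _
      rw [Lagrange.basisDivisor]
      simp [div_eq_mul_inv]
      rw [show ((d j : ℚ)) - (d i : ℚ) = -((d i : ℚ) - (d j : ℚ)) by ring, inv_neg]
      ring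
    rw [Finset.prod_congr rfl h1, Finset.prod_congr rfl h2, Finset.prod_mul_distrib,
      Finset.prod_const, Nat.card_Ico]
    ring
  rw [heval0] at hkey
  have hpow : ((-1:ℚ)^i) * ((-1:ℚ)^(i-1)) = -1 := by
    rw [← pow_add, show i + (i-1) = 2*(i-1)+1 by omega, pow_succ, pow_mul]
    norm_num
  calc b i = (-1:ℚ)^i * ((-1:ℚ)^i * b i) := by
        rw [← mul_assoc, ← pow_add, ← two_mul, pow_mul]; norm_num
    _ = (-1:ℚ)^i * ((-1:ℚ)^(i-1) *
          ((∏ j ∈ Finset.Ico 1 i, (d j : ℚ) / ((d i : ℚ) - (d j : ℚ))) *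
           (∏ j ∈ Finset.Ioc i p, (d j : ℚ) / ((d j : ℚ) - (d i : ℚ))))) * (-1) := by
        rw [hkey]; ring
    _ = _ := by rw [← mul_assoc, hpow]; ring
end
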